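/- arXiv:2503.22381 — 8 statements merged into one kernel-verified Lean document; each statement's English description precedes it below -/
import Mathlib

section
/- For every continuous non-increasing function W : [0,1) → (0,1) with lim_{r→1⁻} W(r) = 0 there exist functions f, g in the little Bloch space 𝓑₀ such that |f′(z)| + |g′(z)| ≥ W(|z|)/(1 − |z|) for all z ∈ 𝔻. -/
open Filter Set

set_option maxHeartbeats 1000000

namespace PLB

noncomputable def Wt (W : ℝ → ℝ) : ℕ → ℝ
  | 0 => W 0
  | m+1 => max (W (1 - (1/100)^(m+1))) (Wt W m / 10)

noncomputable def cc (W : ℝ → ℝ) (m : ℕ) : ℝ := 800 * Wt W m * 100 ^ m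

def nn (m : ℕ) : ℕ := if m = 0 then 0 else 100 ^ m

noncomputable def fterm (W : ℝ → ℝ) (ε k : ℕ) : ℂ → ℂ :=
  fun z => (cc W (2*k+ε) / (nn (2*k+ε) + 1) : ℂ) * z ^ (nn (2*k+ε) + 1)

noncomputable def dterm (W : ℝ → ℝ) (ε k : ℕ) : ℂ → ℂ :=
  fun z => (cc W (2*k+ε) : ℂ) * z ^ (nn (2*k+ε))

noncomputable def ff (W : ℝ → ℝ) (ε : ℕ) : ℂ → ℂ := fun z => ∑' k, fterm W ε k z

noncomputable def FF (W : ℝ → ℝ) (ε : ℕ) : ℂ → ℂ := fun z => ∑' k, dterm W ε k z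

variable {W : ℝ → ℝ}
  (hWmem : ∀ r ∈ Set.Ico (0:ℝ) 1, W r ∈ Set.Ioo (0:ℝ) 1)
  (hWdec : AntitoneOn W (Set.Ico 0 1))
  (hWlim : Filter.Tendsto W (nhdsWithin 1 (Set.Iio 1)) (nhds 0))

lemma rmem (m : ℕ) : (1 - (1/100:ℝ)^m) ∈ Set.Ico (0:ℝ) 1 := by
  constructor
  · have : (1/100:ℝ)^m ≤ 1 := by
      apply pow_le_one₀ <;> norm_num
    linarith
  · have : (0:ℝ) < (1/100:ℝ)^m := by positivity
    linarith

include hWmem in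
lemma Wt_pos (m : ℕ) : 0 < Wt W m := by
  induction m with
  | zero => exact (hWmem 0 (by norm_num)).1
  | succ m ih =>
    have := (hWmem _ (rmem (m+1))).1
    exact lt_max_of_lt_right (by linarith)

include hWmem in
lemma Wt_le_one (m : ℕ) : Wt W m ≤ 1 := by
  induction m with
  | zero => exact (hWmem 0 (by norm_num)).2.le
  | succ m ih =>
    have := (hWmem _ (rmem (m+1))).2.le
    exact max_le this (by linarith)

lemma W_le_Wt (m : ℕ) : W (1 - (1/100:ℝ)^m) ≤ Wt W m := by
  cases m with
  | zero => simp [Wt]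
  | succ m => exact le_max_left _ _

include hWmem hWdec in
lemma Wt_anti : ∀ m, Wt W (m+1) ≤ Wt W m := by
  intro m
  have h1 : W (1 - (1/100:ℝ)^(m+1)) ≤ W (1 - (1/100:ℝ)^m) := by
    apply hWdec (rmem m) (rmem (m+1))
    have : (1/100:ℝ)^(m+1) ≤ (1/100:ℝ)^m := by
      apply pow_le_pow_of_le_one <;> norm_num
    linarith
  have h2 := W_le_Wt (W := W) m
  have h3 := Wt_pos hWmem m
  exact max_le (h1.trans h2) (by linarith)

include hWmem hWdec in
lemma Wt_anti2 : ∀ {m m'}, m ≤ m' → Wt W m' ≤ Wt W m := by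
  intro m m' h
  induction h with
  | refl => exact le_refl _
  | step h ih => exact ((Wt_anti hWmem hWdec _).trans ih : _)

lemma Wt_ratio (m : ℕ) : Wt W m / 10 ≤ Wt W (m+1) := le_max_right _ _


include hWmem hWdec hWlim in
lemma Wt_small : ∀ ε > (0:ℝ), ∃ K, ∀ m, K ≤ m → Wt W m ≤ ε := by
  intro ε hε
  -- get K₁ such that W (1 - (1/100)^m) ≤ ε/2 for m ≥ K₁
  have h2 : ∀ᶠ r in nhdsWithin 1 (Set.Iio 1), W r < ε/2 := by
    have := hWlim (Metric.ball_mem_nhds (0:ℝ) (by positivity : (0:ℝ) < ε/2))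
    filter_upwards [this] with r hr
    have : |W r| < ε/2 := by simpa [Real.dist_eq] using hr
    exact (abs_lt.mp this).2
  rw [Filter.Eventually, Metric.mem_nhdsWithin_iff] at h2
  obtain ⟨δ, hδ, hδ2'⟩ := h2
  have hδ2 : ∀ r : ℝ, r ∈ Set.Iio (1:ℝ) → dist r 1 < δ → W r < ε/2 := by
    intro r h1 h2'
    exact hδ2' ⟨h2', h1⟩
  obtain ⟨K₁, hK₁⟩ : ∃ K₁ : ℕ, (1/100:ℝ)^K₁ < δ := exists_pow_lt_of_lt_one hδ (by norm_num)
  have key : ∀ m, K₁ ≤ m → W (1 - (1/100:ℝ)^m) < ε/2 := by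
    intro m hm
    apply hδ2
    · have h3 : (0:ℝ) < (1/100:ℝ)^m := by positivity
      simp only [Set.mem_Iio]; linarith
    · have : (1/100:ℝ)^m ≤ (1/100:ℝ)^K₁ := by
        apply pow_le_pow_of_le_one (by norm_num) (by norm_num) hm
      have h3 : (0:ℝ) < (1/100:ℝ)^m := by positivity
      rw [Real.dist_eq]
      rw [abs_lt]; constructor <;> nlinarith
  -- now: Wt (K₁ + j) ≤ max (ε/2) (Wt K₁ / 10^j)
  have step : ∀ j, Wt W (K₁ + j) ≤ max (ε/2) (Wt W K₁ / 10^j) := by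
    intro j
    induction j with
    | zero => simp
    | succ j ih =>
      have he : Wt W (K₁ + (j+1)) = max (W (1 - (1/100)^((K₁+j)+1))) (Wt W (K₁+j) / 10) := rfl
      rw [he]
      apply max_le
      · exact le_max_of_le_left (key (K₁+j+1) (by omega)).le
      · rcases le_max_iff.mp ih with h | h
        · apply le_max_of_le_left; nlinarith [hε]
        · apply le_max_of_le_right
          rw [pow_succ, ← div_div]
          linarith
  obtain ⟨j, hj⟩ : ∃ j : ℕ, Wt W K₁ / 10^j ≤ ε/2 := by
    obtain ⟨j, hj⟩ : ∃ j : ℕ, (Wt W K₁ / (ε/2)) < 10^j :=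
      pow_unbounded_of_one_lt _ (by norm_num)
    refine ⟨j, ?_⟩
    have h10 : (0:ℝ) < 10^j := by positivity
    rw [div_le_iff₀ h10]
    rw [div_lt_iff₀ (by positivity)] at hj
    nlinarith [Wt_pos hWmem K₁]
  refine ⟨K₁ + j, fun m hm => ?_⟩
  calc Wt W m ≤ Wt W (K₁ + j) := Wt_anti2 hWmem hWdec hm
    _ ≤ max (ε/2) (Wt W K₁ / 10^j) := step j
    _ ≤ ε := max_le (by linarith) (by linarith)

lemma pow_window_lower {N : ℕ} (hN : 2 ≤ N) (hev : Even N) {r : ℝ}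
    (hr : 1 - 1/(N:ℝ) ≤ r) (hr1 : r ≤ 1) : (1/4:ℝ) ≤ r ^ N := by
  have hmod := Nat.even_iff.mp hev
  obtain ⟨h, rfl⟩ : ∃ h, N = 2 * h := ⟨N/2, by omega⟩
  have hh : 1 ≤ h := by omega
  have hNR : (0:ℝ) < 2*h := by positivity
  have hNR' : (2:ℝ) ≤ 2*h := by exact_mod_cast hN
  have h0 : (0:ℝ) ≤ 1 - 1/(2*h:ℝ) := by
    have : 1/(2*h:ℝ) ≤ 1 := by
      rw [div_le_one hNR]; linarith
    linarith
  have hb : (1/2:ℝ) ≤ (1 - 1/(2*h:ℝ)) ^ h := by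
    have := one_add_mul_le_pow (a := -(1/(2*h:ℝ))) (by nlinarith [one_div_pos.mpr hNR]) h
    have he : 1 + (h:ℝ) * (-(1/(2*h:ℝ))) = 1/2 := by
      field_simp
      ring
    rw [he] at this
    rw [← sub_eq_add_neg] at this
    exact this
  have hr0 : (1 - 1/(2*(h:ℝ))) ^ (2*h) ≤ r ^ (2*h) := by
    apply pow_le_pow_left₀ h0
    exact_mod_cast hr
  refine le_trans ?_ hr0
  have : (1 - 1/(2*(h:ℝ))) ^ (2*h) = ((1 - 1/(2*(h:ℝ))) ^ h)^2 := by
    rw [← pow_mul, Nat.mul_comm]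
  rw [this]
  calc (1/4:ℝ) = (1/2)^2 := by norm_num
    _ ≤ _ := by
        apply pow_le_pow_left₀ (by norm_num) hb

lemma pow_window_upper {N : ℕ} (hN : 1 ≤ N) {r : ℝ}
    (hr0 : 0 ≤ r) (hr : r ≤ 1 - 1/(N:ℝ)) : r ^ N ≤ 1/2 := by
  have hNR : (1:ℝ) ≤ N := by exact_mod_cast hN
  have hNp : (0:ℝ) < N := by linarith
  have h1N : 0 < 1/(N:ℝ) := by positivity
  have h1N' : 1/(N:ℝ) ≤ 1 := by rw [div_le_one hNp]; linarith
  have hA : (2:ℝ) ≤ (1 + 1/(N:ℝ)) ^ N := by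
    have := one_add_mul_le_pow (a := 1/(N:ℝ)) (by linarith) N
    have he : 1 + (N:ℝ) * (1/(N:ℝ)) = 2 := by
      rw [mul_one_div, div_self hNp.ne']; norm_num
    rw [he] at this
    exact this
  have hB : (1 - 1/(N:ℝ))^N * (1 + 1/(N:ℝ))^N ≤ 1 := by
    rw [← mul_pow]
    apply pow_le_one₀ (by nlinarith) (by nlinarith)
  have hC : r ^ N ≤ (1 - 1/(N:ℝ))^N := pow_le_pow_left₀ hr0 hr N
  have hD : (0:ℝ) ≤ (1 - 1/(N:ℝ))^N := pow_nonneg (by linarith) N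
  nlinarith

lemma hundred_pow_ge (d : ℕ) (hd : 2 ≤ d) : 10 * d ≤ 100 ^ (d-1) := by
  induction d with
  | zero => omega
  | succ d ih =>
    rcases Nat.lt_or_ge d 2 with h | h
    · interval_cases d <;> simp_all
    · have := ih h
      have h2 : d + 1 - 1 = (d-1) + 1 := by omega
      rw [h2, pow_succ]
      nlinarith

-- key numeric: 100^d * (1/2)^(100^(d-1)) ≤ (1/10)^d for d ≥ 2
lemma tail_numeric (d : ℕ) (hd : 2 ≤ d) :
    (100:ℝ)^d * (1/2)^(100^(d-1)) ≤ (1/10:ℝ)^d := by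
  have h1 : ((1/2:ℝ))^(100^(d-1)) ≤ (1/2)^(10*d) := by
    apply pow_le_pow_of_le_one (by norm_num) (by norm_num) (hundred_pow_ge d hd)
  have h2 : (100:ℝ)^d * (1/2)^(10*d) ≤ (1/10:ℝ)^d := by
    rw [pow_mul, ← mul_pow]
    apply pow_le_pow_left₀ (by norm_num)
    norm_num
  calc (100:ℝ)^d * (1/2)^(100^(d-1)) ≤ (100:ℝ)^d * (1/2)^(10*d) := by
        apply mul_le_mul_of_nonneg_left h1 (by positivity)
    _ ≤ _ := h2


include hWmem in
lemma cc_pos (m : ℕ) : 0 < cc W m := by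
  have := Wt_pos hWmem m
  unfold cc; positivity

include hWmem in
lemma cc_ratio (m : ℕ) : 10 * cc W m ≤ cc W (m+1) := by
  have h := Wt_ratio (W := W) m
  unfold cc
  rw [pow_succ]
  have h100 : (0:ℝ) < (100:ℝ)^m := by positivity
  nlinarith

include hWmem in
lemma cc_step (m d : ℕ) : cc W m * 10^d ≤ cc W (m+d) := by
  induction d with
  | zero => simp
  | succ d ih =>
    have h := cc_ratio hWmem (m+d)
    have hp : (0:ℝ) < cc W m := cc_pos hWmem m
    calc cc W m * 10^(d+1) = 10 * (cc W m * 10^d) := by ring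
      _ ≤ 10 * cc W (m+d) := by nlinarith
      _ ≤ cc W (m+d+1) := h

include hWmem in
lemma cc_head {j m : ℕ} (h : j ≤ m) : cc W j ≤ cc W m * (1/10:ℝ)^(m-j) := by
  obtain ⟨d, rfl⟩ : ∃ d, m = j + d := ⟨m - j, by omega⟩
  have := cc_step hWmem j d
  have hd : j + d - j = d := by omega
  rw [hd]
  have h10 : (0:ℝ) < 10^d := by positivity
  rw [div_pow, one_pow, mul_one_div, le_div_iff₀ h10]
  linarith

include hWmem hWdec in
lemma cc_upper (m d : ℕ) : cc W (m+d) ≤ cc W m * 100^d := by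
  unfold cc
  have h := Wt_anti2 hWmem hWdec (Nat.le_add_right m d)
  have h100 : (0:ℝ) < (100:ℝ)^m := by positivity
  have h100' : (0:ℝ) < (100:ℝ)^d := by positivity
  rw [pow_add]
  nlinarith [mul_le_mul_of_nonneg_right h (show (0:ℝ) ≤ 100^m*100^d by positivity)]

lemma cast_pow_eq (k : ℕ) : ((100^k : ℕ) : ℝ) = (100:ℝ)^k := by push_cast; ring

lemma inv_pow_eq (k : ℕ) : (1/100:ℝ)^k = 1/(100:ℝ)^k := by
  rw [div_pow, one_pow]

-- tail bound
include hWmem hWdec in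
lemma tf_tail {r : ℝ} (hr0 : 0 ≤ r) {m : ℕ} (hr2 : r ≤ 1 - (1/100:ℝ)^(m+1))
    {d : ℕ} (hd : 2 ≤ d) :
    cc W (m+d) * r ^ (100^(m+d)) ≤ cc W m * (1/10:ℝ)^d := by
  have hsplit : (100:ℕ)^(m+d) = 100^(m+1) * 100^(d-1) := by
    rw [← pow_add]; congr 1; omega
  have h1 : r ^ (100:ℕ)^(m+1) ≤ 1/2 := by
    apply pow_window_upper (N := 100^(m+1)) (Nat.one_le_pow _ _ (by norm_num)) hr0
    rw [cast_pow_eq, ← inv_pow_eq]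
    exact hr2
  have h2 : r ^ (100:ℕ)^(m+d) ≤ (1/2:ℝ)^(100^(d-1)) := by
    rw [hsplit, pow_mul]
    apply pow_le_pow_left₀ (pow_nonneg hr0 _) h1
  have h3 : cc W (m+d) * r ^ (100:ℕ)^(m+d) ≤ (cc W m * 100^d) * ((1/2:ℝ)^(100^(d-1))) := by
    exact mul_le_mul (cc_upper hWmem hWdec m d) h2 (pow_nonneg hr0 _)
      (mul_nonneg (cc_pos hWmem m).le (by positivity))
  refine h3.trans ?_
  rw [mul_assoc]
  apply mul_le_mul_of_nonneg_left (tail_numeric d hd) (cc_pos hWmem m).le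

-- main term bound
include hWmem in
lemma tf_main {r : ℝ} {m : ℕ} (h1 : 1 - (1/100:ℝ)^m ≤ r) (hr1 : r ≤ 1) :
    cc W m / 4 ≤ cc W m * r ^ nn m := by
  have hp := cc_pos hWmem m
  rcases Nat.eq_zero_or_pos m with rfl | hm
  · simp [nn]; linarith
  · have hnn : nn m = 100^m := by simp [nn]; omega
    rw [hnn]
    have h4 : (1/4:ℝ) ≤ r ^ (100:ℕ)^m := by
      apply pow_window_lower (N := 100^m) ?_ ?_ ?_ hr1
      · calc (2:ℕ) ≤ 100^1 := by norm_num
          _ ≤ 100^m := Nat.pow_le_pow_right (by norm_num) hm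
      · obtain ⟨k, rfl⟩ : ∃ k, m = k + 1 := ⟨m-1, by omega⟩
        exact ⟨50 * 100^k, by rw [pow_succ]; ring⟩
      · rw [cast_pow_eq, ← inv_pow_eq]; exact h1
    nlinarith


-- real summability
include hWmem hWdec in
lemma sum_real (ε : ℕ) {t : ℝ} (ht0 : 0 ≤ t) (ht1 : t < 1) :
    Summable (fun k => cc W (2*k+ε) * t ^ (nn (2*k+ε))) := by
  obtain ⟨m, hm⟩ : ∃ m : ℕ, (1/100:ℝ)^(m+1) ≤ 1 - t := by
    obtain ⟨m, hm⟩ := exists_pow_lt_of_lt_one (show (0:ℝ) < 1 - t by linarith)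
      (show (1/100:ℝ) < 1 by norm_num)
    exact ⟨m, by
      have : (1/100:ℝ)^(m+1) ≤ (1/100:ℝ)^m :=
        pow_le_pow_of_le_one (by norm_num) (by norm_num) (by omega)
      linarith⟩
  have ht2 : t ≤ 1 - (1/100:ℝ)^(m+1) := by linarith
  have base : Summable (fun k => cc W (2*(k+(m+2))+ε) * t ^ (nn (2*(k+(m+2))+ε))) := by
    apply Summable.of_nonneg_of_le (f := fun k => cc W m * (1/10:ℝ)^k)
    · intro k
      have := cc_pos hWmem (2*(k+(m+2))+ε)
      positivity
    · intro k
      have hd : 2 ≤ 2*(k+(m+2))+ε - m := by omega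
      have hnn : nn (2*(k+(m+2))+ε) = 100^(2*(k+(m+2))+ε) := by
        simp only [nn, if_neg (show ¬ 2*(k+(m+2))+ε = 0 by omega)]
      rw [hnn]
      have step1 : cc W (m + (2*(k+(m+2))+ε - m)) * t ^ 100^(m + (2*(k+(m+2))+ε - m))
          ≤ cc W m * (1/10:ℝ)^(2*(k+(m+2))+ε - m) := tf_tail hWmem hWdec ht0 ht2 hd
      have hsplit : m + (2*(k+(m+2))+ε - m) = 2*(k+(m+2))+ε := by omega
      rw [hsplit] at step1
      refine step1.trans ?_
      apply mul_le_mul_of_nonneg_left _ (cc_pos hWmem m).le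
      apply pow_le_pow_of_le_one (by norm_num) (by norm_num) (by omega)
    · exact (summable_geometric_of_lt_one (by norm_num) (by norm_num)).mul_left _
  exact (summable_nat_add_iff (m+2)).mp base

include hWmem in
lemma norm_dterm_eq (ε k : ℕ) (z : ℂ) :
    ‖dterm W ε k z‖ = cc W (2*k+ε) * ‖z‖ ^ (nn (2*k+ε)) := by
  have hpos := cc_pos hWmem (2*k+ε)
  simp only [dterm, norm_mul, norm_pow, Complex.norm_real, Real.norm_eq_abs,
    abs_of_pos hpos]

include hWmem hWdec in
lemma sum_norm_dterm (ε : ℕ) {z : ℂ} (hz : ‖z‖ < 1) :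
    Summable (fun k => ‖dterm W ε k z‖) := by
  have h := sum_real hWmem hWdec ε (norm_nonneg z) hz
  exact h.congr (fun k => (norm_dterm_eq hWmem ε k z).symm)

include hWmem hWdec in
lemma hasDeriv (ε : ℕ) {z : ℂ} (hz : ‖z‖ < 1) :
    HasDerivAt (ff W ε) (FF W ε z) z := by
  set t : ℝ := (1 + ‖z‖)/2 with ht
  have ht0 : 0 ≤ t := by positivity
  have ht1 : t < 1 := by rw [ht]; linarith
  have hu : Summable (fun k => cc W (2*k+ε) * t ^ (nn (2*k+ε))) := sum_real hWmem hWdec ε ht0 ht1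
  have hopen : IsOpen (Metric.ball (0:ℂ) t) := Metric.isOpen_ball
  have hpre : IsPreconnected (Metric.ball (0:ℂ) t) := (convex_ball _ _).isPreconnected
  have hmem : z ∈ Metric.ball (0:ℂ) t := by
    rw [Metric.mem_ball, dist_zero_right]; rw [ht]; linarith
  have h0 : (0:ℂ) ∈ Metric.ball (0:ℂ) t := by
    rw [Metric.mem_ball, dist_self]; rw [ht]; linarith [norm_nonneg z]
  have hg : ∀ (k : ℕ) (y : ℂ), y ∈ Metric.ball (0:ℂ) t →
      HasDerivAt (fterm W ε k) (dterm W ε k y) y := by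
    intro k y _
    have h := (hasDerivAt_pow (nn (2*k+ε) + 1) y).const_mul
      ((cc W (2*k+ε) / ((nn (2*k+ε) : ℂ) + 1)))
    have hne : ((nn (2*k+ε) : ℂ)) + 1 ≠ 0 := by
      exact_mod_cast Nat.succ_ne_zero (nn (2*k+ε))
    have he : (cc W (2*k+ε) / ((nn (2*k+ε):ℂ) + 1)) * ((((nn (2*k+ε) + 1 : ℕ)):ℂ) * y ^ (nn (2*k+ε) + 1 - 1))
        = (cc W (2*k+ε) : ℂ) * y ^ (nn (2*k+ε)) := by
      rw [Nat.add_sub_cancel]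
      push_cast
      field_simp
    rw [he] at h
    exact h
  have hg' : ∀ (k : ℕ) (y : ℂ), y ∈ Metric.ball (0:ℂ) t →
      ‖dterm W ε k y‖ ≤ cc W (2*k+ε) * t ^ (nn (2*k+ε)) := by
    intro k y hy
    rw [norm_dterm_eq hWmem]
    apply mul_le_mul_of_nonneg_left _ (cc_pos hWmem (2*k+ε)).le
    apply pow_le_pow_left₀ (norm_nonneg y)
    rw [Metric.mem_ball, dist_zero_right] at hy
    exact hy.le
  have hg0 : Summable (fun k => fterm W ε k 0) := by
    apply summable_zero.congr
    intro k
    simp [fterm]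
  exact hasDerivAt_tsum_of_isPreconnected hu hopen hpre hg hg' h0 hg0 hmem

lemma geom_tail_bound (C : ℝ) (hC : 0 ≤ C) :
    ∑' i : ℕ, C * (1/100:ℝ)^(i+1) ≤ C / 99 := by
  have hs : ∑' i : ℕ, C * (1/100:ℝ)^(i+1) = C * (1/100) * ∑' i : ℕ, (1/100:ℝ)^i := by
    rw [← tsum_mul_left]
    congr 1
    ext i
    rw [pow_succ]
    ring
  rw [hs, tsum_geometric_of_lt_one (by norm_num) (by norm_num)]
  have h9 : (1 - (1/100:ℝ))⁻¹ = 100/99 := by norm_num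
  rw [h9]
  exact le_of_eq (by ring)

lemma sum_geom_head (C : ℝ) (hC : 0 ≤ C) (k₀ : ℕ) :
    (∑ k ∈ Finset.range k₀, C * (1/100:ℝ)^(k₀ - k)) ≤ C / 99 := by
  have hrefl := Finset.sum_range_reflect (fun k => C * (1/100:ℝ)^(k₀ - k)) k₀
  rw [← hrefl]
  have heq : ∀ j ∈ Finset.range k₀, C * (1/100:ℝ)^(k₀ - (k₀ - 1 - j)) = C * (1/100:ℝ)^(j+1) := by
    intro j hj
    rw [Finset.mem_range] at hj
    have : k₀ - (k₀ - 1 - j) = j + 1 := by omega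
    rw [this]
  rw [Finset.sum_congr rfl heq]
  refine le_trans (Summable.sum_le_tsum (Finset.range k₀) (fun i _ => by positivity) ?_) (geom_tail_bound C hC)
  apply Summable.mul_left
  apply Summable.comp_injective (summable_geometric_of_lt_one (by norm_num) (by norm_num))
  exact fun a b h => by omega

-- the window hypotheses
include hWmem hWdec in
lemma lower_est {z : ℂ} {m : ℕ}
    (h1 : 1 - (1/100:ℝ)^m ≤ ‖z‖) (h2 : ‖z‖ < 1 - (1/100:ℝ)^(m+1)) :
    cc W m / 8 ≤ ‖FF W (m % 2) z‖ := by
  set r : ℝ := ‖z‖ with hr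
  have hr0 : 0 ≤ r := norm_nonneg z
  have hppos : (0:ℝ) < (1/100:ℝ)^(m+1) := by positivity
  have hr1 : r ≤ 1 := by linarith
  have hz1 : r < 1 := by linarith
  set ε := m % 2 with hε
  set k₀ := m / 2 with hk₀
  have hm : 2*k₀ + ε = m := by omega
  have hccm := cc_pos hWmem m
  have hsumn : Summable (fun k => ‖dterm W ε k z‖) := sum_norm_dterm hWmem hWdec ε hz1
  have hsum : Summable (fun k => dterm W ε k z) := hsumn.of_norm
  have hsplit := Summable.tsum_eq_add_tsum_ite hsum k₀
  -- main term
  have hmain : cc W m / 4 ≤ ‖dterm W ε k₀ z‖ := by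
    rw [norm_dterm_eq hWmem, hm]
    exact tf_main hWmem h1 hr1
  -- termwise bounds for the remainder
  have hhead : ∀ k, k < k₀ → ‖dterm W ε k z‖ ≤ cc W m * (1/100:ℝ)^(k₀ - k) := by
    intro k hk
    rw [norm_dterm_eq hWmem]
    have hle : 2*k+ε ≤ m := by omega
    have e1 : cc W (2*k+ε) * r ^ nn (2*k+ε) ≤ cc W (2*k+ε) := by
      have : r ^ nn (2*k+ε) ≤ 1 := pow_le_one₀ hr0 hr1
      nlinarith [cc_pos hWmem (2*k+ε)]
    refine e1.trans ?_
    have e2 := cc_head hWmem hle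
    have hexp : m - (2*k+ε) = 2*(k₀-k) := by omega
    rw [hexp] at e2
    refine e2.trans ?_
    rw [pow_mul]
    norm_num
  have htail : ∀ k, k₀ < k → ‖dterm W ε k z‖ ≤ cc W m * (1/100:ℝ)^(k - k₀) := by
    intro k hk
    rw [norm_dterm_eq hWmem]
    have hd : 2 ≤ 2*k+ε - m := by omega
    have hnn : nn (2*k+ε) = 100^(2*k+ε) := by
      simp only [nn, if_neg (show ¬ 2*k+ε = 0 by omega)]
    rw [hnn]
    have step1 : cc W (m + (2*k+ε-m)) * r ^ 100^(m + (2*k+ε-m))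
        ≤ cc W m * (1/10:ℝ)^(2*k+ε-m) := tf_tail hWmem hWdec hr0 h2.le hd
    have hsp : m + (2*k+ε-m) = 2*k+ε := by omega
    rw [hsp] at step1
    refine step1.trans ?_
    apply mul_le_mul_of_nonneg_left _ hccm.le
    have hee : (2:ℕ)*(k-k₀) ≤ 2*k+ε-m := by omega
    calc (1/10:ℝ)^(2*k+ε-m) ≤ (1/10:ℝ)^(2*(k-k₀)) :=
          pow_le_pow_of_le_one (by norm_num) (by norm_num) hee
      _ = (1/100:ℝ)^(k-k₀) := by rw [pow_mul]; norm_num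
  -- remainder bound
  have hsumite : Summable (fun k => if k = k₀ then (0:ℝ) else ‖dterm W ε k z‖) := by
    apply Summable.of_nonneg_of_le (f := fun k => ‖dterm W ε k z‖) _ _ hsumn
    · intro k; rcases eq_or_ne k k₀ with rfl | hk
      · simp
      · simp [if_neg hk]
    · intro k; rcases eq_or_ne k k₀ with rfl | hk
      · simp
      · rw [if_neg hk]
  have hsumiteC : Summable (fun k => if k = k₀ then (0:ℂ) else dterm W ε k z) := by
    apply Summable.of_norm
    apply Summable.of_nonneg_of_le (f := fun k => if k = k₀ then (0:ℝ) else ‖dterm W ε k z‖)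
      _ _ hsumite
    · intro k; positivity
    · intro k; rcases eq_or_ne k k₀ with rfl | hk
      · simp
      · simp [if_neg hk]
  have hA : ∑' k, (if k = k₀ then (0:ℝ) else ‖dterm W ε k z‖) ≤ 2 * (cc W m / 99) := by
    rw [← Summable.sum_add_tsum_nat_add (k₀+1) hsumite]
    have hheadsum : ∑ k ∈ Finset.range (k₀+1), (if k = k₀ then (0:ℝ) else ‖dterm W ε k z‖)
        ≤ cc W m / 99 := by
      rw [Finset.sum_range_succ, if_pos rfl, add_zero]
      have : ∀ k ∈ Finset.range k₀, (if k = k₀ then (0:ℝ) else ‖dterm W ε k z‖)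
          ≤ cc W m * (1/100:ℝ)^(k₀ - k) := by
        intro k hk
        rw [Finset.mem_range] at hk
        rw [if_neg (by omega)]
        exact hhead k hk
      refine le_trans (Finset.sum_le_sum this) (sum_geom_head _ hccm.le k₀)
    have htailsum : ∑' i : ℕ, (if i + (k₀+1) = k₀ then (0:ℝ) else ‖dterm W ε (i + (k₀+1)) z‖)
        ≤ cc W m / 99 := by
      refine le_trans (Summable.tsum_le_tsum (f := fun i => if i + (k₀+1) = k₀ then (0:ℝ) else ‖dterm W ε (i + (k₀+1)) z‖)
        (g := fun i => cc W m * (1/100:ℝ)^(i+1)) ?_ ?_ ?_) (geom_tail_bound _ hccm.le)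
      · intro i
        simp only [if_neg (show ¬ i + (k₀+1) = k₀ by omega)]
        have := htail (i + (k₀+1)) (by omega)
        have he : i + (k₀+1) - k₀ = i+1 := by omega
        rw [he] at this
        exact this
      · exact (summable_nat_add_iff (f := fun k => if k = k₀ then (0:ℝ) else ‖dterm W ε k z‖) (k₀+1)).mpr hsumite
      · exact Summable.mul_left _ (by
          apply Summable.comp_injective (summable_geometric_of_lt_one (by norm_num) (by norm_num))
          exact fun a b h => by omega)
    linarith
  -- assemble
  have hFF : FF W ε z = dterm W ε k₀ z + ∑' k, (if k = k₀ then (0:ℂ) else dterm W ε k z) := hsplit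
  have hrest : ‖∑' k, (if k = k₀ then (0:ℂ) else dterm W ε k z)‖ ≤ 2 * (cc W m / 99) := by
    refine le_trans (norm_tsum_le_tsum_norm ?_) ?_
    · apply Summable.of_nonneg_of_le (f := fun k => if k = k₀ then (0:ℝ) else ‖dterm W ε k z‖)
        _ _ hsumite
      · intro k; positivity
      · intro k; rcases eq_or_ne k k₀ with rfl | hk
        · simp
        · simp [if_neg hk]
    · refine le_trans (Summable.tsum_le_tsum ?_ ?_ hsumite) hA
      · intro k; rcases eq_or_ne k k₀ with rfl | hk
        · simp
        · simp [if_neg hk]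
      · apply Summable.of_nonneg_of_le (f := fun k => if k = k₀ then (0:ℝ) else ‖dterm W ε k z‖)
          _ _ hsumite
        · intro k; positivity
        · intro k; rcases eq_or_ne k k₀ with rfl | hk
          · simp
          · simp [if_neg hk]
  calc cc W m / 8 ≤ cc W m / 4 - 2 * (cc W m / 99) := by linarith
    _ ≤ ‖dterm W ε k₀ z‖ - ‖∑' k, (if k = k₀ then (0:ℂ) else dterm W ε k z)‖ := by
        linarith
    _ ≤ ‖dterm W ε k₀ z + ∑' k, (if k = k₀ then (0:ℂ) else dterm W ε k z)‖ := by
        have := norm_add_le (dterm W ε k₀ z + ∑' k, (if k = k₀ then (0:ℂ) else dterm W ε k z))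
          (-(∑' k, (if k = k₀ then (0:ℂ) else dterm W ε k z)))
        simp only [add_neg_cancel_right, norm_neg] at this
        linarith
    _ = ‖FF W ε z‖ := by rw [← hFF]


include hWmem in
lemma cc_mono {j m : ℕ} (h : j ≤ m) : cc W j ≤ cc W m := by
  refine (cc_head hWmem h).trans ?_
  have h1 : (1/10:ℝ)^(m-j) ≤ 1 := pow_le_one₀ (by norm_num) (by norm_num)
  nlinarith [cc_pos hWmem m]

include hWmem hWdec in
lemma bloch_est {z : ℂ} {m ε : ℕ} (hε : ε ≤ 1)
    (h1 : 1 - (1/100:ℝ)^m ≤ ‖z‖) (h2 : ‖z‖ < 1 - (1/100:ℝ)^(m+1)) :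
    ∑' k, ‖dterm W ε k z‖ ≤ 4 * cc W (m+1) := by
  set r : ℝ := ‖z‖ with hr
  have hr0 : 0 ≤ r := norm_nonneg z
  have hppos : (0:ℝ) < (1/100:ℝ)^(m+1) := by positivity
  have hr1 : r ≤ 1 := by linarith
  have hz1 : r < 1 := by linarith
  set K := (m+3-ε)/2 with hK
  have hccm := cc_pos hWmem m
  have hccm1 := cc_pos hWmem (m+1)
  have hsumn : Summable (fun k => ‖dterm W ε k z‖) := sum_norm_dterm hWmem hWdec ε hz1
  rw [← Summable.sum_add_tsum_nat_add K hsumn]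
  have hhead : ∑ k ∈ Finset.range K, ‖dterm W ε k z‖ ≤ 2 * cc W (m+1) := by
    have hterm : ∀ k ∈ Finset.range K, ‖dterm W ε k z‖ ≤ cc W (m+1) * (1/100:ℝ)^(K-1-k) := by
      intro k hk
      rw [Finset.mem_range] at hk
      rw [norm_dterm_eq hWmem]
      have hle : 2*k+ε ≤ m+1 := by omega
      have e1 : cc W (2*k+ε) * r ^ nn (2*k+ε) ≤ cc W (2*k+ε) := by
        have : r ^ nn (2*k+ε) ≤ 1 := pow_le_one₀ hr0 hr1
        nlinarith [cc_pos hWmem (2*k+ε)]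
      refine e1.trans ((cc_head hWmem hle).trans ?_)
      apply mul_le_mul_of_nonneg_left _ hccm1.le
      calc (1/10:ℝ)^(m+1-(2*k+ε)) ≤ (1/10:ℝ)^(2*(K-1-k)) :=
            pow_le_pow_of_le_one (by norm_num) (by norm_num) (by omega)
        _ = (1/100:ℝ)^(K-1-k) := by rw [pow_mul]; norm_num
    refine le_trans (Finset.sum_le_sum hterm) ?_
    have hrefl := Finset.sum_range_reflect (fun j => cc W (m+1) * (1/100:ℝ)^j) K
    have : ∀ j ∈ Finset.range K, cc W (m+1) * (1/100:ℝ)^(K-1-j) =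
        (fun j => cc W (m+1) * (1/100:ℝ)^j) (K-1-j) := fun j _ => rfl
    rw [Finset.sum_congr rfl this, hrefl]
    have hs : ∑ j ∈ Finset.range K, cc W (m+1) * (1/100:ℝ)^j ≤
        ∑' j : ℕ, cc W (m+1) * (1/100:ℝ)^j := by
      apply Summable.sum_le_tsum _ (fun i _ => by positivity)
      exact (summable_geometric_of_lt_one (by norm_num) (by norm_num)).mul_left _
    refine hs.trans ?_
    rw [tsum_mul_left, tsum_geometric_of_lt_one (by norm_num) (by norm_num)]
    have h9 : (1 - (1/100:ℝ))⁻¹ = 100/99 := by norm_num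
    rw [h9]
    nlinarith
  have htail : ∑' i : ℕ, ‖dterm W ε (i+K) z‖ ≤ cc W (m+1) := by
    have hterm : ∀ i : ℕ, ‖dterm W ε (i+K) z‖ ≤ cc W m * (1/100:ℝ)^(i+1) := by
      intro i
      rw [norm_dterm_eq hWmem]
      have hd : 2 ≤ 2*(i+K)+ε - m := by omega
      have hnn : nn (2*(i+K)+ε) = 100^(2*(i+K)+ε) := by
        simp only [nn, if_neg (show ¬ 2*(i+K)+ε = 0 by omega)]
      rw [hnn]
      have step1 : cc W (m + (2*(i+K)+ε-m)) * r ^ 100^(m + (2*(i+K)+ε-m))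
          ≤ cc W m * (1/10:ℝ)^(2*(i+K)+ε-m) := tf_tail hWmem hWdec hr0 h2.le hd
      have hsp : m + (2*(i+K)+ε-m) = 2*(i+K)+ε := by omega
      rw [hsp] at step1
      refine step1.trans ?_
      apply mul_le_mul_of_nonneg_left _ hccm.le
      calc (1/10:ℝ)^(2*(i+K)+ε-m) ≤ (1/10:ℝ)^(2*(i+1)) :=
            pow_le_pow_of_le_one (by norm_num) (by norm_num) (by omega)
        _ = (1/100:ℝ)^(i+1) := by rw [pow_mul]; norm_num
    have hsum2 : Summable (fun i : ℕ => ‖dterm W ε (i+K) z‖) :=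
      (summable_nat_add_iff (f := fun k => ‖dterm W ε k z‖) K).mpr hsumn
    refine le_trans (Summable.tsum_le_tsum hterm hsum2 ?_) ?_
    · exact Summable.mul_left _ (by
        apply Summable.comp_injective (summable_geometric_of_lt_one (by norm_num) (by norm_num))
        exact fun a b h => by omega)
    · refine le_trans (geom_tail_bound _ hccm.le) ?_
      have := cc_mono hWmem (Nat.le_succ m)
      linarith
  linarith

include hWmem hWdec in
lemma bloch_bound {z : ℂ} {m ε : ℕ} (hε : ε ≤ 1)
    (h1 : 1 - (1/100:ℝ)^m ≤ ‖z‖) (h2 : ‖z‖ < 1 - (1/100:ℝ)^(m+1)) :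
    (1 - ‖z‖^2) * ‖FF W ε z‖ ≤ 640000 * Wt W (m+1) := by
  set r : ℝ := ‖z‖ with hr
  have hr0 : 0 ≤ r := norm_nonneg z
  have hppos : (0:ℝ) < (1/100:ℝ)^(m+1) := by positivity
  have hr1 : r ≤ 1 := by linarith
  have hz1 : r < 1 := by linarith
  have hFFle : ‖FF W ε z‖ ≤ 4 * cc W (m+1) :=
    le_trans (norm_tsum_le_tsum_norm (sum_norm_dterm hWmem hWdec ε hz1)) (bloch_est hWmem hWdec hε h1 h2)
  have h1r : 1 - r^2 ≤ 2 * (1/100:ℝ)^m := by nlinarith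
  have hFF0 : 0 ≤ ‖FF W ε z‖ := norm_nonneg _
  have h1r0 : 0 ≤ 1 - r^2 := by nlinarith
  have step : (1 - r^2) * ‖FF W ε z‖ ≤ (2*(1/100:ℝ)^m) * (4 * cc W (m+1)) := by
    apply mul_le_mul h1r hFFle hFF0 (by positivity)
  refine step.trans ?_
  have hcc : cc W (m+1) = 800 * Wt W (m+1) * 100^(m+1) := rfl
  rw [hcc]
  have hpow : (1/100:ℝ)^m * (100:ℝ)^(m+1) = 100 := by
    rw [pow_succ, div_pow, one_pow, ← mul_assoc]
    rw [one_div, inv_mul_cancel₀ (by positivity)]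
    ring
  have hWt1 := Wt_pos hWmem (m+1)
  have key : 2*(1/100:ℝ)^m * (4 * (800 * Wt W (m+1) * 100^(m+1)))
      = 640000 * Wt W (m+1) := by
    linear_combination (6400 * Wt W (m+1)) * hpow
  linarith

lemma window (r : ℝ) (hr0 : 0 ≤ r) (hr1 : r < 1) :
    ∃ m : ℕ, (1-(1/100:ℝ)^m ≤ r ∧ r < 1-(1/100:ℝ)^(m+1)) ∧
      ∀ m₀ : ℕ, 1-(1/100:ℝ)^m₀ ≤ r → m₀ ≤ m := by
  classical
  have hex : ∃ k : ℕ, r < 1-(1/100:ℝ)^(k+1) := by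
    obtain ⟨k, hk⟩ := exists_pow_lt_of_lt_one (show (0:ℝ) < 1 - r by linarith)
      (show (1/100:ℝ) < 1 by norm_num)
    refine ⟨k, ?_⟩
    have : (1/100:ℝ)^(k+1) ≤ (1/100:ℝ)^k :=
      pow_le_pow_of_le_one (by norm_num) (by norm_num) (by omega)
    linarith
  refine ⟨Nat.find hex, ⟨?_, Nat.find_spec hex⟩, ?_⟩
  · rcases Nat.eq_zero_or_pos (Nat.find hex) with h0 | hpos
    · rw [h0]; simpa using hr0
    · obtain ⟨m', hm'⟩ : ∃ m', Nat.find hex = m' + 1 := ⟨Nat.find hex - 1, by omega⟩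
      have := Nat.find_min hex (show m' < Nat.find hex by omega)
      rw [hm']
      linarith [not_lt.mp this]
  · intro m₀ h₀
    by_contra hgt
    push_neg at hgt
    have hspec := Nat.find_spec hex
    have hmono : (1/100:ℝ)^m₀ ≤ (1/100:ℝ)^(Nat.find hex + 1) :=
      pow_le_pow_of_le_one (by norm_num) (by norm_num) (by omega)
    linarith


include hWmem hWdec hWlim in
lemma tendsto_bloch {ε : ℕ} (hε : ε ≤ 1) :
    Filter.Tendsto (fun z : ℂ => (1 - ‖z‖ ^ 2) * ‖deriv (ff W ε) z‖)
      (Filter.comap (fun z : ℂ => ‖z‖) (nhdsWithin 1 (Set.Iio 1))) (nhds 0) := by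
  rw [Metric.tendsto_nhds]
  intro ε' hε'
  obtain ⟨m₀, hm₀⟩ := Wt_small hWmem hWdec hWlim (ε'/640001) (by positivity)
  set δ := (1/100:ℝ)^m₀ with hδ
  have hδpos : 0 < δ := by positivity
  have hIoo : Set.Ioo (1-δ) 1 ∈ nhdsWithin (1:ℝ) (Set.Iio 1) := by
    rw [Metric.mem_nhdsWithin_iff]
    refine ⟨δ, hδpos, ?_⟩
    rintro x ⟨hx1, hx2⟩
    rw [Metric.mem_ball, Real.dist_eq] at hx1
    rw [Set.mem_Iio] at hx2
    obtain ⟨ha, hb⟩ := abs_lt.mp hx1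
    exact ⟨by linarith, hx2⟩
  filter_upwards [preimage_mem_comap hIoo] with z hz
  obtain ⟨hz1, hz2⟩ := hz
  have hz2' : ‖z‖ < 1 := hz2
  obtain ⟨m, ⟨hw1, hw2⟩, hmax⟩ := window (‖z‖) (norm_nonneg z) hz2
  have hm : m₀ ≤ m := hmax m₀ (by rw [← hδ]; linarith)
  have hder : deriv (ff W ε) z = FF W ε z := (hasDeriv hWmem hWdec ε hz2').deriv
  rw [Real.dist_eq, sub_zero]
  have hbb : (1 - ‖z‖^2) * ‖FF W ε z‖ ≤ 640000 * Wt W (m+1) :=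
    bloch_bound hWmem hWdec hε hw1 hw2
  have hWts : Wt W (m+1) ≤ ε'/640001 := hm₀ (m+1) (by omega)
  have hnn1 : 0 ≤ (1 - ‖z‖^2) := by nlinarith [norm_nonneg z]
  have hval : (1 - ‖z‖ ^ 2) * ‖deriv (ff W ε) z‖
      = (1 - ‖z‖^2) * ‖FF W ε z‖ := by
    rw [hder]
  rw [hval, abs_of_nonneg (mul_nonneg hnn1 (norm_nonneg _))]
  have hWtpos := Wt_pos hWmem (m+1)
  calc (1 - ‖z‖^2) * ‖FF W ε z‖ ≤ 640000 * Wt W (m+1) := hbb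
    _ ≤ 640000 * (ε'/640001) := by linarith
    _ < ε' := by linarith


include hWmem hWdec hWlim in
theorem main :
    ∃ f g : ℂ → ℂ,
      DifferentiableOn ℂ f (Metric.ball 0 1) ∧
      DifferentiableOn ℂ g (Metric.ball 0 1) ∧
      Filter.Tendsto (fun z : ℂ => (1 - ‖z‖ ^ 2) * ‖deriv f z‖)
        (Filter.comap (fun z : ℂ => ‖z‖) (nhdsWithin 1 (Set.Iio 1))) (nhds 0) ∧
      Filter.Tendsto (fun z : ℂ => (1 - ‖z‖ ^ 2) * ‖deriv g z‖)
        (Filter.comap (fun z : ℂ => ‖z‖) (nhdsWithin 1 (Set.Iio 1))) (nhds 0) ∧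
      ∀ z ∈ Metric.ball (0:ℂ) 1,
        W (‖z‖) / (1 - ‖z‖) ≤
          ‖deriv f z‖ + ‖deriv g z‖ := by
  refine ⟨ff W 0, ff W 1, ?_, ?_, ?_, ?_, ?_⟩
  case _ => -- diff f
    intro z hz
    rw [Metric.mem_ball, dist_zero_right] at hz
    exact (hasDeriv hWmem hWdec 0 hz).differentiableAt.differentiableWithinAt
  case _ =>
    intro z hz
    rw [Metric.mem_ball, dist_zero_right] at hz
    exact (hasDeriv hWmem hWdec 1 hz).differentiableAt.differentiableWithinAt
  case _ => exact tendsto_bloch hWmem hWdec hWlim (by norm_num)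
  case _ => exact tendsto_bloch hWmem hWdec hWlim (by norm_num)
  case _ =>
    intro z hz
    rw [Metric.mem_ball, dist_zero_right] at hz
    obtain ⟨m, ⟨hw1, hw2⟩, hmax⟩ := window (‖z‖) (norm_nonneg z) hz
    have hz' : ‖z‖ < 1 := hz
    have hder0 : deriv (ff W 0) z = FF W 0 z := (hasDeriv hWmem hWdec 0 hz').deriv
    have hder1 : deriv (ff W 1) z = FF W 1 z := (hasDeriv hWmem hWdec 1 hz').deriv
    have hWr : W (‖z‖) ≤ Wt W m := by
      refine le_trans ?_ (W_le_Wt (W := W) m)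
      exact hWdec (rmem m) ⟨norm_nonneg z, hz⟩ hw1
    have hppos : (0:ℝ) < (1/100:ℝ)^(m+1) := by positivity
    have hden : (1/100:ℝ)^(m+1) ≤ 1 - ‖z‖ := by linarith
    have hq : W (‖z‖) / (1 - ‖z‖) ≤ Wt W m / (1/100:ℝ)^(m+1) :=
      div_le_div₀ (Wt_pos hWmem m).le hWr hppos hden
    have heq : Wt W m / (1/100:ℝ)^(m+1) = cc W m / 8 := by
      have h1 : cc W m = 800 * Wt W m * 100^m := rfl
      rw [h1, div_eq_mul_inv, one_div, inv_pow, inv_inv, pow_succ]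
      ring
    have hlow : cc W m / 8 ≤ ‖FF W (m % 2) z‖ :=
      lower_est hWmem hWdec hw1 hw2
    have hpar : ‖FF W (m % 2) z‖ ≤ ‖FF W 0 z‖ + ‖FF W 1 z‖ := by
      rcases Nat.mod_two_eq_zero_or_one m with h | h <;> rw [h]
      · linarith [norm_nonneg (FF W 1 z)]
      · linarith [norm_nonneg (FF W 0 z)]
    have habs0 : ‖deriv (ff W 0) z‖ = ‖FF W 0 z‖ := by
      rw [hder0]
    have habs1 : ‖deriv (ff W 1) z‖ = ‖FF W 1 z‖ := by
      rw [hder1]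
    rw [habs0, habs1]
    rw [heq] at hq
    linarith


end PLB

/-- For every continuous non-increasing `W : [0,1) → (0,1)` with
`W(r) → 0` as `r → 1⁻` there exist functions `f, g` in the little Bloch space `𝓑₀`
(analytic on the disc with `(1-|z|²)|f'(z)| → 0` as `|z| → 1⁻`) such that
`|f'(z)| + |g'(z)| ≥ W(|z|)/(1-|z|)` for all `z` in the unit disc. -/
theorem pointwise_lower_bound_little_bloch
    (W : ℝ → ℝ)
    (hWcont : ContinuousOn W (Set.Ico 0 1))
    (hWmem : ∀ r ∈ Set.Ico (0:ℝ) 1, W r ∈ Set.Ioo (0:ℝ) 1)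
    (hWdec : AntitoneOn W (Set.Ico 0 1))
    (hWlim : Filter.Tendsto W (nhdsWithin 1 (Set.Iio 1)) (nhds 0)) :
    ∃ f g : ℂ → ℂ,
      DifferentiableOn ℂ f (Metric.ball 0 1) ∧
      DifferentiableOn ℂ g (Metric.ball 0 1) ∧
      Filter.Tendsto (fun z : ℂ => (1 - ‖z‖ ^ 2) * ‖deriv f z‖)
        (Filter.comap (fun z : ℂ => ‖z‖) (nhdsWithin 1 (Set.Iio 1))) (nhds 0) ∧
      Filter.Tendsto (fun z : ℂ => (1 - ‖z‖ ^ 2) * ‖deriv g z‖)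
        (Filter.comap (fun z : ℂ => ‖z‖) (nhdsWithin 1 (Set.Iio 1))) (nhds 0) ∧
      ∀ z ∈ Metric.ball (0:ℂ) 1,
        W (‖z‖) / (1 - ‖z‖) ≤
          ‖deriv f z‖ + ‖deriv g z‖ := by
  exact PLB.main hWmem hWdec hWlim
end

section
/- There exist analytic functions f, g : 𝔻 → ℂ, each given by a power series f(z) = Σ_{n≥0} c_n zⁿ and g(z) = Σ_{n≥0} d_n zⁿ whose Taylor coefficient sequences (c_n) and (d_n) are square-summable, such that |f′(z)| + |g′(z)| ≥ 1/((1 − |z|)·log(1/(1 − |z|))) for all z ∈ 𝔻 with 1 − 1/e ≤ |z| < 1. -/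
open Finset Complex

lemma exp100_big : (4*10^6 : ℝ) ≤ Real.exp 100 := by
  have h1 : (11:ℝ) ≤ Real.exp 10 := by
    have := Real.add_one_le_exp (10:ℝ); linarith
  have h2 : (11:ℝ)^10 ≤ Real.exp 10 ^ 10 := pow_le_pow_left₀ (by norm_num) h1 10
  have h3 : Real.exp 10 ^ 10 = Real.exp 100 := by
    rw [← Real.exp_nat_mul]; norm_num
  nlinarith [h2, h3]

lemma exp85 : (1/5:ℝ) ≤ Real.exp (-(8/5)) := by
  have h8 : Real.exp 8 < 3125 := by
    have h1 : Real.exp 8 = Real.exp 1 ^ 8 := by rw [← Real.exp_nat_mul]; norm_num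
    have h2 : Real.exp 1 < 2.7182818286 := Real.exp_one_lt_d9
    have h3 : Real.exp 1 ^ 8 < 2.7182818286^8 :=
      pow_lt_pow_left₀ h2 (Real.exp_pos 1).le (by norm_num)
    nlinarith
  have h5 : Real.exp (8/5) ≤ 5 := by
    have e1 : Real.exp (8/5) ^ 5 = Real.exp 8 := by
      rw [← Real.exp_nat_mul]; norm_num
    refine le_of_pow_le_pow_left₀ (by norm_num) (by norm_num) (n := 5) ?_
    rw [e1]; nlinarith
  rw [Real.exp_neg, one_div]
  exact inv_anti₀ (Real.exp_pos _) h5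

lemma log100 : (4:ℝ) ≤ Real.log 100 := by
  rw [Real.le_log_iff_exp_le (by norm_num)]
  have h1 : Real.exp 4 = Real.exp 1 ^ 4 := by rw [← Real.exp_nat_mul]; norm_num
  have h2 : Real.exp 1 < 2.7182818286 := Real.exp_one_lt_d9
  have h3 : Real.exp 1 ^ 4 < 2.7182818286^4 :=
    pow_lt_pow_left₀ h2 (Real.exp_pos 1).le (by norm_num)
  nlinarith

lemma e83 : (8/3 : ℝ) ≤ Real.exp 1 := by
  have := Real.exp_one_gt_d9; nlinarith

noncomputable def lacF (A : ℕ → ℂ) (z : ℂ) : ℂ := ∑' k : ℕ, A k * z ^ (100 ^ k)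
noncomputable def lacD (A : ℕ → ℂ) (z : ℂ) : ℂ :=
  ∑' k : ℕ, A k * ((100 ^ k : ℕ) : ℂ) * z ^ (100 ^ k - 1)

lemma expInj : Function.Injective (fun k : ℕ => 100 ^ k) :=
  fun a b h => Nat.pow_right_injective (by norm_num) h

lemma pow_ge (j : ℕ) : j + 1 ≤ 100 ^ j := by
  induction j with
  | zero => simp
  | succ n ih =>
    have h : (1:ℕ) ≤ 100 ^ n := Nat.one_le_pow _ _ (by norm_num)
    have : (100:ℕ) ^ (n+1) = 100 * 100 ^ n := by ring
    omega

lemma summable_aux {ρ : ℝ} (h0 : 0 ≤ ρ) (h1 : ρ < 1) :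
    Summable (fun k : ℕ => (100000:ℝ) * ((100 ^ k : ℕ) : ℝ) * ρ ^ (100 ^ k - 1)) := by
  have base : Summable (fun n : ℕ => (100000:ℝ) * (((n:ℝ) + 1) * ρ ^ n)) := by
    apply Summable.mul_left
    have h2 : Summable (fun n : ℕ => (n:ℝ) * ρ ^ n) := by
      have := summable_pow_mul_geometric_of_norm_lt_one (R := ℝ) 1
        (r := ρ) (by rwa [Real.norm_eq_abs, _root_.abs_of_nonneg h0])
      simpa using this
    have h3 : Summable (fun n : ℕ => ρ ^ n) := summable_geometric_of_lt_one h0 h1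
    simpa [add_mul, one_mul] using h2.add h3
  have hinj : Function.Injective (fun k : ℕ => 100 ^ k - 1) := by
    intro a b h
    simp only at h
    have : (100:ℕ) ^ a = 100 ^ b := by
      have h1 : 1 ≤ (100:ℕ)^a := Nat.one_le_pow _ _ (by norm_num)
      have h2 : 1 ≤ (100:ℕ)^b := Nat.one_le_pow _ _ (by norm_num)
      omega
    exact expInj this
  have := base.comp_injective hinj
  apply this.congr
  intro k
  simp only [Function.comp_apply]
  have h1 : 1 ≤ (100:ℕ)^k := Nat.one_le_pow _ _ (by norm_num)
  have : ((100 ^ k - 1 : ℕ) : ℝ) + 1 = ((100 ^ k : ℕ) : ℝ) := by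
    rw [Nat.cast_sub h1]; push_cast; ring
  rw [this]; ring

lemma term_norm_bound (A : ℕ → ℂ) (hA : ∀ k, ‖A k‖ ≤ 100000) (z : ℂ) (k : ℕ) :
    ‖A k * ((100 ^ k : ℕ) : ℂ) * z ^ (100 ^ k - 1)‖ ≤
      (100000:ℝ) * ((100 ^ k : ℕ) : ℝ) * ‖z‖ ^ (100 ^ k - 1) := by
  rw [norm_mul, norm_mul, norm_pow, Complex.norm_natCast]
  have h := hA k
  have h1 : (0:ℝ) ≤ ((100 ^ k : ℕ) : ℝ) := by positivity
  have h2 : (0:ℝ) ≤ ‖z‖ ^ (100 ^ k - 1) := by positivity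
  apply mul_le_mul_of_nonneg_right _ h2
  exact mul_le_mul_of_nonneg_right h h1

lemma summable_norm_term (A : ℕ → ℂ) (hA : ∀ k, ‖A k‖ ≤ 100000) {z : ℂ} (hz : ‖z‖ < 1) :
    Summable (fun k : ℕ => ‖A k * ((100 ^ k : ℕ) : ℂ) * z ^ (100 ^ k - 1)‖) :=
  Summable.of_nonneg_of_le (fun k => norm_nonneg _) (fun k => term_norm_bound A hA z k)
    (summable_aux (norm_nonneg z) hz)

lemma summable_term (A : ℕ → ℂ) (hA : ∀ k, ‖A k‖ ≤ 100000) {z : ℂ} (hz : ‖z‖ < 1) :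
    Summable (fun k : ℕ => A k * ((100 ^ k : ℕ) : ℂ) * z ^ (100 ^ k - 1)) :=
  (summable_norm_term A hA hz).of_norm

set_option maxHeartbeats 1000000 in
lemma summable_f (A : ℕ → ℂ) (hA : ∀ k, ‖A k‖ ≤ 100000) {z : ℂ} (hz : ‖z‖ < 1) :
    Summable (fun k : ℕ => A k * z ^ (100 ^ k)) := by
  apply Summable.of_norm
  refine Summable.of_nonneg_of_le (fun k => norm_nonneg _) ?_
    ((summable_geometric_of_lt_one (norm_nonneg z) hz).mul_left (100000:ℝ))
  · intro k
    rw [norm_mul, norm_pow]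
    have h1 : ‖z‖ ^ (100 ^ k) ≤ ‖z‖ ^ k :=
      pow_le_pow_of_le_one (norm_nonneg z) hz.le (le_of_lt (Nat.lt_pow_self (n := k) (a := 100) (by norm_num)))
    exact mul_le_mul (hA k) h1 (by positivity) (by norm_num)

lemma hasDerivAt_lacF (A : ℕ → ℂ) (hA : ∀ k, ‖A k‖ ≤ 100000) {z : ℂ} (hz : ‖z‖ < 1) :
    HasDerivAt (lacF A) (lacD A z) z := by
  set ρ : ℝ := (1 + ‖z‖) / 2 with hρ
  have hρ0 : 0 ≤ ρ := by positivity
  have hρ1 : ρ < 1 := by rw [hρ]; linarith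
  have hzρ : z ∈ Metric.ball (0:ℂ) ρ := by
    rw [Metric.mem_ball, dist_zero_right]; rw [hρ]; linarith
  apply hasDerivAt_of_tendstoUniformlyOn (l := Filter.atTop)
    (f := fun N x => ∑ k ∈ range N, A k * x ^ (100 ^ k))
    (f' := fun N x => ∑ k ∈ range N, A k * ((100 ^ k : ℕ) : ℂ) * x ^ (100 ^ k - 1))
    (Metric.isOpen_ball) ?_ ?_ ?_ hzρ
  · apply tendstoUniformlyOn_tsum_nat
      (u := fun k => (100000:ℝ) * ((100 ^ k : ℕ) : ℝ) * ρ ^ (100 ^ k - 1))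
      (summable_aux hρ0 hρ1)
    intro k x hx
    rw [Metric.mem_ball, dist_zero_right] at hx
    refine (term_norm_bound A hA x k).trans ?_
    have h1 : ‖x‖ ^ (100 ^ k - 1) ≤ ρ ^ (100 ^ k - 1) :=
      pow_le_pow_left₀ (norm_nonneg x) hx.le _
    have h2 : (0:ℝ) ≤ 100000 * ((100 ^ k : ℕ) : ℝ) := by positivity
    exact mul_le_mul_of_nonneg_left h1 h2
  · filter_upwards with N x hx
    apply HasDerivAt.fun_sum
    intro k _
    have h := (hasDerivAt_pow (100 ^ k) x).const_mul (A k)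
    convert h using 1
    · rfl
    · ring
  · intro x hx
    rw [Metric.mem_ball, dist_zero_right] at hx
    exact (summable_f A hA (hx.trans hρ1)).hasSum.tendsto_sum_nat

noncomputable def aa (k : ℕ) : ℂ := (100000 : ℂ) / (((k:ℕ) : ℂ) + 1)
noncomputable def bb (k : ℕ) : ℂ := Complex.I ^ k * aa k
lemma ratio_aux (k d : ℕ) : (100:ℝ)^k/((k:ℝ)+1) * 50^d ≤ 100^(k+d)/((k:ℝ)+(d:ℝ)+1) := by
  induction d with
  | zero => simp
  | succ n ih =>
    have h : (100:ℝ)^k/((k:ℝ)+1) * 50^(n+1) = ((100:ℝ)^k/((k:ℝ)+1) * 50^n) * 50 := by ring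
    rw [h]
    have h2 : ((100:ℝ)^k/((k:ℝ)+1) * 50^n) * 50 ≤ (100^(k+n)/((k:ℝ)+(n:ℝ)+1)) * 50 :=
      mul_le_mul_of_nonneg_right ih (by norm_num)
    refine h2.trans ?_
    rw [div_mul_eq_mul_div, div_le_div_iff₀ (by positivity) (by positivity)]
    have hp : (0:ℝ) < 100^(k+n) := by positivity
    have hkn : (0:ℝ) ≤ (k:ℝ) + (n:ℝ) := by positivity
    have hpow : (100:ℝ)^(k+(n+1)) = 100^(k+n) * 100 := by rw [← pow_succ]; ring_nf
    push_cast
    rw [hpow]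
    nlinarith

lemma lower_piece {K k : ℕ} (hk : k < K) :
    (100:ℝ)^k/((k:ℝ)+1) ≤ 100^K/((K:ℝ)+1) * (1/50)^(K-k) := by
  have h := ratio_aux k (K - k)
  have hkK : k + (K - k) = K := by omega
  rw [hkK] at h
  have hc : ((k:ℝ) + ((K-k:ℕ):ℝ) + 1) = (K:ℝ) + 1 := by
    have : ((K - k : ℕ):ℝ) = (K:ℝ) - (k:ℝ) := by
      rw [Nat.cast_sub hk.le]
    rw [this]; ring
  rw [hc] at h
  have h50 : (0:ℝ) < 50^(K-k) := by positivity
  rw [one_div, inv_pow, ← div_eq_mul_inv, le_div_iff₀ h50]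
  exact h



set_option maxHeartbeats 2000000 in
lemma err_bound (A : ℕ → ℂ) (hA : ∀ k, ‖A k‖ = 100000 / ((k:ℝ)+1)) {z : ℂ} {K : ℕ}
    (hr2 : 1/2 ≤ ‖z‖) (hr1 : ‖z‖ < 1)
    (hK2 : 1 < (100:ℝ)^(K+1) * (1 - ‖z‖)) :
    ‖lacD A z - A K * ((100^K : ℕ) : ℂ) * z ^ (100^K - 1)
       - A (K+1) * ((100^(K+1) : ℕ) : ℂ) * z ^ (100^(K+1) - 1)‖
      ≤ (1/20) * (100000 * (100:ℝ)^K / ((K:ℝ)+1)) := by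
  have hA' : ∀ k, ‖A k‖ ≤ 100000 := by
    intro k; rw [hA k]
    apply div_le_self (by norm_num)
    have : (0:ℝ) ≤ (k:ℝ) := Nat.cast_nonneg k
    linarith
  have hr0 : (0:ℝ) ≤ ‖z‖ := norm_nonneg z
  set r := ‖z‖ with hr
  set T : ℕ → ℂ := fun k => A k * ((100^k : ℕ) : ℂ) * z ^ (100^k - 1) with hT
  set D : ℝ := 100000 * (100:ℝ)^K / ((K:ℝ)+1) with hD
  have hD0 : (0:ℝ) ≤ D := by rw [hD]; positivity
  have hsum : Summable T := summable_term A hA' hr1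
  have hsn : Summable (fun k => ‖T k‖) := summable_norm_term A hA' hr1
  have hs2 : Summable (fun i => ‖T (i + (K+2))‖) := (summable_nat_add_iff (K+2)).mpr hsn
  have hnorm : ∀ k, ‖T k‖ = 100000 / ((k:ℝ)+1) * (100:ℝ)^k * r ^ (100^k - 1) := by
    intro k
    rw [hT]
    simp only
    rw [norm_mul, norm_mul, norm_pow, Complex.norm_natCast, hA k]
    push_cast
    ring
  -- part 1 : the lower terms
  have part1 : ∑ i ∈ range K, ‖T i‖ ≤ (1/49) * D := by
    have hb : ∀ i ∈ range K, ‖T i‖ ≤ D * (1/50)^(K-i) := by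
      intro i hi
      rw [hnorm i]
      have hp1 : r ^ (100^i - 1) ≤ 1 := pow_le_one₀ hr0 hr1.le
      have hq0 : (0:ℝ) ≤ 100000 / ((i:ℝ)+1) * (100:ℝ)^i := by positivity
      have h2 : 100000 / ((i:ℝ)+1) * (100:ℝ)^i * r ^ (100^i-1)
          ≤ 100000 / ((i:ℝ)+1) * (100:ℝ)^i := by
        nlinarith [pow_nonneg hr0 (100^i - 1)]
      refine h2.trans ?_
      have hlp := lower_piece (mem_range.mp hi)
      calc 100000 / ((i:ℝ)+1) * (100:ℝ)^i = 100000 * ((100:ℝ)^i/((i:ℝ)+1)) := by ring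
        _ ≤ 100000 * ((100:ℝ)^K/((K:ℝ)+1) * (1/50)^(K-i)) :=
            mul_le_mul_of_nonneg_left hlp (by norm_num)
        _ = D * (1/50)^(K-i) := by rw [hD]; ring
    refine (Finset.sum_le_sum hb).trans ?_
    rw [← Finset.mul_sum]
    have hgeo : ∑ i ∈ range K, (1/50:ℝ)^(K-i) ≤ 1/49 := by
      have hre : ∑ i ∈ range K, (1/50:ℝ)^(K-i) = ∑ j ∈ range K, (1/50:ℝ)^(j+1) := by
        rw [← Finset.sum_range_reflect]
        apply Finset.sum_congr rfl
        intro j hj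
        congr 1
        have := mem_range.mp hj
        omega
      have hsum50 : ∑ j ∈ range K, (1/50:ℝ)^j ≤ (1 - 1/50)⁻¹ := by
        refine (Summable.sum_le_tsum (range K) (fun i _ => by positivity)
          (summable_geometric_of_lt_one (by norm_num) (by norm_num))).trans
          (le_of_eq (tsum_geometric_of_lt_one (by norm_num) (by norm_num)))
      have he : ∑ j ∈ range K, (1/50:ℝ)^(j+1) = (1/50) * ∑ j ∈ range K, (1/50:ℝ)^j := by
        rw [Finset.mul_sum]
        apply Finset.sum_congr rfl
        intro j _
        ring
      rw [hre, he]
      nlinarith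
    nlinarith
  -- part 2 : the tail
  have hshift : ∀ i : ℕ, ‖T (i + (K+2))‖ ≤ D * (20000 * Real.exp (-100)) * (1/2:ℝ)^i := by
    intro i
    rw [hnorm]
    set j : ℕ := i + (K+2) with hj
    set n : ℕ := 100 ^ j with hn
    have hn1 : 1 ≤ n := Nat.one_le_pow _ _ (by norm_num)
    have e2 : r ^ (n-1) ≤ 2 * r ^ n := by
      have hrr : r ^ (n-1) * r = r ^ n := by
        rw [← pow_succ]; congr 1; omega
      nlinarith [pow_nonneg hr0 (n-1)]
    have e3 : r ^ n ≤ Real.exp (-((n:ℝ) * (1-r))) := by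
      have h1 : r ≤ Real.exp (-(1-r)) := by
        have := Real.add_one_le_exp (-(1-r)); linarith
      calc r ^ n ≤ Real.exp (-(1-r)) ^ n := pow_le_pow_left₀ hr0 h1 n
        _ = Real.exp ((n:ℝ) * -(1-r)) := by rw [Real.exp_nat_mul]
        _ = Real.exp (-((n:ℝ) * (1-r))) := by congr 1; ring
    have e4 : 100*(i:ℝ) + 100 ≤ (n:ℝ) * (1-r) := by
      have hnc : (n:ℝ) = (100:ℝ)^(i+1) * 100^(K+1) := by
        rw [hn]; push_cast; rw [← pow_add]; congr 1; omega
      have hp1 : (100:ℝ)*((i:ℝ)+1) ≤ (100:ℝ)^(i+1) := by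
        have h := pow_ge i
        have h' : ((i:ℝ)+1) ≤ (100:ℝ)^i := by exact_mod_cast h
        calc (100:ℝ)*((i:ℝ)+1) ≤ 100 * 100^i := by linarith
          _ = 100^(i+1) := by ring
      have hpow0 : (0:ℝ) < (100:ℝ)^(i+1) := by positivity
      calc 100*(i:ℝ)+100 = 100*((i:ℝ)+1) := by ring
        _ ≤ (100:ℝ)^(i+1) := hp1
        _ = (100:ℝ)^(i+1) * 1 := by ring
        _ ≤ (100:ℝ)^(i+1) * ((100:ℝ)^(K+1) * (1-r)) :=
            mul_le_mul_of_nonneg_left hK2.le hpow0.le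
        _ = (n:ℝ) * (1-r) := by rw [hnc]; ring
    have e5 : Real.exp (-((n:ℝ)*(1-r))) ≤ Real.exp (-100) * Real.exp (-(100*(i:ℝ))) := by
      rw [← Real.exp_add]
      apply Real.exp_le_exp.mpr
      linarith
    have hrpow : r ^ (n-1) ≤ 2 * (Real.exp (-100) * Real.exp (-(100*(i:ℝ)))) := by
      calc r ^ (n-1) ≤ 2 * r ^ n := e2
        _ ≤ 2 * Real.exp (-((n:ℝ)*(1-r))) := by linarith
        _ ≤ 2 * (Real.exp (-100) * Real.exp (-(100*(i:ℝ)))) := by linarith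
    have hj1 : (100000:ℝ)/((j:ℝ)+1) ≤ 100000/((K:ℝ)+1) := by
      apply div_le_div_of_nonneg_left (by norm_num) (by positivity)
      have : (K:ℝ) ≤ (j:ℝ) := by exact_mod_cast (by omega : K ≤ j)
      linarith
    have h100j : (100:ℝ)^j = (100:ℝ)^K * (100:ℝ)^(i+2) := by
      rw [← pow_add]; congr 1; omega
    have hxp : Real.exp (-(100*(i:ℝ))) = Real.exp (-100) ^ i := by
      rw [← Real.exp_nat_mul]; congr 1; ring
    have hbase : (100:ℝ) * Real.exp (-100) ≤ 1/2 := by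
      have h := exp100_big
      have h4 : (0:ℝ) < Real.exp 100 := Real.exp_pos _
      rw [Real.exp_neg]
      rw [mul_comm, inv_mul_le_iff₀ h4]
      nlinarith
    calc 100000/((j:ℝ)+1) * (100:ℝ)^j * r^(100^j - 1)
        ≤ 100000/((K:ℝ)+1) * (100:ℝ)^j * (2 * (Real.exp (-100) * Real.exp (-(100*(i:ℝ))))) := by
          apply mul_le_mul (mul_le_mul_of_nonneg_right hj1 (by positivity)) hrpow
            (by positivity) (by positivity)
      _ = D * (20000 * Real.exp (-100)) * ((100:ℝ)^i * Real.exp (-(100*(i:ℝ)))) := by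
          rw [h100j, hD]; ring
      _ ≤ D * (20000 * Real.exp (-100)) * (1/2:ℝ)^i := by
          apply mul_le_mul_of_nonneg_left _ (by positivity)
          rw [hxp, ← mul_pow]
          exact pow_le_pow_left₀ (by positivity) hbase i
  have part2 : ∑' i, ‖T (i + (K+2))‖ ≤ (1/100) * D := by
    have hsg : Summable (fun i : ℕ => D * (20000 * Real.exp (-100)) * (1/2:ℝ)^i) :=
      (summable_geometric_of_lt_one (by norm_num) (by norm_num)).mul_left _
    refine (Summable.tsum_le_tsum hshift hs2 hsg).trans ?_
    rw [tsum_mul_left, tsum_geometric_of_lt_one (by norm_num) (by norm_num)]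
    have h := exp100_big
    have h4 : (0:ℝ) < Real.exp 100 := Real.exp_pos _
    have hexp : Real.exp (-100) * (4*10^6) ≤ 1 := by
      rw [Real.exp_neg]
      rw [inv_mul_le_iff₀ h4]
      nlinarith
    have hkey : (20000:ℝ) * Real.exp (-100) * (1-1/2:ℝ)⁻¹ ≤ 1/100 := by
      have := Real.exp_pos (-100:ℝ)
      nlinarith
    nlinarith [Real.exp_pos (-100:ℝ)]
  -- assemble
  have key : lacD A z - T K - T (K+1) = (∑ i ∈ range K, T i) + ∑' i, T (i+(K+2)) := by
    have hDval : lacD A z = ∑' k, T k := rfl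
    have h1 : (∑ i ∈ range (K+2), T i) + ∑' i, T (i+(K+2)) = ∑' i, T i :=
      Summable.sum_add_tsum_nat_add (K+2) hsum
    rw [hDval, ← h1, sum_range_succ, sum_range_succ]
    ring
  calc ‖lacD A z - T K - T (K+1)‖
      = ‖(∑ i ∈ range K, T i) + ∑' i, T (i+(K+2))‖ := by rw [key]
    _ ≤ ‖∑ i ∈ range K, T i‖ + ‖∑' i, T (i+(K+2))‖ := norm_add_le _ _
    _ ≤ (∑ i ∈ range K, ‖T i‖) + ∑' i, ‖T (i+(K+2))‖ :=
        add_le_add (norm_sum_le _ _) (norm_tsum_le_tsum_norm hs2)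
    _ ≤ (1/49) * D + (1/100) * D := add_le_add part1 part2
    _ ≤ (1/20) * D := by nlinarith
lemma norm_aa (k : ℕ) : ‖aa k‖ = 100000 / ((k:ℝ)+1) := by
  have h1 : ((k:ℕ):ℂ) + 1 = ((k+1 : ℕ) : ℂ) := by push_cast; ring
  rw [aa, norm_div, h1, Complex.norm_natCast]
  have h2 : ‖(100000:ℂ)‖ = (100000:ℝ) := by
    rw [show (100000:ℂ) = ((100000:ℕ):ℂ) by norm_num, Complex.norm_natCast]
    norm_num
  rw [h2]
  push_cast
  ring

lemma norm_bb (k : ℕ) : ‖bb k‖ = 100000 / ((k:ℝ)+1) := by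
  rw [bb, norm_mul, norm_pow, Complex.norm_I, one_pow, one_mul, norm_aa]

set_option maxHeartbeats 2000000 in
lemma main_est {z : ℂ} (h0 : 1 - 1/Real.exp 1 ≤ ‖z‖) (h1 : ‖z‖ < 1) :
    1/((1-‖z‖) * Real.log (1/(1-‖z‖))) ≤ ‖lacD aa z‖ + ‖lacD bb z‖ := by
  have hexp1 : (8/3:ℝ) ≤ Real.exp 1 := e83
  have hexp1pos : (0:ℝ) < Real.exp 1 := Real.exp_pos 1
  have hr58 : (5/8:ℝ) ≤ ‖z‖ := by
    have h38 : 1/Real.exp 1 ≤ 3/8 := by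
      rw [div_le_div_iff₀ hexp1pos (by norm_num)]
      linarith
    linarith
  set r := ‖z‖ with hrdef
  have hr0 : (0:ℝ) < r := by linarith
  have hs0 : (0:ℝ) < 1 - r := by linarith
  have hse : 1 - r ≤ 1/Real.exp 1 := by linarith
  set t : ℝ := 1/(1-r) with htdef
  have ht0 : 0 < t := by positivity
  have ht_e : Real.exp 1 ≤ t := by
    rw [htdef, le_div_iff₀ hs0]
    calc Real.exp 1 * (1-r) ≤ Real.exp 1 * (1/Real.exp 1) :=
          mul_le_mul_of_nonneg_left hse hexp1pos.le
      _ = 1 := by field_simp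
  have ht1 : (1:ℝ) ≤ t := by nlinarith
  have hlog1 : (1:ℝ) ≤ Real.log t := by
    rw [Real.le_log_iff_exp_le ht0]
    simpa using ht_e
  have hlogt0 : (0:ℝ) < Real.log t := by linarith
  set K : ℕ := ⌊Real.logb 100 t⌋₊ with hKdef
  have hlb0 : 0 ≤ Real.logb 100 t := Real.logb_nonneg (by norm_num) ht1
  have hK1 : (100:ℝ)^K ≤ t := by
    calc (100:ℝ)^K = (100:ℝ)^((K:ℕ):ℝ) := by rw [Real.rpow_natCast]
      _ ≤ (100:ℝ)^(Real.logb 100 t) :=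
          Real.rpow_le_rpow_of_exponent_le (by norm_num) (Nat.floor_le hlb0)
      _ = t := Real.rpow_logb (by norm_num) (by norm_num) ht0
  have hK2 : t < (100:ℝ)^(K+1) := by
    calc t = (100:ℝ)^(Real.logb 100 t) :=
          (Real.rpow_logb (by norm_num) (by norm_num) ht0).symm
      _ < (100:ℝ)^(((K+1:ℕ)):ℝ) := by
          apply Real.rpow_lt_rpow_of_exponent_lt (by norm_num)
          push_cast
          exact Nat.lt_floor_add_one _
      _ = (100:ℝ)^(K+1) := by rw [Real.rpow_natCast]
  have hK1' : (100:ℝ)^K * (1 - r) ≤ 1 := by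
    rw [htdef] at hK1
    calc (100:ℝ)^K * (1-r) ≤ (1/(1-r)) * (1-r) := mul_le_mul_of_nonneg_right hK1 hs0.le
      _ = 1 := by field_simp
  have hK2' : 1 < (100:ℝ)^(K+1) * (1 - r) := by
    rw [htdef] at hK2
    have := mul_lt_mul_of_pos_right hK2 hs0
    calc (1:ℝ) = (1/(1-r)) * (1-r) := by field_simp
      _ < (100:ℝ)^(K+1) * (1-r) := this
  -- lower bound for the main term
  set u : ℂ := aa K * ((100^K : ℕ) : ℂ) * z ^ (100^K - 1) with hu_def
  set v : ℂ := aa (K+1) * ((100^(K+1) : ℕ) : ℂ) * z ^ (100^(K+1) - 1) with hv_def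
  set D : ℝ := 100000 * (100:ℝ)^K / ((K:ℝ)+1) with hD
  have hD0 : (0:ℝ) < D := by rw [hD]; positivity
  have hnormu : ‖u‖ = 100000 / ((K:ℝ)+1) * (100:ℝ)^K * r ^ (100^K - 1) := by
    rw [hu_def, norm_mul, norm_mul, norm_pow, Complex.norm_natCast, norm_aa]
    push_cast
    ring
  have hrpow : (1/5 : ℝ) ≤ r ^ (100^K - 1) := by
    have hlogr : -((1-r)/r) ≤ Real.log r := by
      have hl := Real.log_le_sub_one_of_pos (show (0:ℝ) < 1/r by positivity)
      rw [one_div, Real.log_inv] at hl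
      have he : r⁻¹ - 1 = (1-r)/r := by field_simp
      rw [he] at hl
      linarith
    have hn1 : ((100^K : ℕ):ℝ) * (1-r) ≤ 1 := by
      push_cast
      exact hK1'
    have hnlog : -(8/5 : ℝ) ≤ ((100^K : ℕ):ℝ) * Real.log r := by
      have h2 : ((100^K : ℕ):ℝ) * (-((1-r)/r)) ≤ ((100^K : ℕ):ℝ) * Real.log r :=
        mul_le_mul_of_nonneg_left hlogr (by positivity)
      have h3 : ((100^K : ℕ):ℝ) * ((1-r)/r) ≤ 8/5 := by
        have hinv : 1/r ≤ 8/5 := by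
          rw [div_le_div_iff₀ hr0 (by norm_num)]; linarith
        have he2 : ((100^K : ℕ):ℝ) * ((1-r)/r) = (((100^K : ℕ):ℝ) * (1-r))/r := by ring
        rw [he2]
        calc (((100^K : ℕ):ℝ) * (1-r))/r ≤ 1/r := by gcongr
          _ ≤ 8/5 := hinv
      linarith
    have hexp : r ^ (100^K : ℕ) = Real.exp (((100^K : ℕ):ℝ) * Real.log r) := by
      rw [← Real.log_pow, Real.exp_log (pow_pos hr0 _)]
    have h5 : (1/5:ℝ) ≤ r ^ (100^K : ℕ) := by
      rw [hexp]
      exact le_trans exp85 (Real.exp_le_exp.mpr hnlog)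
    calc (1/5:ℝ) ≤ r ^ (100^K : ℕ) := h5
      _ ≤ r ^ (100^K - 1) := pow_le_pow_of_le_one hr0.le h1.le (Nat.sub_le _ _)
  have hu_lower : D * (1/5) ≤ ‖u‖ := by
    rw [hnormu, hD]
    have hq : (0:ℝ) ≤ 100000 / ((K:ℝ)+1) * (100:ℝ)^K := by positivity
    calc 100000 * (100:ℝ)^K / ((K:ℝ)+1) * (1/5)
        = (100000 / ((K:ℝ)+1) * (100:ℝ)^K) * (1/5) := by ring
      _ ≤ (100000 / ((K:ℝ)+1) * (100:ℝ)^K) * r ^ (100^K - 1) :=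
          mul_le_mul_of_nonneg_left hrpow hq
  -- error bounds
  have hr2 : (1/2:ℝ) ≤ r := by linarith
  have err1 := err_bound aa norm_aa hr2 h1 hK2'
  have err2 := err_bound bb norm_bb hr2 h1 hK2'
  -- identify bb terms
  have hub : bb K * ((100^K : ℕ) : ℂ) * z ^ (100^K - 1) = Complex.I^K * u := by
    rw [hu_def, bb]; ring
  have hvb : bb (K+1) * ((100^(K+1) : ℕ) : ℂ) * z ^ (100^(K+1) - 1)
      = Complex.I^K * (Complex.I * v) := by
    rw [hv_def, bb, pow_succ]; ring
  have err2' : ‖lacD bb z - Complex.I^K * (u + Complex.I * v)‖ ≤ (1/20) * D := by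
    have : lacD bb z - Complex.I^K * (u + Complex.I * v)
        = lacD bb z - bb K * ((100^K : ℕ) : ℂ) * z ^ (100^K - 1)
          - bb (K+1) * ((100^(K+1) : ℕ) : ℂ) * z ^ (100^(K+1) - 1) := by
      rw [hub, hvb]; ring
    rw [this, hD]
    exact err2
  have err1' : ‖lacD aa z - (u + v)‖ ≤ (1/20) * D := by
    have : lacD aa z - (u+v) = lacD aa z - u - v := by ring
    rw [this, hD]
    exact err1
  -- triangle inequalities
  have tri1 : ‖u + v‖ ≤ ‖lacD aa z‖ + (1/20) * D := by
    have h : u + v = lacD aa z - (lacD aa z - (u+v)) := by ring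
    calc ‖u + v‖ = ‖lacD aa z - (lacD aa z - (u+v))‖ := by rw [← h]
      _ ≤ ‖lacD aa z‖ + ‖lacD aa z - (u+v)‖ := norm_sub_le _ _
      _ ≤ ‖lacD aa z‖ + (1/20) * D := by linarith
  have tri2 : ‖u + Complex.I * v‖ ≤ ‖lacD bb z‖ + (1/20) * D := by
    have hnm : ‖Complex.I^K * (u + Complex.I * v)‖ = ‖u + Complex.I * v‖ := by
      rw [norm_mul, norm_pow, Complex.norm_I, one_pow, one_mul]
    have h : Complex.I^K * (u + Complex.I * v)
        = lacD bb z - (lacD bb z - Complex.I^K * (u + Complex.I * v)) := by ring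
    calc ‖u + Complex.I * v‖ = ‖Complex.I^K * (u + Complex.I * v)‖ := hnm.symm
      _ = ‖lacD bb z - (lacD bb z - Complex.I^K * (u + Complex.I * v))‖ := by rw [← h]
      _ ≤ ‖lacD bb z‖ + ‖lacD bb z - Complex.I^K * (u + Complex.I * v)‖ := norm_sub_le _ _
      _ ≤ ‖lacD bb z‖ + (1/20) * D := by linarith
  -- the two-function trick
  have key : ‖u‖ ≤ ‖u + v‖ + ‖u + Complex.I * v‖ := by
    have hiu : (Complex.I - 1) * u = Complex.I*(u+v) - (u + Complex.I*v) := by ring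
    have h2 : ‖(Complex.I - 1) * u‖ ≤ ‖Complex.I*(u+v)‖ + ‖u + Complex.I*v‖ := by
      rw [hiu]; exact norm_sub_le _ _
    simp only [norm_mul, Complex.norm_I, one_mul] at h2
    have hI1 : 1 ≤ ‖Complex.I - 1‖ := by
      have hsq : Complex.normSq (Complex.I - 1) = 2 := by
        simp [Complex.normSq_apply]
        norm_num
      have habs : ‖Complex.I - 1‖^2 = 2 := by
        rw [Complex.sq_norm, hsq]
      nlinarith [norm_nonneg (Complex.I - 1)]
    nlinarith [norm_nonneg u]
  have hlower : D/10 ≤ ‖lacD aa z‖ + ‖lacD bb z‖ := by nlinarith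
  -- final numeric chain
  have hlog2 : (K:ℝ)+1 ≤ 2 * Real.log t := by
    have hfl : (K:ℝ) ≤ Real.logb 100 t := Nat.floor_le hlb0
    have hlb : Real.logb 100 t = Real.log t / Real.log 100 := rfl
    have hd : Real.log t / Real.log 100 ≤ Real.log t / 4 :=
      div_le_div_of_nonneg_left (by linarith) (by norm_num) log100
    rw [hlb] at hfl
    have : (K:ℝ) ≤ Real.log t / 4 := le_trans hfl hd
    linarith
  have hX : (1/100:ℝ) < (100:ℝ)^K * (1-r) := by
    have hps : (100:ℝ)^(K+1) = 100 * (100:ℝ)^K := by ring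
    rw [hps] at hK2'
    linarith
  have hgoal : 1/((1-r) * Real.log t) ≤ D/10 := by
    rw [hD]
    rw [div_le_div_iff₀ (by positivity) (by norm_num)]
    have hXpos : (0:ℝ) < (100:ℝ)^K * (1-r) := by positivity
    have e1 : 100000 * (100:ℝ)^K / ((K:ℝ)+1) * ((1-r) * Real.log t)
        = 100000 * ((100:ℝ)^K * (1-r)) * Real.log t / ((K:ℝ)+1) := by ring
    rw [e1]
    rw [le_div_iff₀ (by positivity)]
    nlinarith [mul_pos hXpos hlogt0, hlogt0, hX, hlog2]
  calc 1/((1-r) * Real.log (1/(1-r))) = 1/((1-r) * Real.log t) := by rw [htdef]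
    _ ≤ D/10 := hgoal
    _ ≤ ‖lacD aa z‖ + ‖lacD bb z‖ := hlower

lemma hAa' : ∀ k, ‖aa k‖ ≤ 100000 := by
  intro k
  rw [norm_aa]
  apply div_le_self (by norm_num)
  have : (0:ℝ) ≤ (k:ℝ) := Nat.cast_nonneg k
  linarith

lemma hAb' : ∀ k, ‖bb k‖ ≤ 100000 := by
  intro k
  rw [norm_bb]
  apply div_le_self (by norm_num)
  have : (0:ℝ) ≤ (k:ℝ) := Nat.cast_nonneg k
  linarith

set_option maxHeartbeats 1000000 in
lemma sq_summable (A : ℕ → ℂ) (hA : ∀ k, ‖A k‖ = 100000 / ((k:ℝ)+1)) :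
    Summable (fun n => ‖Function.extend (fun k : ℕ => 100 ^ k) A (fun _ => 0) n‖ ^ 2) := by
  set c := Function.extend (fun k : ℕ => 100 ^ k) A (fun _ => 0) with hc
  have hvan : ∀ x ∉ Set.range (fun k : ℕ => 100 ^ k),
      ‖c x‖ ^ 2 = 0 := by
    intro x hx
    rw [hc, Function.extend_apply' _ _ _ (by rwa [Set.mem_range] at hx)]
    simp
  rw [← Function.Injective.summable_iff expInj hvan]
  have hcomp : ((fun n => ‖c n‖ ^ 2) ∘ (fun k : ℕ => 100 ^ k))
      = fun k : ℕ => ((100000:ℝ) / ((k:ℝ)+1))^2 := by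
    funext k
    simp only [Function.comp_apply]
    rw [hc, expInj.extend_apply, hA k]
  rw [hcomp]
  have h := (Real.summable_one_div_nat_pow (p := 2)).mpr (by norm_num)
  have h1 : Summable (fun n : ℕ => 1/(((n+1:ℕ)):ℝ)^2) := (summable_nat_add_iff 1).mpr h
  have h2 := h1.mul_left ((100000:ℝ)^2)
  apply h2.congr
  intro k
  push_cast
  field_simp

set_option maxHeartbeats 1000000 in
lemma hassum_lac (A : ℕ → ℂ) (hA : ∀ k, ‖A k‖ ≤ 100000) {z : ℂ} (hz : ‖z‖ < 1) :
    HasSum (fun n : ℕ => Function.extend (fun k : ℕ => 100 ^ k) A (fun _ => 0) n * z ^ n)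
      (lacF A z) := by
  set c := Function.extend (fun k : ℕ => 100 ^ k) A (fun _ => 0) with hc
  have hsf : HasSum (fun k => A k * z ^ (100^k)) (lacF A z) := (summable_f A hA hz).hasSum
  have hvan : ∀ x ∉ Set.range (fun k : ℕ => 100 ^ k), c x * z ^ x = 0 := by
    intro x hx
    rw [hc, Function.extend_apply' _ _ _ (by rwa [Set.mem_range] at hx)]
    simp
  apply (Function.Injective.hasSum_iff expInj hvan).mp
  have hcomp : ((fun n : ℕ => c n * z ^ n) ∘ (fun k : ℕ => 100 ^ k))
      = fun k => A k * z ^ (100^k) := by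
    funext k
    simp only [Function.comp_apply]
    rw [hc, expInj.extend_apply]
  rw [hcomp]
  exact hsf

/-- There exist analytic functions `f, g` on the unit disc, given by power
series `f(z) = Σ cₙ zⁿ`, `g(z) = Σ dₙ zⁿ` with square-summable Taylor coefficients, such
that `|f'(z)| + |g'(z)| ≥ 1/((1-|z|)·log(1/(1-|z|)))` for all `z` with `1 - 1/e ≤ |z| < 1`. -/
theorem pointwise_lower_bound_vmoa :
    ∃ (f g : ℂ → ℂ) (c d : ℕ → ℂ),
      DifferentiableOn ℂ f (Metric.ball 0 1) ∧
      DifferentiableOn ℂ g (Metric.ball 0 1) ∧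
      Summable (fun n => ‖c n‖ ^ 2) ∧
      Summable (fun n => ‖d n‖ ^ 2) ∧
      (∀ z ∈ Metric.ball (0:ℂ) 1, HasSum (fun n : ℕ => c n * z ^ n) (f z)) ∧
      (∀ z ∈ Metric.ball (0:ℂ) 1, HasSum (fun n : ℕ => d n * z ^ n) (g z)) ∧
      ∀ z : ℂ, 1 - 1 / Real.exp 1 ≤ ‖z‖ → ‖z‖ < 1 →
        1 / ((1 - ‖z‖) * Real.log (1 / (1 - ‖z‖))) ≤
          ‖deriv f z‖ + ‖deriv g z‖ := by
  refine ⟨lacF aa, lacF bb,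
    Function.extend (fun k : ℕ => 100 ^ k) aa (fun _ => 0),
    Function.extend (fun k : ℕ => 100 ^ k) bb (fun _ => 0),
    ?_, ?_, ?_, ?_, ?_, ?_, ?_⟩
  · intro z hz
    rw [Metric.mem_ball, dist_zero_right] at hz
    exact (hasDerivAt_lacF aa hAa' hz).differentiableAt.differentiableWithinAt
  · intro z hz
    rw [Metric.mem_ball, dist_zero_right] at hz
    exact (hasDerivAt_lacF bb hAb' hz).differentiableAt.differentiableWithinAt
  · exact sq_summable aa norm_aa
  · exact sq_summable bb norm_bb
  · intro z hz
    rw [Metric.mem_ball, dist_zero_right] at hz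
    exact hassum_lac aa hAa' hz
  · intro z hz
    rw [Metric.mem_ball, dist_zero_right] at hz
    exact hassum_lac bb hAb' hz
  · intro z hz1 hz2
    have hd1 : deriv (lacF aa) z = lacD aa z := (hasDerivAt_lacF aa hAa' hz2).deriv
    have hd2 : deriv (lacF bb) z = lacD bb z := (hasDerivAt_lacF bb hAb' hz2).deriv
    rw [hd1, hd2]
    exact main_est hz1 hz2
end

section
/- Let (w_j)_{j≥2} be a non-increasing sequence of real numbers in (0,1) with lim_{j→∞} w_j = 0, and define a sequence (a_j)_{j≥1} by a_1 = 1 and a_j = max{ w_j , ((j−1)/j)·a_{j−1} } for j ≥ 2. Then: (i) the sequence (a_j) is non-increasing; (ii) lim_{j→∞} a_j = 0; (iii) a_j ≥ 1/j for all j ≥ 1; and (iv) a_m ≤ (k/m)·a_k whenever 1 ≤ m ≤ k. -/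
/-- Let `(w_j)_{j≥2}` be a non-increasing sequence in `(0,1)` tending to
`0`, and define `a₁ = 1`, `a_j = max { w_j , ((j-1)/j)·a_{j-1} }` for `j ≥ 2`. Then
(i) `(a_j)` is non-increasing; (ii) `a_j → 0`; (iii) `a_j ≥ 1/j` for all `j ≥ 1`;
(iv) `a_m ≤ (k/m)·a_k` whenever `1 ≤ m ≤ k`. -/
theorem coefficient_sequence_properties
    (w a : ℕ → ℝ)
    (hwmem : ∀ j, 2 ≤ j → w j ∈ Set.Ioo (0:ℝ) 1)
    (hwdec : ∀ j, 2 ≤ j → w (j + 1) ≤ w j)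
    (hwlim : Filter.Tendsto w Filter.atTop (nhds 0))
    (ha1 : a 1 = 1)
    (harec : ∀ j, 2 ≤ j → a j = max (w j) (((j : ℝ) - 1) / (j : ℝ) * a (j - 1))) :
    (∀ j, 1 ≤ j → a (j + 1) ≤ a j) ∧
    Filter.Tendsto a Filter.atTop (nhds 0) ∧
    (∀ j : ℕ, 1 ≤ j → 1 / (j : ℝ) ≤ a j) ∧
    (∀ m k : ℕ, 1 ≤ m → m ≤ k → a m ≤ (k : ℝ) / (m : ℝ) * a k) := by
  have hpos : ∀ j, 1 ≤ j → 0 < a j := by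
    intro j hj
    rcases Nat.lt_or_ge j 2 with h | h
    · interval_cases j
      simp [ha1]
    · rw [harec j h]
      exact lt_max_of_lt_left (hwmem j h).1
  -- step inequality for j*a j
  have hstep : ∀ j : ℕ, 1 ≤ j → (j : ℝ) / ((j : ℝ) + 1) * a j ≤ a (j + 1) := by
    intro j hj
    have h2 : 2 ≤ j + 1 := by omega
    rw [harec (j + 1) h2]
    simp only [Nat.add_sub_cancel]
    push_cast
    apply le_max_of_le_right
    apply le_of_eq
    ring
  have hmono : ∀ j : ℕ, 1 ≤ j → (j : ℝ) * a j ≤ ((j : ℝ) + 1) * a (j + 1) := by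
    intro j hj
    have hj1 : (0 : ℝ) < (j : ℝ) + 1 := by positivity
    calc (j : ℝ) * a j = ((j : ℝ) + 1) * ((j : ℝ) / ((j : ℝ) + 1) * a j) := by
          field_simp
      _ ≤ ((j : ℝ) + 1) * a (j + 1) := mul_le_mul_of_nonneg_left (hstep j hj) hj1.le
  have hprod : ∀ m k : ℕ, 1 ≤ m → m ≤ k → (m : ℝ) * a m ≤ (k : ℝ) * a k := by
    intro m k hm hmk
    induction k, hmk using Nat.le_induction with
    | base => exact le_rfl
    | succ k hk ih =>
      refine ih.trans ?_
      have := hmono k (by omega)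
      push_cast
      linarith
  have hiii : ∀ j : ℕ, 1 ≤ j → 1 / (j : ℝ) ≤ a j := by
    intro j hj
    have h := hprod 1 j le_rfl hj
    have hjpos : (0 : ℝ) < (j : ℝ) := by exact_mod_cast hj
    rw [ha1] at h
    rw [div_le_iff₀ hjpos]
    norm_num at h ⊢
    linarith
  have hi : ∀ j, 1 ≤ j → a (j + 1) ≤ a j := by
    intro j hj
    rcases Nat.lt_or_ge j 2 with h | h
    · interval_cases j
      rw [harec 2 le_rfl]
      norm_num [ha1]
      exact (hwmem 2 le_rfl).2.le
    · have h2 : 2 ≤ j + 1 := by omega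
      rw [harec (j + 1) h2]
      simp only [Nat.add_sub_cancel]
      apply max_le
      · have := hwdec j h
        have haw : w j ≤ a j := by
          rw [harec j h]; exact le_max_left _ _
        linarith
      · push_cast
        have hja : 0 < a j := hpos j hj
        have hjr : (0 : ℝ) < (j : ℝ) + 1 := by positivity
        have h1 : (j : ℝ) / ((j : ℝ) + 1) ≤ 1 := by
          rw [div_le_one hjr]; linarith
        rw [show ((j : ℝ) + 1 - 1) = (j : ℝ) by ring]
        nlinarith
  have hbound : ∀ (N : ℕ) (ε : ℝ), 2 ≤ N → 0 < ε → (∀ j, N ≤ j → w j ≤ ε) →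
      ∀ j, N ≤ j → (j : ℝ) * a j ≤ max ((j : ℝ) * ε) ((N : ℝ) * a N) := by
    intro N ε hN hε hw j hj
    induction j, hj using Nat.le_induction with
    | base => exact le_max_right _ _
    | succ j hj ih =>
      have h2 : 2 ≤ j + 1 := by omega
      rw [harec (j + 1) h2]
      simp only [Nat.add_sub_cancel]
      push_cast
      have hjr : (0 : ℝ) < (j : ℝ) + 1 := by positivity
      rw [mul_max_of_nonneg _ _ hjr.le]
      apply max_le
      · have := hw (j + 1) (by omega)
        push_cast at this
        calc ((j : ℝ) + 1) * w (j + 1) ≤ ((j : ℝ) + 1) * ε :=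
              mul_le_mul_of_nonneg_left (hw (j + 1) (by omega)) hjr.le
          _ ≤ max (((j : ℝ) + 1) * ε) ((N : ℝ) * a N) := le_max_left _ _
      · have heq : ((j : ℝ) + 1) * (((j : ℝ) + 1 - 1) / ((j : ℝ) + 1) * a j)
            = (j : ℝ) * a j := by field_simp; ring
        rw [heq]
        refine ih.trans (max_le_max ?_ le_rfl)
        nlinarith
  have hii : Filter.Tendsto a Filter.atTop (nhds 0) := by
    rw [Metric.tendsto_atTop]
    intro ε hε
    have hε2 : (0 : ℝ) < ε / 2 := by positivity
    obtain ⟨N₀, hN₀⟩ := Metric.tendsto_atTop.mp hwlim (ε / 2) hε2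
    set N := max N₀ 2 with hNdef
    have hN2 : 2 ≤ N := le_max_right _ _
    have hw' : ∀ j, N ≤ j → w j ≤ ε / 2 := by
      intro j hj
      have := hN₀ j (le_trans (le_max_left _ _) hj)
      rw [Real.dist_eq, sub_zero] at this
      exact (abs_lt.mp this).2.le
    set C := (N : ℝ) * a N with hCdef
    have hCpos : 0 < C := mul_pos (by exact_mod_cast (by omega : 0 < N)) (hpos N (by omega))
    obtain ⟨M₁, hM₁⟩ := exists_nat_gt (C / (ε / 2))
    refine ⟨max N M₁, fun n hn => ?_⟩
    have hnN : N ≤ n := le_trans (le_max_left _ _) hn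
    have hnM : M₁ ≤ n := le_trans (le_max_right _ _) hn
    have hn1 : 1 ≤ n := by omega
    have hnr : (0 : ℝ) < (n : ℝ) := by exact_mod_cast (by omega : 0 < n)
    have h1 : (n : ℝ) * a n ≤ max ((n : ℝ) * (ε / 2)) C := hbound N (ε / 2) hN2 hε2 hw' n hnN
    have hC : C < (M₁ : ℝ) * (ε / 2) := by
      rw [div_lt_iff₀ hε2] at hM₁; linarith
    have hMn : (M₁ : ℝ) ≤ (n : ℝ) := by exact_mod_cast hnM
    have h2 : max ((n : ℝ) * (ε / 2)) C < (n : ℝ) * ε := by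
      apply max_lt
      · nlinarith
      · nlinarith
    have han : a n < ε := by
      have := h1.trans_lt h2
      nlinarith [hpos n hn1]
    rw [Real.dist_eq, sub_zero, abs_of_pos (hpos n hn1)]
    exact han
  have hiv : ∀ m k : ℕ, 1 ≤ m → m ≤ k → a m ≤ (k : ℝ) / (m : ℝ) * a k := by
    intro m k hm hmk
    have hmr : (0 : ℝ) < (m : ℝ) := by exact_mod_cast hm
    have h := hprod m k hm hmk
    rw [div_mul_eq_mul_div, le_div_iff₀ hmr]
    linarith
  exact ⟨hi, hii, hiii, hiv⟩
end

section
/- Let q = 100, let W : [0,1) → (0,1) be continuous, non-increasing with lim_{r→1⁻} W(r) = 0, and define a_1 = 1 and a_j = max{ W(1 − q^{−j}) , ((j−1)/j)·a_{j−1} } for j ≥ 2. Let f(z) = Σ_{j=1}^∞ a_j z^{q^j}, an analytic function on 𝔻. Then for every integer k ≥ 1 and every z ∈ 𝔻 with 1 − q^{−k} ≤ |z| ≤ 1 − q^{−(k+1/2)} one has |f′(z)| ≥ a_k·q^k/8. -/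
open Real Filter Finset

set_option maxHeartbeats 3200000 in
/-- With `q = 100`, `W : [0,1) → (0,1)` continuous, non-increasing with
limit `0` at `1⁻`, define `a₁ = 1` and `a_j = max { W(1 - q^{-j}), ((j-1)/j)·a_{j-1} }`
for `j ≥ 2`, and let `f(z) = Σ_{j≥1} a_j z^{q^j}` on the unit disc. Then for every `k ≥ 1`
and every `z` with `1 - q^{-k} ≤ |z| ≤ 1 - q^{-(k+1/2)}` one has `|f'(z)| ≥ a_k q^k / 8`. -/
theorem lacunary_derivative_lower_bound
    (W : ℝ → ℝ)
    (hWcont : ContinuousOn W (Set.Ico 0 1))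
    (hWmem : ∀ r ∈ Set.Ico (0:ℝ) 1, W r ∈ Set.Ioo (0:ℝ) 1)
    (hWdec : AntitoneOn W (Set.Ico 0 1))
    (hWlim : Filter.Tendsto W (nhdsWithin 1 (Set.Iio 1)) (nhds 0))
    (a : ℕ → ℝ)
    (ha1 : a 1 = 1)
    (harec : ∀ j, 2 ≤ j →
      a j = max (W (1 - (100 : ℝ) ^ (-(j : ℝ)))) (((j : ℝ) - 1) / (j : ℝ) * a (j - 1)))
    (f : ℂ → ℂ)
    (hf : ∀ z ∈ Metric.ball (0:ℂ) 1,
      HasSum (fun j : ℕ => ((a (j + 1) : ℝ) : ℂ) * z ^ (100 ^ (j + 1))) (f z)) :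
    ∀ k : ℕ, 1 ≤ k → ∀ z : ℂ,
      1 - (100 : ℝ) ^ (-(k : ℝ)) ≤ ‖z‖ →
      ‖z‖ ≤ 1 - (100 : ℝ) ^ (-((k : ℝ) + 1 / 2)) →
      a k * 100 ^ k / 8 ≤ ‖deriv f z‖ := by
  -- rpow facts
  have hrp : ∀ j : ℕ, (100 : ℝ) ^ (-(j : ℝ)) = ((100 : ℝ) ^ j)⁻¹ := by
    intro j
    rw [Real.rpow_neg (by norm_num), Real.rpow_natCast]
  -- membership of the W arguments
  have hmemIco : ∀ j : ℕ, 1 ≤ j → (1 - (100 : ℝ) ^ (-(j : ℝ))) ∈ Set.Ico (0:ℝ) 1 := by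
    intro j hj
    rw [hrp]
    constructor
    · have : ((100:ℝ)^j)⁻¹ ≤ 1 := by
        rw [inv_le_one_iff₀]; right; exact one_le_pow₀ (by norm_num)
      linarith
    · have : (0:ℝ) < ((100:ℝ)^j)⁻¹ := by positivity
      linarith
  -- positivity of a
  have ha_pos : ∀ j, 1 ≤ j → 0 < a j := by
    intro j hj
    induction j with
    | zero => omega
    | succ n ih =>
      rcases Nat.lt_or_ge n 1 with h | h
      · interval_cases n
        · rw [ha1]; norm_num
      · have h2 : 2 ≤ n + 1 := by omega
        rw [harec (n+1) h2]
        have := (hWmem _ (hmemIco (n+1) (by omega))).1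
        exact lt_of_lt_of_le this (le_max_left _ _)
  -- a ≤ 1
  have ha_le1 : ∀ j, 1 ≤ j → a j ≤ 1 := by
    intro j hj
    induction j with
    | zero => omega
    | succ n ih =>
      rcases Nat.lt_or_ge n 1 with h | h
      · interval_cases n
        · rw [ha1]
      · have hrec := harec (n+1) (by omega)
        simp only [Nat.add_sub_cancel] at hrec
        push_cast at hrec
        rw [hrec]
        have hpos := ha_pos n h
        have hW := (hWmem _ (hmemIco (n+1) (by omega))).2
        push_cast at hW
        have h1 : ((n:ℝ) + 1 - 1) / ((n:ℝ) + 1) ≤ 1 := by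
          rw [div_le_one (by positivity)]; linarith
        have h2 := ih h
        apply max_le (le_of_lt hW)
        calc ((n:ℝ) + 1 - 1) / ((n:ℝ) + 1) * a n ≤ 1 * a n :=
              mul_le_mul_of_nonneg_right h1 (le_of_lt hpos)
          _ ≤ 1 := by rw [one_mul]; exact h2
  -- j * a j is monotone
  have ha_mul : ∀ m j : ℕ, 1 ≤ m → m ≤ j → (m:ℝ) * a m ≤ (j:ℝ) * a j := by
    intro m j hm hmj
    induction j, hmj using Nat.le_induction with
    | base => exact le_rfl
    | succ n hn ih =>
      refine le_trans ih ?_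
      have hrec := harec (n+1) (by omega)
      simp only [Nat.add_sub_cancel] at hrec
      push_cast at hrec
      have hkey : ((n:ℝ) + 1 - 1) / ((n:ℝ) + 1) * a n ≤ a (n+1) :=
        hrec ▸ le_max_right _ _
      have hn1 : (0:ℝ) < (n:ℝ) + 1 := by positivity
      have := mul_le_mul_of_nonneg_left hkey (le_of_lt hn1)
      calc (n:ℝ) * a n = ((n:ℝ)+1) * (((n:ℝ) + 1 - 1) / ((n:ℝ) + 1) * a n) := by
            field_simp
            ring
        _ ≤ ((n:ℝ)+1) * a (n+1) := this
        _ = ((n+1:ℕ):ℝ) * a (n+1) := by push_cast; ring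
  -- a is non-increasing beyond K
  have ha_anti : ∀ K m : ℕ, 1 ≤ K → K ≤ m → a m ≤ a K := by
    intro K m hK hKm
    induction m, hKm using Nat.le_induction with
    | base => exact le_rfl
    | succ n hn ih =>
      have hrec := harec (n+1) (by omega)
      simp only [Nat.add_sub_cancel] at hrec
      rw [hrec]
      apply max_le
      · rcases Nat.lt_or_ge K 2 with h2 | h2
        · have hK1 : K = 1 := by omega
          subst hK1; rw [ha1]
          exact le_of_lt (hWmem _ (hmemIco (n+1) (by omega))).2
        · have hWle : W (1 - (100:ℝ) ^ (-((n+1:ℕ) : ℝ))) ≤ W (1 - (100:ℝ) ^ (-(K : ℝ))) := by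
            apply hWdec (hmemIco K (by omega)) (hmemIco (n+1) (by omega))
            have hmono : (100:ℝ) ^ (-((n+1:ℕ) : ℝ)) ≤ (100:ℝ) ^ (-(K : ℝ)) := by
              rw [hrp, hrp]
              have h100 : ((100:ℝ) ^ K) ≤ (100:ℝ) ^ (n+1) :=
                pow_le_pow_right₀ (by norm_num) (by omega)
              exact inv_anti₀ (by positivity) h100
            linarith
          have haK : W (1 - (100:ℝ) ^ (-(K : ℝ))) ≤ a K := (harec K h2) ▸ le_max_left _ _
          exact le_trans hWle haK
      · have hpos := ha_pos n (by omega)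
        have h1 : (((n+1:ℕ):ℝ) - 1) / ((n+1:ℕ):ℝ) ≤ 1 := by
          push_cast
          rw [div_le_one (by positivity)]; linarith
        calc (((n+1:ℕ):ℝ) - 1) / ((n+1:ℕ):ℝ) * a n ≤ 1 * a n :=
              mul_le_mul_of_nonneg_right h1 (le_of_lt hpos)
          _ = a n := one_mul _
          _ ≤ a K := ih
  intro k hk z hz1 hz2
  set x : ℝ := ((100:ℝ) ^ k)⁻¹ with hx_def
  have hxpos : 0 < x := by positivity
  have hx100 : x ≤ 1 / 100 := by
    rw [hx_def]
    rw [inv_le_comm₀ (by positivity) (by norm_num)]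
    calc (1/100 : ℝ)⁻¹ = 100 ^ 1 := by norm_num
      _ ≤ 100 ^ k := pow_le_pow_right₀ (by norm_num) hk
  have hxmul : x * (100:ℝ) ^ k = 1 := inv_mul_cancel₀ (by positivity)
  -- rewrite hypotheses
  rw [hrp k] at hz1
  have hs_eq : (100 : ℝ) ^ (-((k : ℝ) + 1 / 2)) = x / 10 := by
    have h10 : (100:ℝ) ^ ((1/2):ℝ) = 10 := by
      rw [show (100:ℝ) = 10 ^ (2:ℕ) by norm_num, ← Real.rpow_natCast 10 2,
        ← Real.rpow_mul (by norm_num)]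
      norm_num
    rw [show -((k:ℝ) + 1/2) = (-(k:ℝ)) + (-(1/2)) by ring,
      Real.rpow_add (by norm_num), hrp k, Real.rpow_neg (by norm_num), h10, hx_def]
    rw [div_eq_mul_inv]
  rw [hs_eq] at hz2
  set r : ℝ := ‖z‖ with hr_def
  have hr0 : 0 ≤ r := norm_nonneg z
  have hr1 : r < 1 := by
    have : 0 < x / 10 := by positivity
    linarith
  -- the ball of radius R
  set R : ℝ := (1 + r) / 2 with hR_def
  have hrR : r < R := by rw [hR_def]; linarith
  have hR1 : R < 1 := by rw [hR_def]; linarith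
  have hR0 : 0 < R := by rw [hR_def]; linarith
  set g : ℕ → ℂ → ℂ := fun j y => ((a (j+1) : ℝ) : ℂ) * y ^ (100 ^ (j+1)) with hg_def
  set g' : ℕ → ℂ → ℂ :=
    fun j y => ((a (j+1) : ℝ) : ℂ) * (((100 ^ (j+1) : ℕ)) : ℂ) * y ^ (100 ^ (j+1) - 1)
    with hg'_def
  set u : ℕ → ℝ := fun j => ((100 ^ (j+1) : ℕ) : ℝ) * R ^ (100 ^ (j+1) - 1) with hu_def
  -- derivative of each term
  have hder : ∀ j : ℕ, ∀ y : ℂ, HasDerivAt (g j) (g' j y) y := by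
    intro j y
    have h := (hasDerivAt_pow (100 ^ (j+1)) y).const_mul ((a (j+1) : ℝ) : ℂ)
    rw [← mul_assoc] at h
    exact h
  -- norm of each derivative term
  have hnorm_g' : ∀ j : ℕ, ∀ y : ℂ,
      ‖g' j y‖ = a (j+1) * (((100 ^ (j+1) : ℕ) : ℝ) * ‖y‖ ^ (100 ^ (j+1) - 1)) := by
    intro j y
    have hap : 0 < a (j+1) := ha_pos (j+1) (by omega)
    rw [hg'_def]
    simp only [norm_mul, Complex.norm_real, Complex.norm_natCast, norm_pow,
      Real.norm_eq_abs, abs_of_pos hap]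
    ring
  have hbound : ∀ j : ℕ, ∀ y : ℂ, y ∈ Metric.ball (0:ℂ) R → ‖g' j y‖ ≤ u j := by
    intro j y hy
    rw [hnorm_g' j y, hu_def]
    have hy' : ‖y‖ ≤ R := le_of_lt (by simpa [Metric.mem_ball] using hy)
    have h1 : ‖y‖ ^ (100 ^ (j+1) - 1) ≤ R ^ (100 ^ (j+1) - 1) :=
      pow_le_pow_left₀ (norm_nonneg _) hy' _
    have h2 : a (j+1) ≤ 1 := ha_le1 (j+1) (by omega)
    have h3 : (0:ℝ) ≤ ((100 ^ (j+1) : ℕ) : ℝ) * R ^ (100 ^ (j+1) - 1) := by positivity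
    calc a (j+1) * (((100 ^ (j+1) : ℕ) : ℝ) * ‖y‖ ^ (100 ^ (j+1) - 1))
        ≤ 1 * (((100 ^ (j+1) : ℕ) : ℝ) * R ^ (100 ^ (j+1) - 1)) := by
          apply mul_le_mul h2 _ (by positivity) (by norm_num)
          exact mul_le_mul_of_nonneg_left h1 (by positivity)
      _ = ((100 ^ (j+1) : ℕ) : ℝ) * R ^ (100 ^ (j+1) - 1) := one_mul _
  -- summability of the bound
  have hu_sum : Summable u := by
    have hv : Summable (fun n : ℕ => ((n:ℝ) + 1) * R ^ n) := by
      have h1 := summable_pow_mul_geometric_of_norm_lt_one 1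
        (r := R) (by rw [Real.norm_eq_abs, abs_of_pos hR0]; exact hR1)
      have h2 : Summable (fun n : ℕ => R ^ n) :=
        summable_geometric_of_lt_one (le_of_lt hR0) hR1
      exact (h1.add h2).congr (fun n => by push_cast; ring)
    have hi : Function.Injective (fun j : ℕ => 100 ^ (j+1) - 1) := by
      intro j j' h
      simp only at h
      have h1 : (0:ℕ) < 100 ^ (j+1) := by positivity
      have h2 : (0:ℕ) < 100 ^ (j'+1) := by positivity
      have : (100:ℕ) ^ (j+1) = 100 ^ (j'+1) := by omega
      have := Nat.pow_right_injective (by norm_num : 2 ≤ 100) this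
      omega
    have := hv.comp_injective hi
    apply this.congr
    intro j
    simp only [Function.comp_apply, hu_def]
    have h1 : (1:ℕ) ≤ 100 ^ (j+1) := Nat.one_le_pow _ _ (by norm_num)
    congr 1
    push_cast [Nat.cast_sub h1]
    ring
  -- summability at 0
  have hg0 : Summable (fun j => g j 0) := by
    apply summable_zero.congr
    intro j
    rw [hg_def]
    have : (100:ℕ) ^ (j+1) ≠ 0 := by positivity
    simp [zero_pow this]
  -- identify the derivative
  have hzR : z ∈ Metric.ball (0:ℂ) R := by
    simp [Metric.mem_ball, ← hr_def, hrR]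
  have hderiv : HasDerivAt (fun y => ∑' j, g j y) (∑' j, g' j z) z :=
    hasDerivAt_tsum_of_isPreconnected hu_sum Metric.isOpen_ball
      (convex_ball (0:ℂ) R).isPreconnected (fun j y hy => hder j y)
      hbound (Metric.mem_ball_self hR0) hg0 hzR
  have hfeq : f =ᶠ[nhds z] (fun y => ∑' j, g j y) := by
    filter_upwards [Metric.isOpen_ball.mem_nhds hzR] with y hy
    have hy1 : y ∈ Metric.ball (0:ℂ) 1 :=
      Metric.ball_subset_ball (le_of_lt hR1) hy
    exact ((hf y hy1).tsum_eq).symm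
  have hderiv_eq : deriv f z = ∑' j, g' j z := by
    rw [hfeq.deriv_eq, hderiv.deriv]
  rw [hderiv_eq]
  -- summability of the series of derivatives and its norms
  have hsn : Summable (fun j => ‖g' j z‖) :=
    Summable.of_nonneg_of_le (fun j => norm_nonneg _) (fun j => hbound j z hzR) hu_sum
  have hsg : Summable (fun j => g' j z) := hsn.of_norm
  -- norm formula at z
  have hnz : ∀ j : ℕ, ‖g' j z‖ = a (j+1) * ((100:ℝ)^(j+1) * r ^ (100^(j+1) - 1)) := by
    intro j
    rw [hnorm_g' j z]
    have : ‖z‖ = r := by rw [hr_def]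
    rw [this]
    push_cast
    ring
  have hak : 0 < a k := ha_pos k hk
  -- main term lower bound
  have hk1 : k - 1 + 1 = k := by omega
  have hmain_lb : a k * (100:ℝ)^k * (3/10) ≤ ‖g' (k-1) z‖ := by
    rw [hnz (k-1), hk1]
    have hN : ((100^k - 1 : ℕ) : ℝ) = (100:ℝ)^k - 1 := by
      have h1 : (1:ℕ) ≤ 100^k := Nat.one_le_pow _ _ (by norm_num)
      rw [Nat.cast_sub h1]
      push_cast
      ring
    set t : ℝ := x / (1 - x) with ht_def
    have h1x : (0:ℝ) < 1 - x := by
      have := hx100; linarith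
    have ht0 : 0 ≤ t := by positivity
    have hexp_t : Real.exp (-t) ≤ 1 - x := by
      have h3 := Real.add_one_le_exp t
      have h2 : 1 / (1 - x) ≤ Real.exp t := by
        have h4 : 1 / (1-x) = t + 1 := by rw [ht_def]; field_simp; ring
        linarith
      rw [Real.exp_neg]
      calc (Real.exp t)⁻¹ ≤ (1/(1-x))⁻¹ := inv_anti₀ (by positivity) h2
        _ = 1 - x := by field_simp
    have ht1 : t * ((100:ℝ)^k - 1) = 1 := by
      have hxN : x * ((100:ℝ)^k - 1) = 1 - x := by rw [mul_sub, hxmul]; ring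
      rw [ht_def, div_mul_eq_mul_div, hxN, div_self (ne_of_gt h1x)]
    have hrN : Real.exp (-1) ≤ r ^ (100^k - 1) := by
      have h5 : Real.exp (-t) ^ (100^k - 1) ≤ r ^ (100^k - 1) := by
        apply pow_le_pow_left₀ (Real.exp_pos _).le
        calc Real.exp (-t) ≤ 1 - x := hexp_t
          _ ≤ r := hz1
      calc Real.exp (-1) = Real.exp (((100^k - 1 : ℕ):ℝ) * (-t)) := by
            rw [hN]; congr 1; nlinarith [ht1]
        _ = Real.exp (-t) ^ (100^k - 1) := Real.exp_nat_mul _ _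
        _ ≤ r ^ (100^k - 1) := h5
    have hexp1 : (3/10 : ℝ) ≤ Real.exp (-1) := by
      rw [Real.exp_neg]
      have := Real.exp_one_lt_d9
      rw [le_inv_comm₀ (by norm_num) (Real.exp_pos 1)]
      calc Real.exp 1 ≤ 2.7182818286 := le_of_lt this
        _ ≤ (3/10 : ℝ)⁻¹ := by norm_num
    calc a k * (100:ℝ)^k * (3/10) ≤ a k * (100:ℝ)^k * (r ^ (100^k - 1)) := by
          apply mul_le_mul_of_nonneg_left (le_trans hexp1 hrN) (by positivity)
      _ = a k * ((100:ℝ)^k * r ^ (100^k - 1)) := by ring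
  -- bound for lower-index terms
  have hterm_low : ∀ m : ℕ, 1 ≤ m → m ≤ k →
      a m * (100:ℝ)^m ≤ a k * 100^k * (1/50)^(k-m) := by
    intro m hm hmk
    have ham : 0 < a m := ha_pos m hm
    have h1 : (m:ℝ) * a m ≤ (k:ℝ) * a k := ha_mul m k hm hmk
    have h2 : (k:ℕ) ≤ m * 2^(k-m) := by
      have hp : k - m < 2 ^ (k - m) := Nat.lt_two_pow_self (n := k - m)
      have h5 : k - m ≤ m * (k - m) := Nat.le_mul_of_pos_left _ hm
      calc k = m + (k - m) := by omega
        _ ≤ m + m * (k - m) := Nat.add_le_add_left h5 m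
        _ = m * (1 + (k - m)) := by ring
        _ ≤ m * 2 ^ (k - m) := Nat.mul_le_mul_left _ (by omega)
    have h2' : (k:ℝ) ≤ (m:ℝ) * 2^(k-m) := by exact_mod_cast h2
    have hm0 : (0:ℝ) < (m:ℝ) := by exact_mod_cast hm
    have h3 : a m ≤ 2^(k-m) * a k := by
      have h4 : (m:ℝ) * a m ≤ (m:ℝ) * (2^(k-m) * a k) := by
        calc (m:ℝ) * a m ≤ (k:ℝ) * a k := h1
          _ ≤ ((m:ℝ) * 2^(k-m)) * a k := mul_le_mul_of_nonneg_right h2' hak.le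
          _ = (m:ℝ) * (2^(k-m) * a k) := by ring
      exact le_of_mul_le_mul_left h4 hm0
    have hpow : (100:ℝ)^k * (1/50)^(k-m) = 2^(k-m) * 100^m := by
      have hsplit : (100:ℝ)^k = 100^m * 100^(k-m) := by
        rw [← pow_add]; congr 1; omega
      rw [hsplit, show (1/50:ℝ) = 2/100 by norm_num, div_pow]
      have h100 : (0:ℝ) < 100^(k-m) := by positivity
      field_simp
    calc a m * (100:ℝ)^m ≤ (2^(k-m) * a k) * 100^m :=
          mul_le_mul_of_nonneg_right h3 (by positivity)
      _ = a k * (2^(k-m) * 100^m) := by ring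
      _ = a k * ((100:ℝ)^k * (1/50)^(k-m)) := by rw [hpow]
      _ = a k * 100^k * (1/50)^(k-m) := by ring
  -- Part A : finite part
  have hA : ∑ j ∈ Finset.range (k-1), ‖g' j z‖ ≤ a k * (100:ℝ)^k * (1/49) := by
    have h1 : ∀ j ∈ Finset.range (k-1),
        ‖g' j z‖ ≤ a k * (100:ℝ)^k * (1/50)^(k-(j+1)) := by
      intro j hj
      rw [Finset.mem_range] at hj
      rw [hnz j]
      have hr_le1 : r ^ (100^(j+1) - 1) ≤ 1 := pow_le_one₀ hr0 hr1.le
      have haj : 0 < a (j+1) := ha_pos _ (by omega)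
      calc a (j+1) * ((100:ℝ)^(j+1) * r^(100^(j+1)-1))
          ≤ a (j+1) * ((100:ℝ)^(j+1) * 1) := by
            apply mul_le_mul_of_nonneg_left _ haj.le
            exact mul_le_mul_of_nonneg_left hr_le1 (by positivity)
        _ = a (j+1) * 100^(j+1) := by ring
        _ ≤ a k * 100^k * (1/50)^(k-(j+1)) := hterm_low (j+1) (by omega) (by omega)
    have h2 : ∑ j ∈ Finset.range (k-1), ((1/50:ℝ))^(k-(j+1)) ≤ 1/49 := by
      have hrefl : ∑ j ∈ Finset.range (k-1), ((1/50:ℝ))^(k-(j+1))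
          = ∑ j ∈ Finset.range (k-1), ((1/50:ℝ))^(j+1) := by
        rw [← Finset.sum_range_reflect (fun i => ((1/50:ℝ))^(i+1)) (k-1)]
        apply Finset.sum_congr rfl
        intro j hj
        rw [Finset.mem_range] at hj
        congr 1
        omega
      rw [hrefl]
      have hsum : Summable (fun j : ℕ => ((1/50:ℝ))^(j+1)) := by
        apply ((summable_geometric_of_lt_one (by norm_num : (0:ℝ) ≤ 1/50)
          (by norm_num)).mul_left (1/50:ℝ)).congr
        intro j
        rw [pow_succ]
        ring
      calc ∑ j ∈ Finset.range (k-1), ((1/50:ℝ))^(j+1)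
          ≤ ∑' j : ℕ, ((1/50:ℝ))^(j+1) :=
            Summable.sum_le_tsum _ (fun j _ => by positivity) hsum
        _ = (1/50) * ∑' j : ℕ, ((1/50:ℝ))^j := by
            rw [← tsum_mul_left]
            exact tsum_congr (fun j => by rw [pow_succ]; ring)
        _ = (1/50) * (1 - 1/50 : ℝ)⁻¹ := by
            rw [tsum_geometric_of_lt_one (by norm_num) (by norm_num)]
        _ = 1/49 := by norm_num
    calc ∑ j ∈ Finset.range (k-1), ‖g' j z‖
        ≤ ∑ j ∈ Finset.range (k-1), a k * (100:ℝ)^k * (1/50)^(k-(j+1)) :=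
          Finset.sum_le_sum h1
      _ = a k * (100:ℝ)^k * ∑ j ∈ Finset.range (k-1), ((1/50:ℝ))^(k-(j+1)) := by
          rw [Finset.mul_sum]
      _ ≤ a k * (100:ℝ)^k * (1/49) :=
          mul_le_mul_of_nonneg_left h2 (by positivity)
  -- Part B : tail terms
  have hBterm : ∀ i : ℕ,
      ‖g' (i+k) z‖ ≤ (a k * (100:ℝ)^k * (100 * Real.exp (-9))) * (1/2)^i := by
    intro i
    rw [hnz (i+k)]
    have h_anti : a (i+k+1) ≤ a k := ha_anti k (i+k+1) hk (by omega)
    have hNpow : x * (100:ℝ)^(i+k+1) = 100^(i+1) := by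
      rw [show (100:ℝ)^(i+k+1) = 100^k * 100^(i+1) by rw [← pow_add]; congr 1; omega]
      rw [← mul_assoc, hxmul, one_mul]
    have hrexp : r ^ (100^(i+k+1) - 1) ≤ Real.exp (1 - 10 * 100^i) := by
      have h2' : (0:ℝ) ≤ 1 - x/10 := by linarith [hx100]
      have h1 : r ^ (100^(i+k+1) - 1) ≤ (1 - x/10) ^ (100^(i+k+1) - 1) :=
        pow_le_pow_left₀ hr0 hz2 _
      have h2 : (1 - x/10) ≤ Real.exp (-(x/10)) := by
        have := Real.add_one_le_exp (-(x/10)); linarith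
      have h3 : (1 - x/10) ^ (100^(i+k+1) - 1) ≤ Real.exp (-(x/10)) ^ (100^(i+k+1) - 1) :=
        pow_le_pow_left₀ h2' h2 _
      have hNc : ((100^(i+k+1) - 1 : ℕ):ℝ) = (100:ℝ)^(i+k+1) - 1 := by
        have h6 : (1:ℕ) ≤ 100^(i+k+1) := Nat.one_le_pow _ _ (by norm_num)
        rw [Nat.cast_sub h6]
        push_cast
        ring
      have h4 : Real.exp (-(x/10)) ^ (100^(i+k+1) - 1)
          = Real.exp (((100^(i+k+1) - 1 : ℕ):ℝ) * (-(x/10))) :=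
        (Real.exp_nat_mul _ _).symm
      have h5 : ((100^(i+k+1) - 1 : ℕ):ℝ) * (-(x/10)) ≤ 1 - 10 * 100^i := by
        rw [hNc]
        have e1 : ((100:ℝ)^(i+k+1) - 1) * (-(x/10)) = -(x * 100^(i+k+1))/10 + x/10 := by
          ring
        rw [e1, hNpow]
        have e2 : (100:ℝ)^(i+1) = 100 * 100^i := by rw [pow_succ]; ring
        rw [e2]
        have : x / 10 ≤ 1 := by linarith [hx100]
        linarith
      calc r ^ (100^(i+k+1) - 1) ≤ (1 - x/10) ^ (100^(i+k+1) - 1) := h1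
        _ ≤ Real.exp (-(x/10)) ^ (100^(i+k+1) - 1) := h3
        _ = Real.exp (((100^(i+k+1) - 1 : ℕ):ℝ) * (-(x/10))) := h4
        _ ≤ Real.exp (1 - 10 * 100^i) := Real.exp_le_exp.2 h5
    have hfinal : (100:ℝ)^(i+k+1) * Real.exp (1 - 10*100^i)
        ≤ 100^k * (100 * Real.exp (-9)) * (1/2)^i := by
      have hsplit : (100:ℝ)^(i+k+1) = 100^k * 100^(i+1) := by
        rw [← pow_add]; congr 1; omega
      rw [hsplit]
      have hkey : (100:ℝ)^(i+1) * Real.exp (1 - 10*100^i)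
          ≤ 100 * Real.exp (-9) * (1/2)^i := by
        have h200 : (200:ℝ)^i ≤ Real.exp (10*100^i - 10) := by
          have hb : (1:ℝ) + (i:ℝ)*99 ≤ 100^i := by
            have := one_add_mul_le_pow (by norm_num : (-2:ℝ) ≤ 99) i
            norm_num at this
            linarith
          calc (200:ℝ)^i ≤ 991^i := pow_le_pow_left₀ (by norm_num) (by norm_num) i
            _ ≤ Real.exp 990 ^ i :=
                pow_le_pow_left₀ (by norm_num)
                  (by linarith [Real.add_one_le_exp (990:ℝ)]) i
            _ = Real.exp ((i:ℝ) * 990) := (Real.exp_nat_mul 990 i).symm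
            _ ≤ Real.exp (10*100^i - 10) := by
                apply Real.exp_le_exp.2
                nlinarith [hb]
        have h1 : (200:ℝ)^i * Real.exp (10 - 10*100^i) ≤ 1 := by
          have he : Real.exp (10*100^i - 10) * Real.exp (10 - 10*100^i) = 1 := by
            rw [← Real.exp_add]
            rw [show (10*(100:ℝ)^i - 10) + (10 - 10*100^i) = 0 by ring]
            exact Real.exp_zero
          calc (200:ℝ)^i * Real.exp (10 - 10*100^i)
              ≤ Real.exp (10*100^i - 10) * Real.exp (10 - 10*100^i) :=
                mul_le_mul_of_nonneg_right h200 (Real.exp_pos _).le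
            _ = 1 := he
        have hkey2 : (100:ℝ)^(i+1) * Real.exp (1 - 10*100^i)
            = (100 * Real.exp (-9) * (1/2)^i) * ((200:ℝ)^i * Real.exp (10 - 10*100^i)) := by
          have e1 : ((1/2:ℝ))^i * (200:ℝ)^i = 100^i := by rw [← mul_pow]; norm_num
          have e2 : Real.exp (-9) * Real.exp (10 - 10*100^i) = Real.exp (1 - 10*100^i) := by
            rw [← Real.exp_add]
            congr 1
            ring
          calc (100:ℝ)^(i+1) * Real.exp (1 - 10*100^i)
              = 100 * 100^i * Real.exp (1 - 10*100^i) := by rw [pow_succ]; ring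
            _ = 100 * ((1/2)^i * 200^i) * (Real.exp (-9) * Real.exp (10 - 10*100^i)) := by
                rw [e1, e2]
            _ = (100 * Real.exp (-9) * (1/2)^i) * ((200:ℝ)^i * Real.exp (10 - 10*100^i)) := by
                ring
        rw [hkey2]
        exact mul_le_of_le_one_right (by positivity) h1
      calc (100:ℝ)^k * 100^(i+1) * Real.exp (1 - 10*100^i)
          = 100^k * (100^(i+1) * Real.exp (1 - 10*100^i)) := by ring
        _ ≤ 100^k * (100 * Real.exp (-9) * (1/2)^i) :=
            mul_le_mul_of_nonneg_left hkey (by positivity)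
        _ = 100^k * (100 * Real.exp (-9)) * (1/2)^i := by ring
    calc a (i+k+1) * ((100:ℝ)^(i+k+1) * r^(100^(i+k+1) - 1))
        ≤ a k * ((100:ℝ)^(i+k+1) * r^(100^(i+k+1)-1)) :=
          mul_le_mul_of_nonneg_right h_anti (by positivity)
      _ ≤ a k * ((100:ℝ)^(i+k+1) * Real.exp (1-10*100^i)) := by
          apply mul_le_mul_of_nonneg_left _ hak.le
          exact mul_le_mul_of_nonneg_left hrexp (by positivity)
      _ ≤ a k * ((100:ℝ)^k * (100*Real.exp (-9)) * (1/2)^i) :=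
          mul_le_mul_of_nonneg_left hfinal hak.le
      _ = (a k * (100:ℝ)^k * (100*Real.exp (-9))) * (1/2)^i := by ring
  have hB : ∑' i, ‖g' (i+k) z‖ ≤ a k * (100:ℝ)^k * (200 * Real.exp (-9)) := by
    have hsum_tail : Summable (fun i => ‖g' (i+k) z‖) := (summable_nat_add_iff k).2 hsn
    have hgeom : Summable (fun i : ℕ =>
        (a k * (100:ℝ)^k * (100*Real.exp (-9))) * (1/2:ℝ)^i) :=
      (summable_geometric_of_lt_one (by norm_num) (by norm_num)).mul_left _
    calc ∑' i, ‖g' (i+k) z‖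
        ≤ ∑' i : ℕ, (a k * (100:ℝ)^k * (100*Real.exp (-9))) * (1/2:ℝ)^i :=
          Summable.tsum_le_tsum hBterm hsum_tail hgeom
      _ = (a k * (100:ℝ)^k * (100*Real.exp (-9))) * (1 - 1/2 : ℝ)⁻¹ := by
          rw [tsum_mul_left, tsum_geometric_of_lt_one (by norm_num) (by norm_num)]
      _ = a k * (100:ℝ)^k * (200 * Real.exp (-9)) := by
          rw [show ((1:ℝ) - 1/2)⁻¹ = 2 by norm_num]
          ring
  -- assembly
  classical
  set φ : ℕ → ℝ := fun j => if j = k-1 then 0 else ‖g' j z‖ with hφ_def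
  have hφ_nonneg : ∀ j, 0 ≤ φ j := by
    intro j
    rw [hφ_def]
    dsimp only
    split
    · exact le_rfl
    · exact norm_nonneg _
  have hφ_le : ∀ j, φ j ≤ ‖g' j z‖ := by
    intro j
    rw [hφ_def]
    dsimp only
    split
    · exact norm_nonneg _
    · exact le_rfl
  have hφ_sum : Summable φ := Summable.of_nonneg_of_le hφ_nonneg hφ_le hsn
  have hsplit := Summable.tsum_eq_add_tsum_ite hsg (k-1)
  have hE_norm : ‖∑' j, (if j = k-1 then (0:ℂ) else g' j z)‖
      ≤ a k * (100:ℝ)^k * (1/49) + a k * (100:ℝ)^k * (200*Real.exp (-9)) := by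
    have hits : Summable (fun j => ‖if j = k-1 then (0:ℂ) else g' j z‖) := by
      apply hφ_sum.congr
      intro j
      rw [hφ_def]
      dsimp only
      split <;> simp
    calc ‖∑' j, (if j = k-1 then (0:ℂ) else g' j z)‖
        ≤ ∑' j, ‖if j = k-1 then (0:ℂ) else g' j z‖ := norm_tsum_le_tsum_norm hits
      _ = ∑' j, φ j := by
          apply tsum_congr
          intro j
          rw [hφ_def]
          dsimp only
          split <;> simp
      _ = ∑ j ∈ Finset.range k, φ j + ∑' i, φ (i + k) :=
          (Summable.sum_add_tsum_nat_add k hφ_sum).symm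
      _ ≤ a k * (100:ℝ)^k * (1/49) + a k * (100:ℝ)^k * (200*Real.exp (-9)) := by
          apply add_le_add
          · have hsum_eq : ∑ j ∈ Finset.range k, φ j
                = ∑ j ∈ Finset.range (k-1), φ j + φ (k-1) := by
              conv_lhs => rw [show k = (k-1)+1 by omega, Finset.sum_range_succ]
            rw [hsum_eq]
            have hφ_k1 : φ (k-1) = 0 := by rw [hφ_def]; simp
            rw [hφ_k1, add_zero]
            calc ∑ j ∈ Finset.range (k-1), φ j
                ≤ ∑ j ∈ Finset.range (k-1), ‖g' j z‖ :=
                  Finset.sum_le_sum (fun j _ => hφ_le j)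
              _ ≤ a k * (100:ℝ)^k * (1/49) := hA
          · have heq : ∀ i, φ (i+k) = ‖g' (i+k) z‖ := by
              intro i
              rw [hφ_def]
              dsimp only
              rw [if_neg (by omega)]
            calc ∑' i, φ (i+k) = ∑' i, ‖g' (i+k) z‖ := tsum_congr heq
              _ ≤ a k * (100:ℝ)^k * (200*Real.exp (-9)) := hB
  have hT : ‖g' (k-1) z‖
      ≤ ‖∑' j, g' j z‖ + ‖∑' j, (if j = k-1 then (0:ℂ) else g' j z)‖ := by
    calc ‖g' (k-1) z‖
        = ‖(∑' j, g' j z) - ∑' j, (if j = k-1 then (0:ℂ) else g' j z)‖ := by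
          rw [hsplit]
          congr 1
          ring
      _ ≤ ‖∑' j, g' j z‖ + ‖∑' j, (if j = k-1 then (0:ℂ) else g' j z)‖ :=
          norm_sub_le _ _
  -- numeric conclusion
  have hexp9 : Real.exp (-9) ≤ 14/100000 := by
    rw [Real.exp_neg]
    have h1 : (2.7:ℝ)^(9:ℕ) ≤ Real.exp 9 := by
      have h2 : Real.exp 9 = Real.exp 1 ^ (9:ℕ) := by
        rw [← Real.exp_nat_mul]
        norm_num
      rw [h2]
      exact pow_le_pow_left₀ (by norm_num) (by linarith [Real.exp_one_gt_d9]) 9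
    calc (Real.exp 9)⁻¹ ≤ ((2.7:ℝ)^(9:ℕ))⁻¹ := inv_anti₀ (by norm_num) h1
      _ ≤ 14/100000 := by norm_num
  have hP : (0:ℝ) < a k * (100:ℝ)^k := by positivity
  have hPe := mul_le_mul_of_nonneg_left hexp9 hP.le
  linarith [hT, hmain_lb, hE_norm, hPe]
end

section
/- Let q = 100, let (a_j)_{j≥1} be a non-increasing sequence of positive real numbers, and let k ≥ 1 be an integer. Then for every real r with 0 ≤ r ≤ 1 − q^{−(k+1/2)} one has Σ_{j=k+1}^∞ a_j·q^j·r^{q^j} ≤ a_k·q^k/7. -/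
/-- With `q = 100`, let `(a_j)_{j≥1}` be a non-increasing sequence of
positive reals and `k ≥ 1`. Then for every `r` with `0 ≤ r ≤ 1 - q^{-(k+1/2)}` one has
`Σ_{j=k+1}^∞ a_j q^j r^{q^j} ≤ a_k q^k / 7`. -/
theorem tail_estimate
    (a : ℕ → ℝ)
    (hapos : ∀ j, 1 ≤ j → 0 < a j)
    (hadec : ∀ j, 1 ≤ j → a (j + 1) ≤ a j)
    (k : ℕ) (hk : 1 ≤ k)
    (r : ℝ) (hr0 : 0 ≤ r) (hr1 : r ≤ 1 - (100 : ℝ) ^ (-((k : ℝ) + 1 / 2))) :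
    ∑' j : ℕ, a (k + 1 + j) * 100 ^ (k + 1 + j) * r ^ 100 ^ (k + 1 + j) ≤
      a k * 100 ^ k / 7 := by
  set ε : ℝ := (100 : ℝ) ^ (-((k : ℝ) + 1 / 2)) with hεdef
  have hεpos : 0 < ε := Real.rpow_pos_of_pos (by norm_num) _
  have hε1 : ε ≤ 1 := by
    apply Real.rpow_le_one_of_one_le_of_nonpos (by norm_num)
    have : (0:ℝ) ≤ (k:ℝ) := Nat.cast_nonneg k
    linarith
  have hexp10 : (2800 : ℝ) ≤ Real.exp 10 := by
    have h1 : (2.7 : ℝ) ≤ Real.exp 1 := le_of_lt (lt_trans (by norm_num) Real.exp_one_gt_d9)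
    calc (2800 : ℝ) ≤ 2.7 ^ 10 := by norm_num
      _ ≤ Real.exp 1 ^ 10 := pow_le_pow_left₀ (by norm_num) h1 10
      _ = Real.exp 10 := by rw [← Real.exp_nat_mul]; norm_num
  have hexpinv : Real.exp (-10) ≤ 1 / 2800 := by
    rw [Real.exp_neg]
    calc (Real.exp 10)⁻¹ ≤ (2800:ℝ)⁻¹ := by
          apply inv_anti₀ (by norm_num) hexp10
      _ = 1 / 2800 := by norm_num
  set c : ℝ := 100 * Real.exp (-10) with hcdef
  have hcpos : 0 < c := by positivity
  have hc12 : c ≤ 1 / 2 := by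
    rw [hcdef]; nlinarith [Real.exp_pos (-10)]
  have hclt : c < 1 := lt_of_le_of_lt hc12 (by norm_num)
  set C : ℝ := a k * 100 ^ (k + 1) * Real.exp (-10) with hCdef
  have hak : 0 < a k := hapos k hk
  have hCpos : 0 < C := by positivity
  -- monotonicity of a above k
  have hamon : ∀ j : ℕ, a (k + j) ≤ a k := by
    intro j
    induction j with
    | zero => simp
    | succ n ih =>
      have : a (k + n + 1) ≤ a (k + n) := hadec (k + n) (le_add_right hk)
      calc a (k + (n + 1)) = a (k + n + 1) := by ring_nf
        _ ≤ a (k + n) := this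
        _ ≤ a k := ih
  -- key termwise bound
  have key : ∀ j : ℕ, a (k + 1 + j) * 100 ^ (k + 1 + j) * r ^ 100 ^ (k + 1 + j)
      ≤ C * c ^ j := by
    intro j
    have ha : a (k + 1 + j) ≤ a k := by
      have := hamon (1 + j); rwa [← add_assoc] at this
    -- bound on r ^ N
    set N : ℕ := 100 ^ (k + 1 + j) with hNdef
    have hεN : ε * (N : ℝ) = 10 * (100 : ℝ) ^ j := by
      have hN : ((N : ℕ) : ℝ) = (100 : ℝ) ^ ((k + 1 + j : ℕ) : ℝ) := by
        rw [hNdef, Real.rpow_natCast]; push_cast; ring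
      rw [hεdef, hN, ← Real.rpow_add (by norm_num : (0:ℝ) < 100)]
      have h10 : (10:ℝ) = (100:ℝ) ^ (1/2 : ℝ) := by
        rw [show (100:ℝ) = 10 ^ (2:ℕ) by norm_num, ← Real.rpow_natCast (10:ℝ) 2,
          ← Real.rpow_mul (by norm_num)]
        norm_num
      rw [h10, ← Real.rpow_natCast (100:ℝ) j, ← Real.rpow_add (by norm_num : (0:ℝ) < 100)]
      congr 1
      push_cast
      ring
    have hj1 : ((j : ℝ) + 1) ≤ (100 : ℝ) ^ j := by
      have h2 : (j + 1 : ℕ) ≤ 2 ^ j := Nat.lt_two_pow_self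
      have h2' : ((j : ℝ) + 1) ≤ (2:ℝ) ^ j := by exact_mod_cast h2
      calc ((j:ℝ) + 1) ≤ (2:ℝ) ^ j := h2'
        _ ≤ (100:ℝ) ^ j := pow_le_pow_left₀ (by norm_num) (by norm_num) j
    have hrN : r ^ N ≤ Real.exp (-10) ^ (j + 1) := by
      have h1 : r ^ N ≤ (1 - ε) ^ N := pow_le_pow_left₀ hr0 hr1 N
      have h2 : (1 : ℝ) - ε ≤ Real.exp (-ε) := by
        have := Real.add_one_le_exp (-ε); linarith
      have h3 : (1 - ε) ^ N ≤ Real.exp (-ε) ^ N :=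
        pow_le_pow_left₀ (by linarith) h2 N
      have h4 : Real.exp (-ε) ^ N = Real.exp (-(ε * (N : ℝ))) := by
        rw [← Real.exp_nat_mul]; congr 1; ring
      have h5 : Real.exp (-(ε * (N : ℝ))) ≤ Real.exp (-(10 * ((j:ℝ) + 1))) := by
        apply Real.exp_le_exp.mpr
        rw [hεN]
        nlinarith
      have h6 : Real.exp (-(10 * ((j:ℝ) + 1))) = Real.exp (-10) ^ (j + 1) := by
        rw [← Real.exp_nat_mul]; congr 1; push_cast; ring
      calc r ^ N ≤ (1 - ε) ^ N := h1
        _ ≤ Real.exp (-ε) ^ N := h3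
        _ = Real.exp (-(ε * (N : ℝ))) := h4
        _ ≤ Real.exp (-(10 * ((j:ℝ) + 1))) := h5
        _ = Real.exp (-10) ^ (j + 1) := h6
    have hrNnn : (0:ℝ) ≤ r ^ N := pow_nonneg hr0 N
    calc a (k + 1 + j) * 100 ^ (k + 1 + j) * r ^ N
        ≤ a k * 100 ^ (k + 1 + j) * Real.exp (-10) ^ (j + 1) := by
          apply mul_le_mul (mul_le_mul_of_nonneg_right ha (by positivity)) hrN hrNnn
          positivity
      _ = C * c ^ j := by
          rw [hCdef, hcdef, pow_add (100:ℝ) (k+1) j, pow_succ, mul_pow]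
          ring
  -- summability
  have htnn : ∀ j : ℕ, 0 ≤ a (k + 1 + j) * 100 ^ (k + 1 + j) * r ^ 100 ^ (k + 1 + j) := by
    intro j
    have := hapos (k + 1 + j) (by omega)
    positivity
  have hbsum : Summable (fun j : ℕ => C * c ^ j) :=
    (summable_geometric_of_lt_one hcpos.le hclt).mul_left C
  have htsum : Summable (fun j : ℕ =>
      a (k + 1 + j) * 100 ^ (k + 1 + j) * r ^ 100 ^ (k + 1 + j)) :=
    Summable.of_nonneg_of_le htnn key hbsum
  have hbval : ∑' j : ℕ, C * c ^ j = C * (1 - c)⁻¹ := by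
    rw [tsum_mul_left, tsum_geometric_of_lt_one hcpos.le hclt]
  have hinv2 : (1 - c)⁻¹ ≤ 2 := by
    have h12 : (1:ℝ)/2 ≤ 1 - c := by linarith
    calc (1 - c)⁻¹ ≤ ((1:ℝ)/2)⁻¹ := inv_anti₀ (by norm_num) h12
      _ = 2 := by norm_num
  calc ∑' j : ℕ, a (k + 1 + j) * 100 ^ (k + 1 + j) * r ^ 100 ^ (k + 1 + j)
      ≤ ∑' j : ℕ, C * c ^ j := Summable.tsum_le_tsum key htsum hbsum
    _ = C * (1 - c)⁻¹ := hbval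
    _ ≤ C * 2 := by
        apply mul_le_mul_of_nonneg_left hinv2 hCpos.le
    _ ≤ (a k * 100 ^ (k + 1) * (1/2800)) * 2 := by
        rw [hCdef]
        apply mul_le_mul_of_nonneg_right _ (by norm_num)
        apply mul_le_mul_of_nonneg_left hexpinv (by positivity)
    _ = a k * 100 ^ k / 14 := by rw [pow_succ]; ring
    _ ≤ a k * 100 ^ k / 7 := by
        have h : (0:ℝ) ≤ a k * 100 ^ k := by positivity
        linarith
end

section
/- Let h ≥ 8 be a real number. Let (x_k)_{k≥0} be an increasing sequence of negative reals, set t_k = exp(x_k) ∈ (0,1), let (β_k)_{k≥1} be an increasing sequence of positive reals and (a_k)_{k≥1} positive reals, and set ℓ_k(x) = log a_k + β_k·x for x < 0. Assume: (1) ℓ_{k+1}(x) ≥ ℓ_k(x) + h for all x ∈ [x_{k+1}, 0) and all k ≥ 1; (2) ℓ_{k+1}(x) ≥ ℓ_k(x) for all x ∈ [x_k, x_{k+1}) and all k ≥ 1; (3) a_m·r^{β_m} ≤ a_k·r^{β_k}·e^{−h(m−k−1)} for all m > k and r ∈ [t_{k−1}, t_k]. Let (ν_k)_{k≥1} be a non-increasing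 sequence of positive reals with ν_k ≥ 1/k for all k and ν_m ≤ (k/m)·ν_k whenever m ≤ k. Then for every integer k ≥ 1 and every r ∈ [t_{k−1}, t_k]: Σ_{m≥1, |m−k|≥2} ν_m·a_m·r^{β_m} ≤ (1/2)·ν_k·a_k·r^{β_k}. -/
/-!
Put `y = log r ∈ [x (k-1), x k]`, so that `a m * r ^ β m = exp (ℓ m y)`. For `m ≤ k - 2`,
chaining (1) from `m` up to `k - 1` and then (2) (or (1) if `y = x k`) gives
`ℓ m y + h (k - 1 - m) ≤ ℓ k y`; for `m ≥ k + 2` the same decay is (3). With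
`ν m ≤ (|m - k| + 1) ν k`, the term of index `m` with `d = |m - k| ≥ 2` is at most
`(d + 1) e^{-h(d-1)} ≤ e^{-6} e^{-(d-2)}` times `ν k a k r^{β k}`, and the two geometric
tails, one on each side of `k`, add up to less than `1/2`.
-/

open Real

lemma add_mul_sub_le_of_add_le_succ {u : ℕ → ℝ} {c : ℝ} {i j : ℕ} (hij : i ≤ j)
    (hu : ∀ n, i ≤ n → n < j → u n + c ≤ u (n + 1)) : u i + c * ((j : ℝ) - i) ≤ u j := by
  induction j, hij using Nat.le_induction with
  | base => simp
  | succ j hij ih =>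
    have hstep := hu j hij (Nat.lt_succ_self j)
    have hchain := ih fun n hin hnj => hu n hin (by omega)
    push_cast
    linarith

lemma line_add_mul_le_line_succ {ℓ : ℕ → ℝ → ℝ} {x : ℕ → ℝ} {h : ℝ} (hh : 0 ≤ h)
    (hx : Monotone x) (hxneg : ∀ k, x k < 0)
    (h1 : ∀ k : ℕ, 1 ≤ k → ∀ y : ℝ, x (k + 1) ≤ y → y < 0 → ℓ k y + h ≤ ℓ (k + 1) y)
    (h2 : ∀ k : ℕ, 1 ≤ k → ∀ y : ℝ, x k ≤ y → y < x (k + 1) → ℓ k y ≤ ℓ (k + 1) y)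
    {m k : ℕ} (hm : 1 ≤ m) (hmk : m ≤ k) {y : ℝ} (hy₁ : x k ≤ y) (hy₂ : y ≤ x (k + 1)) :
    ℓ m y + h * ((k : ℝ) - m) ≤ ℓ (k + 1) y := by
  have hy₀ : y < 0 := hy₂.trans_lt (hxneg _)
  have chain : ℓ m y + h * ((k : ℝ) - m) ≤ ℓ k y :=
    add_mul_sub_le_of_add_le_succ hmk fun n hn hnk =>
      h1 n (hm.trans hn) y ((hx hnk).trans hy₁) hy₀
  have last : ℓ k y ≤ ℓ (k + 1) y := by
    rcases hy₂.lt_or_eq with hy₂ | rfl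
    · exact h2 k (hm.trans hmk) y hy₁ hy₂
    · linarith [h1 k (hm.trans hmk) _ le_rfl hy₀]
  linarith

lemma mul_rpow_eq_exp {a r : ℝ} (ha : 0 < a) (hr : 0 < r) (β : ℝ) :
    a * r ^ β = exp (log a + β * log r) := by
  rw [exp_add, exp_log ha, rpow_def_of_pos hr, mul_comm (log r)]

lemma mul_rpow_le_mul_rpow_mul_exp_of_add_two_le {h : ℝ} (hh : 0 ≤ h) {x : ℕ → ℝ}
    (hx : Monotone x) (hxneg : ∀ k, x k < 0) {β a : ℕ → ℝ} (hapos : ∀ k : ℕ, 1 ≤ k → 0 < a k)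
    {ℓ : ℕ → ℝ → ℝ} (hl : ∀ k : ℕ, ∀ y : ℝ, ℓ k y = log (a k) + β k * y)
    (h1 : ∀ k : ℕ, 1 ≤ k → ∀ y : ℝ, x (k + 1) ≤ y → y < 0 → ℓ k y + h ≤ ℓ (k + 1) y)
    (h2 : ∀ k : ℕ, 1 ≤ k → ∀ y : ℝ, x k ≤ y → y < x (k + 1) → ℓ k y ≤ ℓ (k + 1) y)
    {m k : ℕ} (hm : 1 ≤ m) (hmk : m + 2 ≤ k) {r : ℝ} (hr₁ : exp (x (k - 1)) ≤ r)
    (hr₂ : r ≤ exp (x k)) :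
    a m * r ^ β m ≤ a k * r ^ β k * exp (-h * ((k : ℝ) - m - 1)) := by
  obtain ⟨n, rfl⟩ : ∃ n, k = n + 1 := ⟨k - 1, by omega⟩
  rw [Nat.add_sub_cancel] at hr₁
  have hr : 0 < r := (exp_pos _).trans_le hr₁
  have hline := line_add_mul_le_line_succ hh hx hxneg h1 h2 hm (by omega : m ≤ n)
    ((le_log_iff_exp_le hr).2 hr₁) ((log_le_iff_le_exp hr).2 hr₂)
  rw [mul_rpow_eq_exp (hapos m hm) hr, mul_rpow_eq_exp (hapos _ (by omega)) hr, ← exp_add,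
    exp_le_exp, ← hl, ← hl]
  push_cast
  linarith

lemma mul_rpow_le_mul_rpow_mul_exp_natAbs {h : ℝ} (hh : 0 ≤ h) {x : ℕ → ℝ}
    (hx : Monotone x) (hxneg : ∀ k, x k < 0) {t : ℕ → ℝ} (ht : ∀ k, t k = exp (x k))
    {β a : ℕ → ℝ} (hapos : ∀ k : ℕ, 1 ≤ k → 0 < a k)
    {ℓ : ℕ → ℝ → ℝ} (hl : ∀ k : ℕ, ∀ y : ℝ, ℓ k y = log (a k) + β k * y)
    (h1 : ∀ k : ℕ, 1 ≤ k → ∀ y : ℝ, x (k + 1) ≤ y → y < 0 → ℓ k y + h ≤ ℓ (k + 1) y)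
    (h2 : ∀ k : ℕ, 1 ≤ k → ∀ y : ℝ, x k ≤ y → y < x (k + 1) → ℓ k y ≤ ℓ (k + 1) y)
    (h3 : ∀ m k : ℕ, 1 ≤ k → k < m → ∀ r : ℝ, t (k - 1) ≤ r → r ≤ t k →
      a m * r ^ β m ≤ a k * r ^ β k * exp (-h * ((m : ℝ) - (k : ℝ) - 1)))
    {m k : ℕ} (hm : 1 ≤ m) (hk : 1 ≤ k) (hmk : 2 ≤ ((m : ℤ) - k).natAbs)
    {r : ℝ} (hr₁ : t (k - 1) ≤ r) (hr₂ : r ≤ t k) :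
    a m * r ^ β m ≤ a k * r ^ β k * exp (-h * ((((m : ℤ) - k).natAbs : ℝ) - 1)) := by
  rcases lt_or_gt_of_ne (show m ≠ k by omega) with hlt | hgt
  · rw [show ((m : ℤ) - k).natAbs = k - m by omega, Nat.cast_sub hlt.le]
    rw [ht] at hr₁ hr₂
    exact mul_rpow_le_mul_rpow_mul_exp_of_add_two_le hh hx hxneg hapos hl h1 h2 hm (by omega) hr₁ hr₂
  · rw [show ((m : ℤ) - k).natAbs = m - k by omega, Nat.cast_sub hgt.le]
    exact h3 m k hk hgt r hr₁ hr₂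

lemma le_natAbs_add_one_mul {ν : ℕ → ℝ} (hνdec : ∀ k : ℕ, 1 ≤ k → ν (k + 1) ≤ ν k)
    (hνratio : ∀ m k : ℕ, 1 ≤ m → m ≤ k → ν m ≤ (k : ℝ) / (m : ℝ) * ν k)
    {m k : ℕ} (hm : 1 ≤ m) (hk : 1 ≤ k) (hνk : 0 ≤ ν k) :
    ν m ≤ ((((m : ℤ) - k).natAbs : ℝ) + 1) * ν k := by
  rcases le_total m k with hmk | hkm
  · rw [show ((m : ℤ) - k).natAbs = k - m by omega, Nat.cast_sub hmk]
    have hm' : (1 : ℝ) ≤ m := by exact_mod_cast hm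
    have hmk' : (m : ℝ) ≤ k := by exact_mod_cast hmk
    -- `k / m ≤ k - m + 1` is `0 ≤ (m - 1) (k - m)`
    have hratio : (k : ℝ) / m ≤ k - m + 1 := by
      rw [div_le_iff₀ (by positivity)]
      nlinarith
    exact (hνratio m k hm hmk).trans (by gcongr)
  · have hanti : ν m ≤ ν k := antitoneOn_nat_Ici_of_succ_le hνdec hk hm hkm
    nlinarith

lemma natCast_add_one_mul_exp_le {h : ℝ} (hh : 8 ≤ h) {d : ℕ} (hd : 2 ≤ d) :
    ((d : ℝ) + 1) * exp (-h * ((d : ℝ) - 1)) ≤ exp (-6) * exp (-1) ^ (d - 2) := by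
  have hd' : (2 : ℝ) ≤ d := by exact_mod_cast hd
  rw [← exp_nat_mul, ← exp_add, Nat.cast_sub hd, Nat.cast_ofNat]
  calc ((d : ℝ) + 1) * exp (-h * ((d : ℝ) - 1))
      ≤ exp d * exp (-h * ((d : ℝ) - 1)) := by gcongr; exact add_one_le_exp _
    _ = exp (d - h * ((d : ℝ) - 1)) := by rw [← exp_add]; ring_nf
    _ ≤ exp (-6 + ((d : ℝ) - 2) * -1) := by
        rw [exp_le_exp]
        nlinarith

lemma mul_le_mul_mul_exp_of_le_of_le {νm νk Am Ak h : ℝ} {d : ℕ} (hh : 8 ≤ h) (hd : 2 ≤ d)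
    (hAm : 0 ≤ Am) (hνk : 0 ≤ νk) (hν : νm ≤ ((d : ℝ) + 1) * νk)
    (hA : Am ≤ Ak * exp (-h * ((d : ℝ) - 1))) :
    νm * Am ≤ νk * Ak * (exp (-6) * exp (-1) ^ (d - 2)) :=
  calc νm * Am ≤ (((d : ℝ) + 1) * νk) * (Ak * exp (-h * ((d : ℝ) - 1))) := by gcongr
    _ = νk * Ak * (((d : ℝ) + 1) * exp (-h * ((d : ℝ) - 1))) := by ring
    _ ≤ νk * Ak * (exp (-6) * exp (-1) ^ (d - 2)) := by
        have hAk : 0 ≤ Ak := nonneg_of_mul_nonneg_left (hAm.trans hA) (exp_pos _)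
        exact mul_le_mul_of_nonneg_left (natCast_add_one_mul_exp_le hh hd) (by positivity)

lemma tsum_le_of_le_geometric_natAbs {p : ℕ → Prop} {f : ℕ → ℝ} {k j : ℕ} {C q : ℝ}
    (hC : 0 ≤ C) (hq₀ : 0 ≤ q) (hq₁ : q < 1) (hf₀ : ∀ m, p m → 0 ≤ f m)
    (hj : ∀ m, p m → j ≤ ((m : ℤ) - k).natAbs)
    (hf : ∀ m, p m → f m ≤ C * q ^ (((m : ℤ) - k).natAbs - j)) :
    ∑' m : {m // p m}, f m ≤ 2 * C / (1 - q) := by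
  let e : {m // p m} → Bool × ℕ := fun m => (decide (m.1 < k), ((m.1 : ℤ) - k).natAbs - j)
  have he : Function.Injective e := by
    rintro ⟨m₁, hm₁⟩ ⟨m₂, hm₂⟩ h
    simp only [e, Prod.mk.injEq, decide_eq_decide] at h
    have := hj m₁ hm₁
    have := hj m₂ hm₂
    apply Subtype.ext
    dsimp only
    omega
  let g : Bool × ℕ → ℝ := fun b => C * q ^ b.2
  have hgeom := hasSum_geometric_of_lt_one hq₀ hq₁
  have hg : HasSum g (2 * C * (1 - q)⁻¹) := by
    have hC₂ : HasSum (fun _ : Bool => C) (2 * C) := by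
      simpa [two_mul] using hasSum_fintype (fun _ : Bool => C)
    exact hC₂.mul hgeom (hC₂.summable.mul_of_nonneg hgeom.summable (fun _ => hC)
      fun n => pow_nonneg hq₀ n)
  have hfg : ∀ m : {m // p m}, f m ≤ g (e m) := fun m => hf m.1 m.2
  have hfsum : Summable fun m : {m // p m} => f m :=
    (hg.summable.comp_injective he).of_nonneg_of_le (fun m => hf₀ m.1 m.2) hfg
  rw [div_eq_mul_inv]
  exact hasSum_le_inj e he (fun b _ => by positivity) hfg hfsum.hasSum hg

lemma two_mul_exp_neg_six_div_le : 2 * exp (-6) / (1 - exp (-1)) ≤ 1 / 2 := by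
  have hq := exp_neg_one_lt_half
  have h6 : exp (-6) ≤ (1 / 2) ^ 6 := by
    rw [show (-6 : ℝ) = (6 : ℕ) * -1 by norm_num, exp_nat_mul]
    gcongr
  rw [div_le_iff₀ (by linarith)]
  linarith

theorem claim_condition_IV_general
    (h : ℝ) (hh : 8 ≤ h)
    (x : ℕ → ℝ) (hxmono : StrictMono x) (hxneg : ∀ k, x k < 0)
    (t : ℕ → ℝ) (ht : ∀ k, t k = Real.exp (x k))
    (β : ℕ → ℝ)
    (a : ℕ → ℝ) (hapos : ∀ k : ℕ, 1 ≤ k → 0 < a k)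
    (l : ℕ → ℝ → ℝ) (hl : ∀ k : ℕ, ∀ y : ℝ, l k y = Real.log (a k) + β k * y)
    (h1 : ∀ k : ℕ, 1 ≤ k → ∀ y : ℝ, x (k + 1) ≤ y → y < 0 → l k y + h ≤ l (k + 1) y)
    (h2 : ∀ k : ℕ, 1 ≤ k → ∀ y : ℝ, x k ≤ y → y < x (k + 1) → l k y ≤ l (k + 1) y)
    (h3 : ∀ m k : ℕ, 1 ≤ k → k < m → ∀ r : ℝ, t (k - 1) ≤ r → r ≤ t k →
      a m * r ^ β m ≤ a k * r ^ β k * Real.exp (-h * ((m : ℝ) - (k : ℝ) - 1)))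
    (ν : ℕ → ℝ) (hνpos : ∀ k : ℕ, 1 ≤ k → 0 < ν k)
    (hνdec : ∀ k : ℕ, 1 ≤ k → ν (k + 1) ≤ ν k)
    (hνratio : ∀ m k : ℕ, 1 ≤ m → m ≤ k → ν m ≤ (k : ℝ) / (m : ℝ) * ν k) :
    ∀ k : ℕ, 1 ≤ k → ∀ r : ℝ, t (k - 1) ≤ r → r ≤ t k →
      ∑' m : {m : ℕ // 1 ≤ m ∧ 2 ≤ |(m : ℤ) - (k : ℤ)|},
        ν m.1 * a m.1 * r ^ β m.1 ≤ 1 / 2 * (ν k * a k * r ^ β k) := by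
  intro k hk r hr₁ hr₂
  have hr : 0 < r := by rw [ht] at hr₁; exact (exp_pos _).trans_le hr₁
  have hD : 0 ≤ ν k * a k * r ^ β k := by have := hνpos k hk; have := hapos k hk; positivity
  have hd : ∀ m : ℕ, 2 ≤ |(m : ℤ) - k| → 2 ≤ ((m : ℤ) - k).natAbs := fun m hm => by
    rw [Int.abs_eq_natAbs] at hm; omega
  have hterm : ∀ m : ℕ, 1 ≤ m ∧ 2 ≤ |(m : ℤ) - k| → ν m * a m * r ^ β m ≤
      ν k * a k * r ^ β k * exp (-6) * exp (-1) ^ (((m : ℤ) - k).natAbs - 2) := by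
    rintro m ⟨hm, hmk⟩
    have hAm : 0 ≤ a m * r ^ β m := by have := hapos m hm; positivity
    simpa only [mul_assoc] using mul_le_mul_mul_exp_of_le_of_le hh (hd m hmk) hAm
      (hνpos k hk).le (le_natAbs_add_one_mul hνdec hνratio hm hk (hνpos k hk).le)
      (mul_rpow_le_mul_rpow_mul_exp_natAbs (by linarith) hxmono.monotone hxneg ht hapos hl
        h1 h2 h3 hm hk (hd m hmk) hr₁ hr₂)
  calc _ ≤ 2 * (ν k * a k * r ^ β k * exp (-6)) / (1 - exp (-1)) :=
        tsum_le_of_le_geometric_natAbs (by positivity) (exp_pos _).le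
          (exp_lt_one_iff.2 (by norm_num))
          (fun m hm => by have := hνpos m hm.1; have := hapos m hm.1; positivity)
          (fun m hm => hd m hm.2) hterm
    _ = ν k * a k * r ^ β k * (2 * exp (-6) / (1 - exp (-1))) := by ring
    _ ≤ ν k * a k * r ^ β k * (1 / 2) := mul_le_mul_of_nonneg_left two_mul_exp_neg_six_div_le hD
    _ = 1 / 2 * (ν k * a k * r ^ β k) := mul_comm _ _

/-- (The Claim, condition (IV), in the proof of Theorem 1.1.) Let
`h ≥ 8`, `(x_k)_{k≥0}` increasing negative reals, `t_k = exp x_k`, `(β_k)_{k≥1}`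
increasing positive, `(a_k)_{k≥1}` positive, `ℓ_k(x) = log a_k + β_k x`. Assume
(1) `ℓ_{k+1}(x) ≥ ℓ_k(x) + h` on `[x_{k+1},0)`, (2) `ℓ_{k+1}(x) ≥ ℓ_k(x)` on
`[x_k, x_{k+1})`, (3) `a_m r^{β_m} ≤ a_k r^{β_k} e^{-h(m-k-1)}` for `m > k` and
`r ∈ [t_{k-1}, t_k]`. Let `(ν_k)` be non-increasing positive with `ν_k ≥ 1/k` and
`ν_m ≤ (k/m) ν_k` for `m ≤ k`. Then for every `k ≥ 1` and `r ∈ [t_{k-1}, t_k]`: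
`Σ_{m≥1, |m-k|≥2} ν_m a_m r^{β_m} ≤ (1/2) ν_k a_k r^{β_k}`. -/
theorem claim_condition_IV
    (h : ℝ) (hh : 8 ≤ h)
    (x : ℕ → ℝ) (hxmono : StrictMono x) (hxneg : ∀ k, x k < 0)
    (t : ℕ → ℝ) (ht : ∀ k, t k = Real.exp (x k))
    (β : ℕ → ℝ) (hβmono : ∀ k : ℕ, 1 ≤ k → β k < β (k + 1))
    (hβpos : ∀ k : ℕ, 1 ≤ k → 0 < β k)
    (a : ℕ → ℝ) (hapos : ∀ k : ℕ, 1 ≤ k → 0 < a k)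
    (l : ℕ → ℝ → ℝ) (hl : ∀ k : ℕ, ∀ y : ℝ, l k y = Real.log (a k) + β k * y)
    (h1 : ∀ k : ℕ, 1 ≤ k → ∀ y : ℝ, x (k + 1) ≤ y → y < 0 → l k y + h ≤ l (k + 1) y)
    (h2 : ∀ k : ℕ, 1 ≤ k → ∀ y : ℝ, x k ≤ y → y < x (k + 1) → l k y ≤ l (k + 1) y)
    (h3 : ∀ m k : ℕ, 1 ≤ k → k < m → ∀ r : ℝ, t (k - 1) ≤ r → r ≤ t k →
      a m * r ^ β m ≤ a k * r ^ β k * Real.exp (-h * ((m : ℝ) - (k : ℝ) - 1)))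
    (ν : ℕ → ℝ) (hνpos : ∀ k : ℕ, 1 ≤ k → 0 < ν k)
    (hνdec : ∀ k : ℕ, 1 ≤ k → ν (k + 1) ≤ ν k)
    (hνk : ∀ k : ℕ, 1 ≤ k → 1 / (k : ℝ) ≤ ν k)
    (hνratio : ∀ m k : ℕ, 1 ≤ m → m ≤ k → ν m ≤ (k : ℝ) / (m : ℝ) * ν k) :
    ∀ k : ℕ, 1 ≤ k → ∀ r : ℝ, t (k - 1) ≤ r → r ≤ t k →
      ∑' m : {m : ℕ // 1 ≤ m ∧ 2 ≤ |(m : ℤ) - (k : ℤ)|},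
        ν m.1 * a m.1 * r ^ β m.1 ≤ 1 / 2 * (ν k * a k * r ^ β k) :=
  claim_condition_IV_general h hh x hxmono hxneg t ht β a hapos l hl h1 h2 h3 ν hνpos hνdec hνratio
end

section
/- Let f(z) = Σ_{j=1}^∞ (1/j)·z^{100^j}, an analytic function on 𝔻. Then for every integer k ≥ 1 and every z ∈ 𝔻 with 1 − 100^{−k} ≤ |z| ≤ 1 − 100^{−(k+1/2)} one has |f′(z)| ≥ 100^k/(8k). -/
open Finset

private lemma lacunary_low_sum_aux (n : ℕ) :
    ∑ j ∈ Finset.range n, (100:ℝ)^(j+1)/((j:ℝ)+1) ≤ 100^(n+1)/(24*((n:ℝ)+1)) := by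
  induction n with
  | zero => simp; norm_num
  | succ m ih =>
    have hm : (0:ℝ) < (m:ℝ)+1 := by positivity
    have hm2 : (0:ℝ) < (m:ℝ)+2 := by positivity
    have key : (25:ℝ)/(24*((m:ℝ)+1)) ≤ 100/(24*((m:ℝ)+2)) := by
      rw [div_le_div_iff₀ (by positivity) (by positivity)]
      nlinarith
    have hP : (0:ℝ) ≤ (100:ℝ)^(m+1) := by positivity
    calc ∑ j ∈ Finset.range (m+1), (100:ℝ)^(j+1)/((j:ℝ)+1)
        = (∑ j ∈ Finset.range m, (100:ℝ)^(j+1)/((j:ℝ)+1)) + 100^(m+1)/((m:ℝ)+1) :=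
          Finset.sum_range_succ _ m
      _ ≤ 100^(m+1)/(24*((m:ℝ)+1)) + 100^(m+1)/((m:ℝ)+1) := by linarith
      _ = (100:ℝ)^(m+1) * (25/(24*((m:ℝ)+1))) := by field_simp; ring
      _ ≤ (100:ℝ)^(m+1) * (100/(24*((m:ℝ)+2))) := by
          exact mul_le_mul_of_nonneg_left key hP
      _ = 100^(m+1+1)/(24*((↑(m+1):ℝ)+1)) := by push_cast; field_simp; ring

private lemma lacunary_base_pow_bound (n : ℕ) (hn : 100 ≤ n) :
    (1/3 : ℝ) ≤ (1 - (n:ℝ)⁻¹)^n := by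
  have hn0 : (0:ℝ) < n := by exact_mod_cast Nat.lt_of_lt_of_le (by norm_num) hn
  have hinv : (n:ℝ)⁻¹ ≤ 1/100 := by
    rw [inv_le_iff_one_le_mul₀ hn0]
    have : (100:ℝ) ≤ n := by exact_mod_cast hn
    linarith
  have hinv0 : 0 < (n:ℝ)⁻¹ := by positivity
  set x : ℝ := 1 - (n:ℝ)⁻¹ with hx
  have hx0 : 0 ≤ x := by rw [hx]; linarith
  have h1 : 1 - (n:ℝ)⁻¹ ≤ (1 - ((n:ℝ)⁻¹)^2)^n := by
    have := one_add_mul_le_pow (a := -((n:ℝ)⁻¹)^2) (by nlinarith) n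
    have hnn : (n:ℝ) * ((n:ℝ)⁻¹)^2 = (n:ℝ)⁻¹ := by
      rw [sq, ← mul_assoc, mul_inv_cancel₀ (ne_of_gt hn0), one_mul]
    calc 1 - (n:ℝ)⁻¹ = 1 + (n:ℝ) * (-((n:ℝ)⁻¹)^2) := by rw [mul_neg, hnn]; ring
      _ ≤ (1 + -((n:ℝ)⁻¹)^2)^n := this
      _ = (1 - ((n:ℝ)⁻¹)^2)^n := by ring_nf
  have h2 : (1 + (n:ℝ)⁻¹)^n ≤ Real.exp 1 := by
    have hle : (1 + (n:ℝ)⁻¹) ≤ Real.exp ((n:ℝ)⁻¹) := by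
      have := Real.add_one_le_exp ((n:ℝ)⁻¹); linarith
    calc (1 + (n:ℝ)⁻¹)^n ≤ (Real.exp ((n:ℝ)⁻¹))^n := by
          exact pow_le_pow_left₀ (by positivity) hle n
      _ = Real.exp ((n:ℝ) * (n:ℝ)⁻¹) := (Real.exp_nat_mul _ n).symm
      _ = Real.exp 1 := by rw [mul_inv_cancel₀ (ne_of_gt hn0)]
  have hmul : x^n * (1 + (n:ℝ)⁻¹)^n = (1 - ((n:ℝ)⁻¹)^2)^n := by
    rw [← mul_pow]; congr 1; rw [hx]; ring
  have hxn0 : 0 ≤ x^n := pow_nonneg hx0 n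
  have h3 : (99/100 : ℝ) ≤ x^n * Real.exp 1 := by
    calc (99/100:ℝ) ≤ 1 - (n:ℝ)⁻¹ := by linarith
      _ ≤ (1 - ((n:ℝ)⁻¹)^2)^n := h1
      _ = x^n * (1+(n:ℝ)⁻¹)^n := hmul.symm
      _ ≤ x^n * Real.exp 1 := mul_le_mul_of_nonneg_left h2 hxn0
  have hexp : Real.exp 1 ≤ 2.7182818286 := Real.exp_one_lt_d9.le
  nlinarith [Real.exp_pos 1]

private lemma lacunary_abs_term (j : ℕ) (y : ℂ) :
    ‖(1/((j:ℂ)+1)) * ((((100:ℕ)^(j+1):ℕ)):ℂ) * y ^ (100^(j+1) - 1)‖ =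
      (100:ℝ)^(j+1)/((j:ℝ)+1) * ‖y‖ ^ (100^(j+1)-1) := by
  have hcast : ((j:ℂ)+1) = ((j+1:ℕ):ℂ) := by push_cast; ring
  rw [norm_mul, norm_mul, norm_pow, norm_div, norm_one, hcast, Complex.norm_natCast,
    Complex.norm_natCast]
  push_cast
  ring

set_option maxHeartbeats 1000000 in
/-- Let `f(z) = Σ_{j≥1} (1/j)·z^{100^j}` on the unit disc. Then for
every integer `k ≥ 1` and every `z` with `1 - 100^{-k} ≤ |z| ≤ 1 - 100^{-(k+1/2)}` one
has `|f'(z)| ≥ 100^k/(8k)`. -/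
theorem lacunary_vmoa_derivative_lower_bound
    (f : ℂ → ℂ)
    (hf : ∀ z ∈ Metric.ball (0:ℂ) 1,
      HasSum (fun j : ℕ => (1 / ((j : ℂ) + 1)) * z ^ (100 ^ (j + 1))) (f z)) :
    ∀ k : ℕ, 1 ≤ k → ∀ z : ℂ,
      1 - (100 : ℝ) ^ (-(k : ℝ)) ≤ ‖z‖ →
      ‖z‖ ≤ 1 - (100 : ℝ) ^ (-((k : ℝ) + 1 / 2)) →
      (100 : ℝ) ^ k / (8 * (k : ℝ)) ≤ ‖deriv f z‖ := by
  intro k hk z hz1 hz2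
  have hk0 : (0:ℝ) < k := by exact_mod_cast hk
  have hP : (0:ℝ) < (100:ℝ)^k := by positivity
  -- rewrite the rpow bounds
  have e1 : (100:ℝ) ^ (-(k:ℝ)) = ((100:ℝ)^k)⁻¹ := by
    rw [Real.rpow_neg (by norm_num), Real.rpow_natCast]
  have e100 : (100:ℝ) ^ ((1:ℝ)/2) = 10 := by
    rw [show (100:ℝ) = 10^(2:ℕ) by norm_num, ← Real.rpow_natCast 10 2,
      ← Real.rpow_mul (by norm_num)]
    norm_num
  have e2 : (100:ℝ) ^ (-((k:ℝ)+1/2)) = ((100:ℝ)^k)⁻¹ / 10 := by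
    rw [Real.rpow_neg (by norm_num), Real.rpow_add (by norm_num), Real.rpow_natCast, e100]
    rw [mul_inv]
    ring
  rw [e1] at hz1
  rw [e2] at hz2
  set δ : ℝ := ((100:ℝ)^k)⁻¹ / 10 with hδdef
  have hδ0 : 0 < δ := by positivity
  have hδ10 : δ ≤ 1/10 := by
    rw [hδdef]
    have : ((100:ℝ)^k)⁻¹ ≤ 1 := by
      rw [inv_le_one_iff₀]; right; exact one_le_pow₀ (by norm_num)
    linarith
  have hz_lt1 : ‖z‖ < 1 := lt_of_le_of_lt hz2 (by linarith)
  have hz0 : (0:ℝ) ≤ ‖z‖ := norm_nonneg _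
  have hzball : z ∈ Metric.ball (0:ℂ) 1 := by
    simp [Metric.mem_ball, Complex.dist_eq, hz_lt1]
  -- setup for differentiation of the series
  set R : ℝ := (‖z‖ + 1)/2 with hRdef
  have hzR : ‖z‖ < R := by rw [hRdef]; linarith
  have hR1 : R < 1 := by rw [hRdef]; linarith
  have hR0 : 0 ≤ R := by positivity
  set g : ℕ → ℂ → ℂ := fun j w => (1/((j:ℂ)+1)) * w ^ (100^(j+1)) with hgdef
  set g' : ℕ → ℂ → ℂ :=
    fun j w => (1/((j:ℂ)+1)) * ((((100:ℕ)^(j+1):ℕ)):ℂ) * w ^ (100^(j+1) - 1) with hg'def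
  set u : ℕ → ℝ := fun j => (100:ℝ)^(j+1) * R^(100^(j+1) - 1) with hudef
  have habs : ∀ j (y : ℂ), ‖g' j y‖
      = (100:ℝ)^(j+1)/((j:ℝ)+1) * ‖y‖ ^ (100^(j+1)-1) := by
    intro j y
    exact lacunary_abs_term j y
  have hbound : ∀ j : ℕ, ∀ y : ℂ, ‖y‖ ≤ R → ‖g' j y‖ ≤ u j := by
    intro j y hy
    rw [habs, hudef]
    have h1 : (100:ℝ)^(j+1)/((j:ℝ)+1) ≤ (100:ℝ)^(j+1) := by
      apply div_le_self (by positivity)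
      have : (0:ℝ) ≤ (j:ℝ) := Nat.cast_nonneg j
      linarith
    have h2 : ‖y‖ ^ (100^(j+1)-1) ≤ R^(100^(j+1)-1) :=
      pow_le_pow_left₀ (norm_nonneg _) hy _
    have h3 : (0:ℝ) ≤ ‖y‖ ^ (100^(j+1)-1) := by positivity
    calc (100:ℝ)^(j+1)/((j:ℝ)+1) * ‖y‖ ^ (100^(j+1)-1)
        ≤ (100:ℝ)^(j+1) * ‖y‖ ^ (100^(j+1)-1) := by
          exact mul_le_mul_of_nonneg_right h1 h3
      _ ≤ (100:ℝ)^(j+1) * R^(100^(j+1)-1) := by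
          exact mul_le_mul_of_nonneg_left h2 (by positivity)
  -- summability of u
  have hv : Summable (fun n : ℕ => ((n:ℝ)+1) * R^n) := by
    have h1 : Summable (fun n : ℕ => (n:ℝ)^1 * R^n) :=
      summable_pow_mul_geometric_of_norm_lt_one 1
        (by rwa [Real.norm_eq_abs, abs_of_nonneg hR0])
    have h2 : Summable (fun n : ℕ => R^n) := summable_geometric_of_lt_one hR0 hR1
    have := h1.add h2
    apply this.congr
    intro n
    simp [pow_one]
    ring
  have hinj : Function.Injective (fun j : ℕ => 100^(j+1) - 1) := by
    intro a b h
    simp only at h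
    have ha : 1 ≤ 100^(a+1) := Nat.one_le_pow _ _ (by norm_num)
    have hb : 1 ≤ 100^(b+1) := Nat.one_le_pow _ _ (by norm_num)
    have h' : (100:ℕ)^(a+1) = 100^(b+1) := by omega
    have := Nat.pow_right_injective (show 2 ≤ 100 by norm_num) h'
    omega
  have hu : Summable u := by
    apply (hv.comp_injective hinj).congr
    intro j
    simp only [Function.comp, hudef]
    rw [Nat.cast_sub (Nat.one_le_pow _ _ (by norm_num))]
    push_cast
    ring
  -- the sum of g converges at z
  have hg0 : Summable fun j => g j z := ⟨f z, hf z hzball⟩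
  -- derivative of f
  have hzRball : z ∈ Metric.ball (0:ℂ) R := by
    simp [Metric.mem_ball, Complex.dist_eq, hzR]
  have hds : HasDerivAt (fun w => ∑' j, g j w) (∑' j, g' j z) z := by
    have hgderiv : ∀ n : ℕ, ∀ y ∈ Metric.ball (0:ℂ) R, HasDerivAt (g n) (g' n y) y := by
      intro n y _
      have h1 := (hasDerivAt_pow (100^(n+1)) y).const_mul (1/((n:ℂ)+1))
      have h2 : (1/((n:ℂ)+1)) * ((((100:ℕ)^(n+1):ℕ):ℂ) * y^(100^(n+1)-1)) = g' n y := by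
        simp only [hg'def]; ring
      rw [h2] at h1
      exact h1
    have hgbound : ∀ n : ℕ, ∀ y ∈ Metric.ball (0:ℂ) R, ‖g' n y‖ ≤ u n := by
      intro n y hy
      apply hbound
      have := Metric.mem_ball.1 hy
      rw [Complex.dist_eq, sub_zero] at this
      exact this.le
    exact hasDerivAt_tsum_of_isPreconnected hu Metric.isOpen_ball
      (convex_ball (0:ℂ) R).isPreconnected hgderiv hgbound hzRball hg0 hzRball
  have hfd : deriv f z = ∑' j, g' j z := by
    have hev : f =ᶠ[nhds z] (fun w => ∑' j, g j w) := by
      apply Filter.eventuallyEq_of_mem (Metric.isOpen_ball.mem_nhds hzball)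
      intro w hw
      exact ((hf w hw).tsum_eq).symm
    rw [hev.deriv_eq, hds.deriv]
  -- now estimate
  set a : ℕ → ℂ := fun j => g' j z with hadef
  have ha_sum : Summable a :=
    Summable.of_norm_bounded hu (fun j => hbound j z hzR.le)
  have hsplit : ∑' j, a j = a (k-1) + ∑' j, (if j = k-1 then (0:ℂ) else a j) :=
    Summable.tsum_eq_add_tsum_ite ha_sum (k-1)
  set h : ℕ → ℝ := fun j => ‖if j = k-1 then (0:ℂ) else a j‖ with hhdef
  have hh_le_u : ∀ j, h j ≤ u j := by
    intro j
    by_cases hj : j = k-1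
    · have h0 : h j = 0 := by simp [hhdef, hj]
      rw [h0]
      exact le_trans (norm_nonneg (g' j z)) (hbound j z hzR.le)
    · have h0 : h j = ‖a j‖ := by simp [hhdef, hj]
      rw [h0]
      exact hbound j z hzR.le
  have hh_sum : Summable h :=
    Summable.of_nonneg_of_le (fun j => norm_nonneg _) hh_le_u hu
  -- finite part bound
  have hA : ∀ j, ‖a j‖ = (100:ℝ)^(j+1)/((j:ℝ)+1) * ‖z‖ ^ (100^(j+1)-1) := by
    intro j; rw [hadef]; exact habs j z
  have hlow : ∑ j ∈ Finset.range k, h j ≤ (100:ℝ)^k/(24*k) := by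
    have hk1 : k - 1 + 1 = k := Nat.sub_add_cancel hk
    have hrw : ∑ j ∈ Finset.range k, h j
        = ∑ j ∈ Finset.range (k-1), h j + h (k-1) := by
      have := Finset.sum_range_succ h (k-1)
      rwa [hk1] at this
    have hzero : h (k-1) = 0 := by simp [hhdef]
    have hstep : ∀ j ∈ Finset.range (k-1), h j ≤ (100:ℝ)^(j+1)/((j:ℝ)+1) := by
      intro j hj
      have hjk : j ≠ k-1 := by
        have := Finset.mem_range.1 hj; omega
      rw [hhdef]
      simp only [if_neg hjk]
      rw [hA]
      have hz1' : ‖z‖ ^ (100^(j+1)-1) ≤ 1 :=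
        pow_le_one₀ hz0 hz_lt1.le
      have : (0:ℝ) ≤ (100:ℝ)^(j+1)/((j:ℝ)+1) := by positivity
      nlinarith
    have hfin : ∑ j ∈ Finset.range (k-1), h j
        ≤ ∑ j ∈ Finset.range (k-1), (100:ℝ)^(j+1)/((j:ℝ)+1) :=
      Finset.sum_le_sum hstep
    have haux := lacunary_low_sum_aux (k-1)
    have hcast : ((k-1:ℕ):ℝ) + 1 = (k:ℝ) := by
      rw [Nat.cast_sub hk]; push_cast; ring
    rw [hcast, hk1] at haux
    rw [hrw, hzero, add_zero]
    exact le_trans hfin haux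
  -- tail bound
  have hexp99 : (2000:ℝ) ≤ Real.exp 9.9 := by
    have h9 : Real.exp ((9:ℕ) * 1) = (Real.exp 1)^9 := Real.exp_nat_mul 1 9
    have h27 : (2.7182818283:ℝ)^9 ≤ (Real.exp 1)^9 :=
      pow_le_pow_left₀ (by norm_num) Real.exp_one_gt_d9.le 9
    have hnum : (2000:ℝ) ≤ (2.7182818283:ℝ)^9 := by norm_num
    have hmono : Real.exp ((9:ℕ) * 1) ≤ Real.exp 9.9 := by
      apply Real.exp_le_exp.2; norm_num
    calc (2000:ℝ) ≤ (2.7182818283:ℝ)^9 := hnum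
      _ ≤ (Real.exp 1)^9 := h27
      _ = Real.exp ((9:ℕ)*1) := h9.symm
      _ ≤ Real.exp 9.9 := hmono
  have hexpneg : Real.exp (-(9.9:ℝ)) ≤ 1/2000 := by
    rw [Real.exp_neg]
    rw [inv_le_comm₀ (Real.exp_pos _) (by norm_num)]
    calc (1/2000 : ℝ)⁻¹ = 2000 := by norm_num
      _ ≤ Real.exp 9.9 := hexp99
  set B : ℝ := (100:ℝ)^(k+1) * Real.exp (-(9.9:ℝ)) / k with hBdef
  have hB0 : 0 ≤ B := by positivity
  have htail : ∀ m : ℕ, h (m + k) ≤ B * (1/2)^m := by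
    intro m
    have hmk : m + k ≠ k - 1 := by omega
    rw [hhdef]
    simp only [if_neg hmk]
    rw [hA]
    set N : ℕ := 100^(m+k+1) - 1 with hNdef
    have hN1 : 1 ≤ (100:ℕ)^(m+k+1) := Nat.one_le_pow _ _ (by norm_num)
    have hNcast : (N:ℝ) = (100:ℝ)^(m+k+1) - 1 := by
      rw [hNdef, Nat.cast_sub hN1]; push_cast; ring
    -- |z|^N ≤ exp(-δ N)
    have hz_exp : ‖z‖ ≤ Real.exp (-δ) := by
      have := Real.add_one_le_exp (-δ)
      calc ‖z‖ ≤ 1 - δ := hz2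
        _ ≤ Real.exp (-δ) := by linarith
    have hpowN : ‖z‖ ^ N ≤ Real.exp (-(δ * N)) := by
      calc ‖z‖ ^ N ≤ (Real.exp (-δ))^N := pow_le_pow_left₀ hz0 hz_exp N
        _ = Real.exp ((N:ℝ) * (-δ)) := (Real.exp_nat_mul _ N).symm
        _ = Real.exp (-(δ * N)) := by ring_nf
    -- δN = 10·100^m − δ
    have hδN : δ * N = 10 * (100:ℝ)^m - δ := by
      rw [hNcast, hδdef]
      have : (100:ℝ)^(m+k+1) = (100:ℝ)^(m+1) * (100:ℝ)^k := by
        rw [← pow_add]; ring_nf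
      rw [this]
      field_simp
      ring
    -- 200^m ≤ exp(δN − 9.9)
    have hber : (1:ℝ) + 99 * m ≤ (100:ℝ)^m := by
      have := one_add_mul_le_pow (a := (99:ℝ)) (by norm_num) m
      calc (1:ℝ) + 99 * m = 1 + (m:ℝ) * 99 := by ring
        _ ≤ (1 + 99)^m := this
        _ = (100:ℝ)^m := by norm_num
    have hkey : (200:ℝ)^m ≤ Real.exp (δ * N - 9.9) := by
      have h200 : (200:ℝ) ≤ Real.exp 990 := by
        have := Real.add_one_le_exp (990:ℝ); linarith
      calc (200:ℝ)^m ≤ (Real.exp 990)^m := pow_le_pow_left₀ (by norm_num) h200 m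
        _ = Real.exp ((m:ℝ) * 990) := (Real.exp_nat_mul _ m).symm
        _ ≤ Real.exp (δ * N - 9.9) := by
            apply Real.exp_le_exp.2
            rw [hδN]
            nlinarith
    -- 100^m · exp(−δN) ≤ exp(−9.9) · (1/2)^m
    have hstep3 : (100:ℝ)^m * Real.exp (-(δ * N)) ≤ Real.exp (-(9.9:ℝ)) * (1/2)^m := by
      have h1 : (200:ℝ)^m * Real.exp (-(δ*N)) ≤ Real.exp (-(9.9:ℝ)) := by
        have := mul_le_mul_of_nonneg_right hkey (Real.exp_pos (-(δ*N))).le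
        calc (200:ℝ)^m * Real.exp (-(δ*N))
            ≤ Real.exp (δ*N - 9.9) * Real.exp (-(δ*N)) := this
          _ = Real.exp (-(9.9:ℝ)) := by rw [← Real.exp_add]; ring_nf
      have h2 : (100:ℝ)^m = (200:ℝ)^m * (1/2)^m := by
        rw [← mul_pow]; norm_num
      calc (100:ℝ)^m * Real.exp (-(δ*N))
          = ((200:ℝ)^m * Real.exp (-(δ*N))) * (1/2)^m := by rw [h2]; ring
        _ ≤ Real.exp (-(9.9:ℝ)) * (1/2)^m := by
            exact mul_le_mul_of_nonneg_right h1 (by positivity)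
    -- assemble
    have hfrac : (100:ℝ)^(m+k+1)/((m:ℝ)+k+1) ≤ (100:ℝ)^(m+k+1)/k := by
      have hkm : (k:ℝ) ≤ (m:ℝ)+k+1 := by linarith [Nat.cast_nonneg (α := ℝ) m]
      exact div_le_div_of_nonneg_left (by positivity) hk0 hkm
    have hsplit100 : (100:ℝ)^(m+k+1) = (100:ℝ)^(k+1) * (100:ℝ)^m := by
      rw [← pow_add]; ring_nf
    push_cast
    calc (100:ℝ)^(m+k+1)/((m:ℝ)+k+1) * ‖z‖ ^ N
        ≤ (100:ℝ)^(m+k+1)/k * Real.exp (-(δ * N)) := by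
          apply mul_le_mul hfrac hpowN (by positivity) (by positivity)
      _ = ((100:ℝ)^(k+1)/k) * ((100:ℝ)^m * Real.exp (-(δ * N))) := by
          rw [hsplit100]; ring
      _ ≤ ((100:ℝ)^(k+1)/k) * (Real.exp (-(9.9:ℝ)) * (1/2)^m) := by
          exact mul_le_mul_of_nonneg_left hstep3 (by positivity)
      _ = B * (1/2)^m := by rw [hBdef]; ring
  have hhigh_sum : Summable (fun m => h (m + k)) := (summable_nat_add_iff k).2 hh_sum
  have hgeom : Summable (fun m : ℕ => B * (1/2:ℝ)^m) :=
    (summable_geometric_of_lt_one (by norm_num) (by norm_num)).mul_left B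
  have hhigh : ∑' m, h (m + k) ≤ 2 * B := by
    calc ∑' m, h (m + k) ≤ ∑' m : ℕ, B * (1/2:ℝ)^m := Summable.tsum_le_tsum htail hhigh_sum hgeom
      _ = B * ∑' m : ℕ, (1/2:ℝ)^m := tsum_mul_left
      _ = B * 2 := by rw [tsum_geometric_of_lt_one (by norm_num) (by norm_num)]; norm_num
      _ = 2 * B := by ring
  have hB_bound : 2 * B ≤ (100:ℝ)^k/(10*k) := by
    rw [hBdef]
    have hQ : (0:ℝ) < (100:ℝ)^k/(k:ℝ) := by positivity
    have heq1 : 2 * ((100:ℝ)^(k+1) * Real.exp (-(9.9:ℝ)) / k)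
        = (200 * Real.exp (-(9.9:ℝ))) * ((100:ℝ)^k/k) := by ring
    have heq2 : (100:ℝ)^k/(10*(k:ℝ)) = (1/10) * ((100:ℝ)^k/k) := by ring
    rw [heq1, heq2]
    apply mul_le_mul_of_nonneg_right _ hQ.le
    linarith [hexpneg]
  -- total error
  have herr : ∑' j, h j ≤ (100:ℝ)^k/(24*k) + (100:ℝ)^k/(10*k) := by
    have := (Summable.sum_add_tsum_nat_add k hh_sum).symm
    rw [this]
    have := le_trans hhigh hB_bound
    linarith
  -- main term
  have hmain : (1/3:ℝ) * ((100:ℝ)^k/k) ≤ ‖a (k-1)‖ := by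
    have hk1 : k - 1 + 1 = k := Nat.sub_add_cancel hk
    rw [hA, hk1]
    have hcast : ((k-1:ℕ):ℝ) + 1 = (k:ℝ) := by
      rw [Nat.cast_sub hk]; push_cast; ring
    rw [hcast]
    set n : ℕ := 100^k with hndef
    have hn100 : 100 ≤ n := by
      calc 100 = 100^1 := (pow_one 100).symm
        _ ≤ 100^k := Nat.pow_le_pow_right (by norm_num) hk
    have hncast : ((n:ℕ):ℝ) = (100:ℝ)^k := by rw [hndef]; push_cast; ring
    have hn0 : (0:ℝ) < n := by rw [hncast]; positivity
    have hx0 : (0:ℝ) ≤ 1 - (n:ℝ)⁻¹ := by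
      have : (n:ℝ)⁻¹ ≤ 1 := by
        rw [inv_le_one_iff₀]; right
        have : (100:ℝ) ≤ (n:ℝ) := by exact_mod_cast hn100
        linarith
      linarith
    have hzx : 1 - (n:ℝ)⁻¹ ≤ ‖z‖ := by rw [hncast]; exact hz1
    have hx1 : 1 - (n:ℝ)⁻¹ ≤ 1 := by
      have : (0:ℝ) < (n:ℝ)⁻¹ := by positivity
      linarith
    have hb1 : (1 - (n:ℝ)⁻¹)^n ≤ (1 - (n:ℝ)⁻¹)^(n-1) :=
      pow_le_pow_of_le_one hx0 hx1 (Nat.sub_le n 1)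
    have hb2 : (1 - (n:ℝ)⁻¹)^(n-1) ≤ ‖z‖ ^ (n-1) :=
      pow_le_pow_left₀ hx0 hzx (n-1)
    have hb3 := lacunary_base_pow_bound n hn100
    have hzpow : (1/3:ℝ) ≤ ‖z‖ ^ (n - 1) := by linarith
    have h0 : (0:ℝ) ≤ (100:ℝ)^k/(k:ℝ) := by positivity
    calc (1/3:ℝ) * ((100:ℝ)^k/k) ≤ ‖z‖ ^ (n-1) * ((100:ℝ)^k/k) := by
          exact mul_le_mul_of_nonneg_right hzpow h0
      _ = (100:ℝ)^k/(k:ℝ) * ‖z‖ ^ (n-1) := by ring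
  -- conclude
  rw [hfd]
  have hnorm_sum : ‖∑' j, a j‖
      ≥ ‖a (k-1)‖ - ∑' j, h j := by
    rw [hsplit]
    have h1 : ‖a (k-1) + ∑' j, (if j = k-1 then (0:ℂ) else a j)‖
        ≥ ‖a (k-1)‖ - ‖∑' j, (if j = k-1 then (0:ℂ) else a j)‖ := by
      rw [ge_iff_le, sub_le_iff_le_add]
      calc ‖a (k-1)‖ = ‖(a (k-1) + ∑' j, (if j = k-1 then (0:ℂ) else a j))
            - ∑' j, (if j = k-1 then (0:ℂ) else a j)‖ := by rw [add_sub_cancel_right]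
        _ ≤ ‖a (k-1) + ∑' j, (if j = k-1 then (0:ℂ) else a j)‖
            + ‖∑' j, (if j = k-1 then (0:ℂ) else a j)‖ := norm_sub_le _ _
    have h2 : ‖∑' j, (if j = k-1 then (0:ℂ) else a j)‖ ≤ ∑' j, h j :=
      norm_tsum_le_tsum_norm hh_sum
    linarith
  have hfinal : (100:ℝ)^k/(8*k) ≤ ‖a (k-1)‖ - ∑' j, h j := by
    have h1 : ∑' j, h j ≤ (100:ℝ)^k/(24*k) + (100:ℝ)^k/(10*k) := herr
    have h2 := hmain
    have hPk : (0:ℝ) < (100:ℝ)^k/k := by positivity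
    have hQ : (0:ℝ) < (100:ℝ)^k / k := by positivity
    have h8 : (100:ℝ)^k/(8*k) = (100:ℝ)^k/k * (1/8) := by ring
    have h24 : (100:ℝ)^k/(24*k) = (100:ℝ)^k/k * (1/24) := by ring
    have h10 : (100:ℝ)^k/(10*k) = (100:ℝ)^k/k * (1/10) := by ring
    rw [h8]
    rw [h24, h10] at h1
    linarith
  linarith [hnorm_sum, hfinal]
end

section
/- Let ω : (0,1) → (0,∞), let (t_k)_{k≥0} be an increasing sequence in (0,1), let (a_m)_{m≥1} be positive reals, (n_m)_{m≥1} positive integers, and let (ν_m)_{m≥1} be a non-increasing sequence of positive reals with ν_m ≤ (k/m)·ν_k whenever m ≤ k. Assume: (A) a_m·r^{n_m} ≤ 1/ω(r) for all m ≥ 1 and all r ∈ [t_0, 1); (C) Σ_{m≥1, |m−k|≥2} ν_m·a_m·r^{n_m} ≤ (5/9)·ν_k·a_k·r^{n_k} for all k ≥ 1 and r ∈ [t_{k−1}, t_k]. Then for every integer k ≥ 2 and every r ∈ [t_{k−1}, t_k]: Σ_{m=1}^∞ ν_m·a_m·r^{n_m} ≤ 7·ν_{k−1}/ω(r). -/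
set_option maxHeartbeats 1000000


/-- Let `ω : (0,1) → (0,∞)`, `(t_k)_{k≥0}` increasing in `(0,1)`,
`(a_m)_{m≥1}` positive reals, `(n_m)_{m≥1}` positive integers, and `(ν_m)_{m≥1}`
non-increasing positive with `ν_m ≤ (k/m)·ν_k` for `m ≤ k`. Assume
(A) `a_m r^{n_m} ≤ 1/ω(r)` for all `m ≥ 1`, `r ∈ [t_0, 1)`;
(C) `Σ_{m≥1, |m-k|≥2} ν_m a_m r^{n_m} ≤ (5/9)·ν_k a_k r^{n_k}` for all `k ≥ 1`,
`r ∈ [t_{k-1}, t_k]`. Then for every `k ≥ 2` and `r ∈ [t_{k-1}, t_k]`: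
`Σ_{m=1}^∞ ν_m a_m r^{n_m} ≤ 7·ν_{k-1}/ω(r)`. -/
theorem full_sum_upper_bound
    (ω : ℝ → ℝ) (hωpos : ∀ r ∈ Set.Ioo (0:ℝ) 1, 0 < ω r)
    (t : ℕ → ℝ) (htmono : StrictMono t) (htmem : ∀ k, t k ∈ Set.Ioo (0:ℝ) 1)
    (a : ℕ → ℝ) (hapos : ∀ m : ℕ, 1 ≤ m → 0 < a m)
    (n : ℕ → ℕ) (hnpos : ∀ m : ℕ, 1 ≤ m → 0 < n m)
    (ν : ℕ → ℝ) (hνpos : ∀ m : ℕ, 1 ≤ m → 0 < ν m)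
    (hνdec : ∀ m : ℕ, 1 ≤ m → ν (m + 1) ≤ ν m)
    (hνratio : ∀ m k : ℕ, 1 ≤ m → m ≤ k → ν m ≤ (k : ℝ) / (m : ℝ) * ν k)
    (hA : ∀ m : ℕ, 1 ≤ m → ∀ r : ℝ, t 0 ≤ r → r < 1 → a m * r ^ (n m) ≤ 1 / ω r)
    (hC : ∀ k : ℕ, 1 ≤ k → ∀ r : ℝ, t (k - 1) ≤ r → r ≤ t k →
      ∑' m : {m : ℕ // 1 ≤ m ∧ 2 ≤ |(m : ℤ) - (k : ℤ)|},
        ν m.1 * a m.1 * r ^ (n m.1) ≤ 5 / 9 * (ν k * a k * r ^ (n k))) :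
    ∀ k : ℕ, 2 ≤ k → ∀ r : ℝ, t (k - 1) ≤ r → r ≤ t k →
      ∑' m : ℕ, ν (m + 1) * a (m + 1) * r ^ (n (m + 1)) ≤ 7 * ν (k - 1) / ω r := by
  intro k hk r hr1 hr2
  set f : ℕ → ℝ := fun m => ν m * a m * r ^ n m with hfdef
  have hkm1 : 1 ≤ k - 1 := by omega
  have hr0 : 0 < r := lt_of_lt_of_le (htmem (k - 1)).1 hr1
  have hr01 : r < 1 := lt_of_le_of_lt hr2 (htmem k).2
  have hωr : 0 < ω r := hωpos r ⟨hr0, hr01⟩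
  have ht0r : t 0 ≤ r := le_trans (htmono.monotone (Nat.zero_le _)) hr1
  -- ν antitone on m ≥ 1
  have hν_anti : ∀ i j : ℕ, 1 ≤ i → i ≤ j → ν j ≤ ν i := by
    intro i j hi hij
    induction j, hij using Nat.le_induction with
    | base => exact le_rfl
    | succ j hj ih => exact le_trans (hνdec j (le_trans hi hj)) ih
  -- bound for single terms with index ≥ k-1
  have hfle : ∀ m : ℕ, k - 1 ≤ m → f m ≤ ν (k - 1) / ω r := by
    intro m hm
    have h1m : 1 ≤ m := le_trans hkm1 hm
    have hAm := hA m h1m r ht0r hr01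
    calc f m = ν m * (a m * r ^ n m) := by simp [hfdef]; ring
      _ ≤ ν m * (1 / ω r) :=
        mul_le_mul_of_nonneg_left hAm (hνpos m h1m).le
      _ ≤ ν (k - 1) * (1 / ω r) := by
        apply mul_le_mul_of_nonneg_right (hν_anti _ _ hkm1 hm)
        positivity
      _ = ν (k - 1) / ω r := by ring
  have hf0 : ∀ m : ℕ, 1 ≤ m → 0 ≤ f m := fun m hm =>
    mul_nonneg (mul_nonneg (hνpos m hm).le (hapos m hm).le) (pow_nonneg hr0.le _)
  set u : Set ℕ := {m : ℕ | 1 ≤ m ∧ 2 ≤ |(m : ℤ) - (k : ℤ)|} with hudef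
  set v : Set ℕ := (↑({k - 1, k, k + 1} : Finset ℕ) : Set ℕ) with hvdef
  by_cases hsum : Summable (f ∘ ((↑) : u → ℕ))
  · -- summable case
    have hcompl_fin : (uᶜ : Set ℕ).Finite := by
      apply Set.Finite.subset (Finset.finite_toSet ({0, k - 1, k, k + 1} : Finset ℕ))
      intro m hm
      simp only [hudef, Set.mem_compl_iff, Set.mem_setOf_eq, not_and, not_le] at hm
      simp only [Finset.coe_insert, Set.mem_insert_iff, Finset.coe_singleton,
        Set.mem_singleton_iff]
      rcases Nat.eq_zero_or_pos m with h0 | h1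
      · tauto
      · have := hm h1
        rcases abs_cases ((m : ℤ) - (k : ℤ)) with ⟨he, _⟩ | ⟨he, _⟩ <;> omega
    have hsc : Summable (fun x : ↥uᶜ => f x) := hcompl_fin.summable f
    have hsf : Summable f := summable_subtype_and_compl.mp ⟨hsum, hsc⟩
    have hsv : Summable (f ∘ ((↑) : v → ℕ)) := hsf.subtype _
    have hg : Summable (fun m : ℕ => f (m + 1)) := (summable_nat_add_iff 1).mpr hsf
    have h1 : ∑' m : ℕ, f (m + 1) = ∑' x : {m : ℕ | 1 ≤ m}, f x :=
      Equiv.tsum_eq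
        ⟨fun m => ⟨m + 1, Nat.succ_le_succ (Nat.zero_le m)⟩,
         fun m => m.1 - 1,
         fun m => by simp,
         fun m => by
          have : 1 ≤ m.1 := m.2
          ext
          simp only []
          omega⟩
        (fun x : {m : ℕ | 1 ≤ m} => f x)
    have huv : u ∪ v = {m : ℕ | 1 ≤ m} := by
      ext m
      simp only [hudef, hvdef, Set.mem_union, Set.mem_setOf_eq, Finset.coe_insert,
        Set.mem_insert_iff, Finset.coe_singleton, Set.mem_singleton_iff]
      constructor
      · rintro (⟨h, _⟩ | h | h | h) <;> omega
      · intro h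
        rcases abs_cases ((m : ℤ) - (k : ℤ)) with ⟨he, _⟩ | ⟨he, _⟩ <;> omega
    have hdisj : Disjoint u v := by
      rw [Set.disjoint_left]
      intro m hmu hmv
      simp only [hudef, Set.mem_setOf_eq] at hmu
      simp only [hvdef, Finset.coe_insert, Set.mem_insert_iff, Finset.coe_singleton,
        Set.mem_singleton_iff] at hmv
      rcases abs_cases ((m : ℤ) - (k : ℤ)) with ⟨he, _⟩ | ⟨he, _⟩ <;> omega
    have h2 : ∑' x : {m : ℕ | 1 ≤ m}, f x = (∑' x : u, f x) + ∑' x : v, f x := by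
      rw [← huv]
      exact Summable.tsum_union_disjoint hdisj hsum hsv
    have h3 : ∑' x : v, f x = f (k - 1) + f k + f (k + 1) := by
      rw [hvdef, Finset.tsum_subtype' ({k - 1, k, k + 1} : Finset ℕ) f]
      rw [Finset.sum_insert (by simp only [Finset.mem_insert, Finset.mem_singleton]; omega),
        Finset.sum_insert (by simp only [Finset.mem_singleton]; omega),
        Finset.sum_singleton]
      ring
    have hCk := hC k (by omega) r hr1 hr2
    have h4 : (∑' x : u, f x) ≤ 5 / 9 * (ν k * a k * r ^ n k) := hCk
    have hfk : f k ≤ ν (k - 1) / ω r := hfle k (by omega)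
    have hfk1 : f (k - 1) ≤ ν (k - 1) / ω r := hfle (k - 1) le_rfl
    have hfk2 : f (k + 1) ≤ ν (k - 1) / ω r := hfle (k + 1) (by omega)
    have hfknn : 0 ≤ f k := hf0 k (by omega)
    have h5 : (5 : ℝ) / 9 * (ν k * a k * r ^ n k) ≤ 5 / 9 * (ν (k - 1) / ω r) := by
      have : ν k * a k * r ^ n k = f k := rfl
      rw [this]
      linarith
    have hnn : 0 ≤ ν (k - 1) / ω r := le_trans hfknn hfk
    calc ∑' m : ℕ, ν (m + 1) * a (m + 1) * r ^ n (m + 1)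
        = ∑' m : ℕ, f (m + 1) := rfl
      _ = (∑' x : u, f x) + ∑' x : v, f x := by rw [h1, h2]
      _ ≤ 5 / 9 * (ν (k - 1) / ω r) + (f (k - 1) + f k + f (k + 1)) := by
          rw [h3]; linarith
      _ ≤ 5 / 9 * (ν (k - 1) / ω r) + 3 * (ν (k - 1) / ω r) := by linarith
      _ ≤ 7 * ν (k - 1) / ω r := by
          have h7 : 7 * ν (k - 1) / ω r = 7 * (ν (k - 1) / ω r) := by ring
          rw [h7]; linarith
  · -- non-summable case: the full sum is not summable either, tsum = 0
    have hnsf : ¬ Summable f := fun hsf => hsum (hsf.subtype _)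
    have hng : ¬ Summable (fun m : ℕ => f (m + 1)) := fun hg =>
      hnsf ((summable_nat_add_iff 1).mp hg)
    have h0 : ∑' m : ℕ, ν (m + 1) * a (m + 1) * r ^ n (m + 1) = 0 :=
      tsum_eq_zero_of_not_summable hng
    rw [h0]
    have hν1 := hνpos (k - 1) hkm1
    apply div_nonneg (by linarith) hωr.le
end
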